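/- arXiv:2401.12579 — 13 statements merged into one kernel-verified Lean document; each statement's English description precedes it below -/
import Mathlib

section
/- Let S := {(x,y) ∈ ℝ² : (4x² − y²)(4y² − x²) ≥ 0 and y ≥ 0}. Then S is path-connected, but there is no map α : ℝ → ℝ² that is real-analytic on the interval [0,1] with α(0) = (−1,1), α(1) = (1,1) and α([0,1]) ⊆ S; in particular, S is not connected by analytic paths. -/
/-- A set `S` is *connected by analytic paths* if for every `p, q ∈ S` there is a map
`α : ℝ → E` that is real-analytic on `[0,1]` with `α 0 = p`, `α 1 = q` and
`α '' [0,1] ⊆ S`. -/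
def ConnectedByAnalyticPaths {E : Type*} [NormedAddCommGroup E] [NormedSpace ℝ E]
    (S : Set E) : Prop :=
  ∀ p ∈ S, ∀ q ∈ S, ∃ α : ℝ → E,
    AnalyticOnNhd ℝ α (Set.Icc (0:ℝ) 1) ∧ α 0 = p ∧ α 1 = q ∧ α '' Set.Icc (0:ℝ) 1 ⊆ S

/-!
The set is the union of the two closed wedges `|x| / 2 ≤ y ≤ 2 |x|`, which touch only at the
origin; it is star-shaped about the origin. An analytic path `(x, y)` from `(-1, 1)` to `(1, 1)`
must have a zero of `x` at which `x` changes sign. There `|x|` and `y` are comparable, so they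
vanish to the same order, and this order is even because `y ≥ 0`. A zero of even order is not a
sign change.
-/

open Filter Set Topology

section AnalyticOrderSign

variable {f g u v : ℝ → ℝ} {t C D : ℝ} {k m : ℕ}

lemma le_of_eventually_abs_pow_mul_le (hu : ContinuousAt u t) (hv : ContinuousAt v t)
    (hv0 : v t ≠ 0) (h : ∀ᶠ s in 𝓝 t, |(s - t) ^ m * v s| ≤ C * |(s - t) ^ k * u s|) :
    k ≤ m := by
  by_contra! hmk
  have hlim : Tendsto (fun s ↦ C * (|s - t| ^ (k - m) * |u s|)) (𝓝 t) (𝓝 0) := by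
    have : ContinuousAt (fun s ↦ C * (|s - t| ^ (k - m) * |u s|)) t := by fun_prop
    simpa [zero_pow (Nat.sub_ne_zero_of_lt hmk)] using this.tendsto
  have hbound : ∀ᶠ s in 𝓝[≠] t, |v s| ≤ C * (|s - t| ^ (k - m) * |u s|) := by
    filter_upwards [nhdsWithin_le_nhds h, self_mem_nhdsWithin] with s hs hst
    have hpos : 0 < |s - t| ^ m := pow_pos (abs_pos.2 (sub_ne_zero.2 hst)) m
    rw [abs_mul, abs_mul, abs_pow, abs_pow, ← Nat.sub_add_cancel hmk.le, pow_add] at hs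
    exact le_of_mul_le_mul_left (hs.trans_eq (by ring)) hpos
  have : |v t| ≤ 0 :=
    le_of_tendsto_of_tendsto (hv.abs.tendsto.mono_left nhdsWithin_le_nhds)
      (hlim.mono_left nhdsWithin_le_nhds) hbound
  exact hv0 (abs_nonpos_iff.1 this)

lemma analyticOrderAt_le_of_eventually_abs_le (hf : AnalyticAt ℝ f t) (hg : AnalyticAt ℝ g t)
    (h : ∀ᶠ s in 𝓝 t, |g s| ≤ C * |f s|) : analyticOrderAt f t ≤ analyticOrderAt g t := by
  by_cases hg' : analyticOrderAt g t = ⊤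
  · simp [hg']
  have hf' : analyticOrderAt f t ≠ ⊤ := by
    intro hf0
    apply hg'
    rw [analyticOrderAt_eq_top] at hf0 ⊢
    filter_upwards [hf0, h] with s hfs hs
    simpa [hfs] using hs
  obtain ⟨u, hu, -, hfu⟩ := hf.analyticOrderAt_ne_top.1 hf'
  obtain ⟨v, hv, hv0, hgv⟩ := hg.analyticOrderAt_ne_top.1 hg'
  rw [← Nat.cast_analyticOrderNatAt hf', ← Nat.cast_analyticOrderNatAt hg', Nat.cast_le]
  refine le_of_eventually_abs_pow_mul_le (C := C) hu.continuousAt hv.continuousAt hv0 ?_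
  filter_upwards [h, hfu, hgv] with s hs hfs hgs
  simpa [hfs, hgs] using hs

lemma AnalyticAt.even_analyticOrderNatAt_of_eventually_nonneg (hf : AnalyticAt ℝ f t)
    (h : ∀ᶠ s in 𝓝 t, 0 ≤ f s) : Even (analyticOrderNatAt f t) := by
  by_cases hf' : analyticOrderAt f t = ⊤
  · simp [analyticOrderNatAt, hf']
  obtain ⟨u, hu, hu0, hfu⟩ := hf.analyticOrderAt_ne_top.1 hf'
  by_contra hodd
  rw [Nat.not_even_iff_odd] at hodd
  set n := analyticOrderNatAt f t
  have hfu' : ∀ᶠ s in 𝓝 t, 0 ≤ (s - t) ^ n * u s := by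
    filter_upwards [h, hfu] with s hs hfs
    rwa [hfs, smul_eq_mul] at hs
  -- `f` is negative on the side of `t` where the odd power `(s - t) ^ n` has the sign of `-u t`
  rcases hu0.lt_or_gt with hneg | hpos
  · have hus : ∀ᶠ s in 𝓝 t, u s < 0 := hu.continuousAt.eventually_lt continuousAt_const hneg
    obtain ⟨s, ⟨hs, hus⟩, hts⟩ :=
      ((hfu'.and hus).filter_mono nhdsWithin_le_nhds).and (self_mem_nhdsWithin : Ioi t ∈ 𝓝[>] t)
        |>.exists
    have := pow_pos (sub_pos.2 hts) n
    nlinarith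
  · have hus : ∀ᶠ s in 𝓝 t, 0 < u s := continuousAt_const.eventually_lt hu.continuousAt hpos
    obtain ⟨s, ⟨hs, hus⟩, hts⟩ :=
      ((hfu'.and hus).filter_mono nhdsWithin_le_nhds).and (self_mem_nhdsWithin : Iio t ∈ 𝓝[<] t)
        |>.exists
    have := hodd.pow_neg (sub_neg.2 hts)
    nlinarith

lemma AnalyticAt.eventually_nonneg_or_nonpos_of_even (hf : AnalyticAt ℝ f t)
    (heven : Even (analyticOrderNatAt f t)) :
    (∀ᶠ s in 𝓝 t, 0 ≤ f s) ∨ ∀ᶠ s in 𝓝 t, f s ≤ 0 := by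
  by_cases hf' : analyticOrderAt f t = ⊤
  · exact .inl ((analyticOrderAt_eq_top.1 hf').mono fun s hs ↦ hs.ge)
  obtain ⟨u, hu, hu0, hfu⟩ := hf.analyticOrderAt_ne_top.1 hf'
  have hpow : ∀ s, 0 ≤ (s - t) ^ analyticOrderNatAt f t := fun s ↦ heven.pow_nonneg _
  rcases hu0.lt_or_gt with hneg | hpos
  · refine .inr ?_
    filter_upwards [hfu, hu.continuousAt.eventually_lt continuousAt_const hneg] with s hfs hus
    rw [hfs, smul_eq_mul]
    exact mul_nonpos_of_nonneg_of_nonpos (hpow s) hus.le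
  · refine .inl ?_
    filter_upwards [hfu, continuousAt_const.eventually_lt hu.continuousAt hpos] with s hfs hus
    rw [hfs, smul_eq_mul]
    exact mul_nonneg (hpow s) hus.le

lemma AnalyticAt.eventually_nonneg_or_nonpos_of_abs_le (hf : AnalyticAt ℝ f t)
    (hg : AnalyticAt ℝ g t) (hg0 : ∀ᶠ s in 𝓝 t, 0 ≤ g s) (hfg : ∀ᶠ s in 𝓝 t, |f s| ≤ C * g s)
    (hgf : ∀ᶠ s in 𝓝 t, g s ≤ D * |f s|) :
    (∀ᶠ s in 𝓝 t, 0 ≤ f s) ∨ ∀ᶠ s in 𝓝 t, f s ≤ 0 := by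
  have hord : analyticOrderAt f t = analyticOrderAt g t := by
    refine le_antisymm (analyticOrderAt_le_of_eventually_abs_le (C := D) hf hg ?_)
      (analyticOrderAt_le_of_eventually_abs_le (C := C) hg hf ?_)
    · filter_upwards [hg0, hgf] with s h0 h
      rwa [abs_of_nonneg h0]
    · filter_upwards [hg0, hfg] with s h0 h
      rwa [abs_of_nonneg h0]
  refine hf.eventually_nonneg_or_nonpos_of_even ?_
  rw [analyticOrderNatAt, hord]
  exact hg.even_analyticOrderNatAt_of_eventually_nonneg hg0

lemma AnalyticOnNhd.nonneg_or_nonpos_of_forall_eventually {U : Set ℝ} (hf : AnalyticOnNhd ℝ f U)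
    (hU : IsPreconnected U)
    (hloc : ∀ t ∈ U, f t = 0 → (∀ᶠ s in 𝓝 t, 0 ≤ f s) ∨ ∀ᶠ s in 𝓝 t, f s ≤ 0) :
    (∀ t ∈ U, 0 ≤ f t) ∨ ∀ t ∈ U, f t ≤ 0 := by
  have hcover : U ⊆ {t | ∀ᶠ s in 𝓝 t, 0 ≤ f s} ∪ {t | ∀ᶠ s in 𝓝 t, f s ≤ 0} := by
    intro t ht
    rcases lt_trichotomy (f t) 0 with hneg | hzero | hpos
    · exact .inr (((hf t ht).continuousAt.eventually_lt continuousAt_const hneg).mono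
        fun _ ↦ le_of_lt)
    · exact hloc t ht hzero
    · exact .inl ((continuousAt_const.eventually_lt (hf t ht).continuousAt hpos).mono
        fun _ ↦ le_of_lt)
  by_contra! hsign
  obtain ⟨⟨b, hb, hfb⟩, ⟨a, ha, hfa⟩⟩ := hsign
  obtain ⟨t, htU, hnonneg, hnonpos⟩ := hU _ _ isOpen_setOfPred_eventually_nhds
    isOpen_setOfPred_eventually_nhds hcover
    ⟨a, ha, (hcover ha).resolve_right fun h ↦ hfa.not_ge h.self_of_nhds⟩
    ⟨b, hb, (hcover hb).resolve_left fun h ↦ hfb.not_ge h.self_of_nhds⟩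
  have hzero : f =ᶠ[𝓝 t] 0 := (hnonneg.and hnonpos).mono fun s hs ↦ le_antisymm hs.2 hs.1
  exact hfb.ne (hf.eqOn_zero_of_preconnected_of_eventuallyEq_zero hU htU hzero hb)

end AnalyticOrderSign

def twoWedges : Set (ℝ × ℝ) :=
  {p : ℝ × ℝ | (4*p.1^2 - p.2^2) * (4*p.2^2 - p.1^2) ≥ 0 ∧ p.2 ≥ 0}

lemma mem_twoWedges_iff {p : ℝ × ℝ} : p ∈ twoWedges ↔ |p.1| ≤ 2 * p.2 ∧ p.2 ≤ 2 * |p.1| := by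
  obtain ⟨x, y⟩ := p
  simp only [twoWedges, mem_ofPred_eq]
  constructor
  · rintro ⟨h, hy⟩
    have hx : x ^ 2 ≤ (2 * y) ^ 2 := by nlinarith
    have hy' : y ^ 2 ≤ (2 * |x|) ^ 2 := by nlinarith [sq_abs x]
    exact ⟨(sq_le_sq₀ (abs_nonneg x) (by positivity)).1 (by rwa [sq_abs]),
      (sq_le_sq₀ hy (by positivity)).1 hy'⟩
  · rintro ⟨hx, hy⟩
    have hy0 : 0 ≤ y := by linarith [abs_nonneg x]
    have h1 : 0 ≤ 4 * x ^ 2 - y ^ 2 := by nlinarith [sq_abs x]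
    have h2 : 0 ≤ 4 * y ^ 2 - x ^ 2 := by nlinarith [sq_abs x, abs_nonneg x]
    exact ⟨mul_nonneg h1 h2, hy0⟩

lemma isPathConnected_twoWedges : IsPathConnected twoWedges := by
  refine StarConvex.isPathConnected (starConvex_zero_iff.2 fun p hp a ha _ ↦ ?_) ?_
  · rw [mem_twoWedges_iff] at hp ⊢
    simp only [Prod.smul_fst, Prod.smul_snd, smul_eq_mul, abs_mul, abs_of_nonneg ha]
    constructor <;> nlinarith
  · simp [twoWedges]

lemma not_exists_analyticOnNhd_path_twoWedges :
    ¬ ∃ α : ℝ → ℝ × ℝ, AnalyticOnNhd ℝ α (Icc 0 1) ∧ α 0 = (-1, 1) ∧ α 1 = (1, 1) ∧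
      α '' Icc 0 1 ⊆ twoWedges := by
  rintro ⟨α, hα, h0, h1, hS⟩
  have hx : AnalyticOnNhd ℝ (fun t ↦ (α t).1) (Icc 0 1) :=
    fun t ht ↦ analyticAt_fst.comp (hα t ht)
  have hy : AnalyticOnNhd ℝ (fun t ↦ (α t).2) (Icc 0 1) :=
    fun t ht ↦ analyticAt_snd.comp (hα t ht)
  have hmem : ∀ t ∈ Icc (0 : ℝ) 1, |(α t).1| ≤ 2 * (α t).2 ∧ (α t).2 ≤ 2 * |(α t).1| :=
    fun t ht ↦ mem_twoWedges_iff.1 (hS (mem_image_of_mem α ht))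
  have hloc : ∀ t ∈ Icc (0 : ℝ) 1, (α t).1 = 0 →
      (∀ᶠ s in 𝓝 t, 0 ≤ (α s).1) ∨ ∀ᶠ s in 𝓝 t, (α s).1 ≤ 0 := by
    intro t ht hxt
    have ht0 : 0 < t := ht.1.lt_of_ne (by rintro rfl; simp [h0] at hxt)
    have ht1 : t < 1 := ht.2.lt_of_ne (by rintro rfl; simp [h1] at hxt)
    have hnear : ∀ᶠ s in 𝓝 t, |(α s).1| ≤ 2 * (α s).2 ∧ (α s).2 ≤ 2 * |(α s).1| :=
      eventually_of_mem (Icc_mem_nhds ht0 ht1) hmem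
    exact (hx t ht).eventually_nonneg_or_nonpos_of_abs_le (hy t ht)
      (hnear.mono fun s hs ↦ by linarith [abs_nonneg (α s).1, hs.1])
      (hnear.mono fun _ hs ↦ hs.1) (hnear.mono fun _ hs ↦ hs.2)
  rcases hx.nonneg_or_nonpos_of_forall_eventually isPreconnected_Icc hloc with h | h
  · exact absurd (h 0 (left_mem_Icc.2 zero_le_one)) (by norm_num [h0])
  · exact absurd (h 1 (right_mem_Icc.2 zero_le_one)) (by norm_num [h1])

/-- The semialgebraic set `S := {(x,y) : (4x² − y²)(4y² − x²) ≥ 0, y ≥ 0}` is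
path-connected but there is no analytic path inside `S` joining `(−1,1)` to `(1,1)`;
in particular `S` is not connected by analytic paths. -/
theorem pathConnected_not_connectedByAnalyticPaths :
    IsPathConnected {p : ℝ × ℝ | (4*p.1^2 - p.2^2) * (4*p.2^2 - p.1^2) ≥ 0 ∧ p.2 ≥ 0} ∧
    (¬ ∃ α : ℝ → ℝ × ℝ,
        AnalyticOnNhd ℝ α (Set.Icc (0:ℝ) 1) ∧ α 0 = (-1, 1) ∧ α 1 = (1, 1) ∧
        α '' Set.Icc (0:ℝ) 1 ⊆
          {p : ℝ × ℝ | (4*p.1^2 - p.2^2) * (4*p.2^2 - p.1^2) ≥ 0 ∧ p.2 ≥ 0}) ∧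
    ¬ ConnectedByAnalyticPaths
        {p : ℝ × ℝ | (4*p.1^2 - p.2^2) * (4*p.2^2 - p.1^2) ≥ 0 ∧ p.2 ≥ 0} :=
  ⟨isPathConnected_twoWedges, not_exists_analyticOnNhd_path_twoWedges,
    fun h ↦ not_exists_analyticOnNhd_path_twoWedges (h _ (by norm_num) _ (by norm_num))⟩
end

section
/- For every m ≥ 1 and n ≥ 0 there is no polynomial map f : ℝ^m → ℝ^{n+1} such that f(B̄_m) = S^n, where S^n := {x ∈ ℝ^{n+1} : ‖x‖ = 1} is the unit sphere of ℝ^{n+1}. -/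
/-- A map between Euclidean spaces is a *polynomial map* if each of its components
is given by the evaluation of a real multivariate polynomial. -/
def IsPolynomialMap {σ τ : Type} (f : EuclideanSpace ℝ σ → EuclideanSpace ℝ τ) : Prop :=
  ∃ p : τ → MvPolynomial σ ℝ, ∀ x i, f x i = MvPolynomial.eval (fun j => x j) (p i)

/-- A real polynomial bounded in absolute value by 1 is constant. -/
lemma eval_eq_eval_zero_of_bounded (q : Polynomial ℝ) (h : ∀ t : ℝ, |q.eval t| ≤ 1) (t : ℝ) :
    q.eval t = q.eval 0 := by
  have hdeg : ¬ 0 < q.degree := by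
    intro hd
    have := (q.abs_tendsto_atTop hd).eventually_ge_atTop 2
    rcases this.exists with ⟨s, hs⟩
    linarith [h s]
  have : q = Polynomial.C (q.coeff 0) :=
    Polynomial.eq_C_of_degree_le_zero (not_lt.mp hdeg)
  rw [this]; simp

/-- There is no polynomial map from a closed unit ball onto the unit sphere `𝕊ⁿ`. -/
theorem no_polynomialMap_ball_onto_sphere (m n : ℕ) (hm : 1 ≤ m) :
    ¬ ∃ f : EuclideanSpace ℝ (Fin m) → EuclideanSpace ℝ (Fin (n+1)),
        IsPolynomialMap f ∧
        f '' Metric.closedBall 0 1 = Metric.sphere (0 : EuclideanSpace ℝ (Fin (n+1))) 1 := by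
  rintro ⟨f, ⟨p, hp⟩, himg⟩
  -- points of the ball are mapped to the sphere, hence their coordinates' squares sum to 1
  have hsphere_sum : ∀ y : EuclideanSpace ℝ (Fin (n+1)), ‖y‖ = 1 →
      ∑ i, (y i) ^ 2 = 1 := by
    intro y hy
    have h1 : ‖y‖ = Real.sqrt (∑ i, ‖y i‖ ^ 2) := EuclideanSpace.norm_eq y
    have h2 : ∑ i, ‖y i‖ ^ 2 = ∑ i, (y i) ^ 2 := by
      refine Finset.sum_congr rfl fun i _ => ?_
      rw [Real.norm_eq_abs, sq_abs]
    rw [hy, h2] at h1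
    have hnn : 0 ≤ ∑ i, (y i) ^ 2 := Finset.sum_nonneg fun i _ => sq_nonneg _
    nlinarith [Real.sq_sqrt hnn]
  have hball : ∀ x ∈ Metric.closedBall (0 : EuclideanSpace ℝ (Fin m)) 1,
      ∑ i, (f x i) ^ 2 = 1 := by
    intro x hx
    have : f x ∈ Metric.sphere (0 : EuclideanSpace ℝ (Fin (n+1))) 1 := by
      rw [← himg]; exact Set.mem_image_of_mem f hx
    exact hsphere_sum _ (by simpa using this)
  -- key: f is constant
  have key : ∀ (x : EuclideanSpace ℝ (Fin m)) (i : Fin (n+1)), f x i = f 0 i := by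
    intro x i
    -- restrict along the line t ↦ t • x
    set q : Fin (n+1) → Polynomial ℝ :=
      fun i => MvPolynomial.aeval (fun j => Polynomial.C (x j) * Polynomial.X) (p i) with hq_def
    have hq : ∀ (i : Fin (n+1)) (t : ℝ), (q i).eval t = f (t • x) i := by
      intro i t
      rw [hp, hq_def]
      simp only [MvPolynomial.aeval_def]
      rw [MvPolynomial.polynomial_eval_eval₂]
      rw [show ((Polynomial.evalRingHom t).comp (algebraMap ℝ (Polynomial ℝ))) = RingHom.id ℝ by
        ext r; simp]
      rw [show (fun j => Polynomial.eval t (Polynomial.C (x j) * Polynomial.X)) =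
          (fun j => (t • x) j) by
        funext j
        simp only [Polynomial.eval_mul, Polynomial.eval_C, Polynomial.eval_X,
          PiLp.smul_apply, smul_eq_mul]
        ring]
      rfl
    -- the polynomial ∑ qᵢ² - 1 vanishes on an interval, hence identically
    set Q : Polynomial ℝ := (∑ i, (q i) ^ 2) - 1 with hQ_def
    have hQeval : ∀ t : ℝ, Q.eval t = (∑ i, (f (t • x) i) ^ 2) - 1 := by
      intro t
      simp only [hQ_def, Polynomial.eval_sub, Polynomial.eval_one, Polynomial.eval_finset_sum,
        Polynomial.eval_pow]
      congr 1
      exact Finset.sum_congr rfl fun i _ => by rw [hq]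
    have hQzero : Q = 0 := by
      apply Polynomial.eq_zero_of_infinite_isRoot
      have hsub : Set.Icc (0 : ℝ) (1 / (‖x‖ + 1)) ⊆ {t | Q.IsRoot t} := by
        intro t ht
        have hx1 : (0:ℝ) < ‖x‖ + 1 := by positivity
        have htx : ‖t • x‖ ≤ 1 := by
          rw [norm_smul, Real.norm_eq_abs, abs_of_nonneg ht.1]
          calc t * ‖x‖ ≤ (1 / (‖x‖ + 1)) * ‖x‖ := by
                exact mul_le_mul_of_nonneg_right ht.2 (norm_nonneg x)
            _ ≤ 1 := by
                rw [div_mul_eq_mul_div, div_le_one hx1]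
                linarith [norm_nonneg x]
        have hmem : t • x ∈ Metric.closedBall (0 : EuclideanSpace ℝ (Fin m)) 1 := by
          rw [Metric.mem_closedBall, dist_zero_right]; exact htx
        show Q.IsRoot t
        rw [Polynomial.IsRoot, hQeval, hball _ hmem, sub_self]
      exact (Set.Icc_infinite (by positivity)).mono hsub
    -- hence each qᵢ is bounded, therefore constant
    have hsum1 : ∀ t : ℝ, ∑ j, ((q j).eval t) ^ 2 = 1 := by
      intro t
      have := congrArg (Polynomial.eval t) hQzero
      rw [hQeval] at this
      simp only [Polynomial.eval_zero] at this
      have h5 : ∑ j, ((q j).eval t) ^ 2 = ∑ j, (f (t • x) j) ^ 2 :=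
        Finset.sum_congr rfl fun j _ => by rw [hq]
      rw [h5]; linarith
    have hbdd : ∀ t : ℝ, |(q i).eval t| ≤ 1 := by
      intro t
      rw [← sq_le_one_iff_abs_le_one]
      calc ((q i).eval t) ^ 2 ≤ ∑ j, ((q j).eval t) ^ 2 :=
            Finset.single_le_sum (f := fun j => ((q j).eval t) ^ 2)
              (fun j _ => sq_nonneg _) (Finset.mem_univ i)
        _ = 1 := hsum1 t
    have hconst := eval_eq_eval_zero_of_bounded (q i) hbdd 1
    rw [hq, hq] at hconst
    simpa using hconst
  -- f is constant, but the sphere contains two distinct points: contradiction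
  set e : EuclideanSpace ℝ (Fin (n+1)) := EuclideanSpace.single 0 (1:ℝ) with he_def
  have he : e ∈ Metric.sphere (0 : EuclideanSpace ℝ (Fin (n+1))) 1 := by
    simp [he_def, EuclideanSpace.norm_single]
  have hne : -e ∈ Metric.sphere (0 : EuclideanSpace ℝ (Fin (n+1))) 1 := by
    simpa using he
  rw [← himg] at he hne
  obtain ⟨a, _, ha⟩ := he
  obtain ⟨b, _, hb⟩ := hne
  have h1 : e 0 = f 0 0 := by rw [← ha]; exact key a 0
  have h2 : (-e) 0 = f 0 0 := by rw [← hb]; exact key b 0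
  have he0 : e 0 = 1 := by simp [he_def, EuclideanSpace.single_apply]
  have hne0 : (-e) 0 = -1 := by
    have : (-e) 0 = -(e 0) := rfl
    rw [this, he0]
  rw [he0] at h1
  rw [hne0] at h2
  linarith
end

section
/- For every n ≥ 2 there exists a polynomial map f : ℝ^n → ℝ^n such that f(B̄_n) equals the solid cylinder C_n := {x ∈ ℝ^n : x₁² + ⋯ + x_{n−1}² ≤ 1 and |xₙ| ≤ 1}. -/
/-!
Split `x = v + s e` with `v ⟂ e` for the unit axis vector `e`, and map `v + s e` to
`(2 - 32/27 ‖v‖²) v + T₃(s) e`, with `T₃(s) = 4s³ - 3s` the Chebyshev polynomial. The radial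
profile `r ↦ (2 - 32/27 r²) r` maps `[0, 1]` into `[0, 1]` and `[0, 3/4]` onto it, and `T₃` maps
`[-1, 1]` into itself and `[-1/2, 1/2]` onto it. So the ball lands in the cylinder, and every
point of the cylinder has a preimage with `‖v‖ ≤ 3/4`, `|s| ≤ 1/2`, which lies in the ball since
`9/16 + 1/4 ≤ 1`.
-/

open Set Metric
open scoped RealInnerProductSpace
def chebT3 (t : ℝ) : ℝ := 4 * t ^ 3 - 3 * t

lemma abs_chebT3_le_one {t : ℝ} (ht : |t| ≤ 1) : |chebT3 t| ≤ 1 := by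
  rw [← sq_le_one_iff_abs_le_one] at ht ⊢
  unfold chebT3
  -- `1 - T₃(t)² = (1 - t²)(4t² - 1)²`
  nlinarith [mul_nonneg (sub_nonneg.2 ht) (sq_nonneg (4 * t ^ 2 - 1))]

lemma exists_abs_le_half_chebT3_eq {y : ℝ} (hy : |y| ≤ 1) :
    ∃ t, |t| ≤ 1 / 2 ∧ chebT3 t = y := by
  have hcont : ContinuousOn chebT3 (Icc (-1 / 2) (1 / 2)) := by
    unfold chebT3; fun_prop
  have hy' : y ∈ Icc (chebT3 (1 / 2)) (chebT3 (-1 / 2)) := by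
    norm_num [chebT3]; exact abs_le.1 hy
  obtain ⟨t, ht, rfl⟩ := intermediate_value_Icc' (by norm_num) hcont hy'
  exact ⟨t, abs_le.2 ⟨by linarith [ht.1], ht.2⟩, rfl⟩

section Radial

variable {E : Type*} [NormedAddCommGroup E] [NormedSpace ℝ E]

noncomputable def radialCubic (v : E) : E := (2 - 32 / 27 * ‖v‖ ^ 2) • v

lemma norm_radialCubic_le_one {v : E} (hv : ‖v‖ ≤ 1) : ‖radialCubic v‖ ≤ 1 := by
  have h0 := norm_nonneg v
  rw [radialCubic, norm_smul, Real.norm_of_nonneg (by nlinarith)]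
  -- `1 - (2 - 32/27 r²) r = (4r - 3)² (2r + 3) / 27`: the maximum `1` on `[0, ∞)` is at `r = 3/4`
  nlinarith [mul_nonneg (sq_nonneg (4 * ‖v‖ - 3)) (by linarith : 0 ≤ 2 * ‖v‖ + 3)]

lemma exists_radial_profile_eq {ρ : ℝ} (h0 : 0 ≤ ρ) (h1 : ρ ≤ 1) :
    ∃ r ∈ Icc (0 : ℝ) (3 / 4), (2 - 32 / 27 * r ^ 2) * r = ρ := by
  have hcont : ContinuousOn (fun r : ℝ => (2 - 32 / 27 * r ^ 2) * r) (Icc 0 (3 / 4)) := by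
    fun_prop
  exact intermediate_value_Icc (by norm_num) hcont (by norm_num; exact ⟨h0, h1⟩)

lemma exists_norm_smul_le_radialCubic_eq {w : E} (hw : ‖w‖ ≤ 1) :
    ∃ c : ℝ, ‖c • w‖ ≤ 3 / 4 ∧ radialCubic (c • w) = w := by
  rcases eq_or_ne w 0 with rfl | hw0
  · exact ⟨0, by norm_num, by simp [radialCubic]⟩
  obtain ⟨r, ⟨hr0, hr1⟩, hr⟩ := exists_radial_profile_eq (norm_nonneg w) hw
  have hpos : 0 < ‖w‖ := norm_pos_iff.2 hw0
  have hnorm : ‖(r / ‖w‖) • w‖ = r := by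
    rw [norm_smul, Real.norm_of_nonneg (by positivity), div_mul_cancel₀ _ hpos.ne']
  refine ⟨r / ‖w‖, hnorm.le.trans hr1, ?_⟩
  rw [radialCubic, hnorm, smul_smul, ← mul_div_assoc, hr, div_self hpos.ne', one_smul]

end Radial

section Cylinder

variable {E : Type*} [NormedAddCommGroup E] [InnerProductSpace ℝ E] {e : E}

def solidCylinder (e : E) : Set E := {y | ‖y - ⟪y, e⟫ • e‖ ≤ 1 ∧ |⟪y, e⟫| ≤ 1}

noncomputable def cylinderMap (e x : E) : E :=
  radialCubic (x - ⟪x, e⟫ • e) + chebT3 ⟪x, e⟫ • e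

lemma exists_add_smul_eq (he : ‖e‖ = 1) (x : E) :
    ∃ (v : E) (s : ℝ), ⟪v, e⟫ = 0 ∧ v + s • e = x :=
  ⟨x - ⟪x, e⟫ • e, ⟪x, e⟫, by simp [inner_sub_left, real_inner_smul_left, he], sub_add_cancel _ _⟩

lemma inner_add_smul_self (he : ‖e‖ = 1) {v : E} (hv : ⟪v, e⟫ = 0) (s : ℝ) :
    ⟪v + s • e, e⟫ = s := by
  simp [inner_add_left, real_inner_smul_left, hv, he]

lemma norm_add_smul_sq (he : ‖e‖ = 1) {v : E} (hv : ⟪v, e⟫ = 0) (s : ℝ) :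
    ‖v + s • e‖ ^ 2 = ‖v‖ ^ 2 + s ^ 2 := by
  have hvs : ⟪v, s • e⟫ = 0 := by simp [real_inner_smul_right, hv]
  rw [norm_add_sq_real, hvs, norm_smul, he, mul_one, Real.norm_eq_abs, sq_abs]
  ring

lemma add_smul_mem_solidCylinder_iff (he : ‖e‖ = 1) {v : E} (hv : ⟪v, e⟫ = 0) (s : ℝ) :
    v + s • e ∈ solidCylinder e ↔ ‖v‖ ≤ 1 ∧ |s| ≤ 1 := by
  simp [solidCylinder, inner_add_smul_self he hv]

lemma cylinderMap_add_smul (he : ‖e‖ = 1) {v : E} (hv : ⟪v, e⟫ = 0) (s : ℝ) :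
    cylinderMap e (v + s • e) = radialCubic v + chebT3 s • e := by
  simp [cylinderMap, inner_add_smul_self he hv]

lemma inner_radialCubic_eq_zero {v : E} (hv : ⟪v, e⟫ = 0) : ⟪radialCubic v, e⟫ = 0 := by
  simp [radialCubic, real_inner_smul_left, hv]

theorem image_cylinderMap_closedBall (he : ‖e‖ = 1) :
    cylinderMap e '' closedBall 0 1 = solidCylinder e := by
  ext y
  constructor
  · rintro ⟨x, hx, rfl⟩
    obtain ⟨v, s, hv, rfl⟩ := exists_add_smul_eq he x
    have hvs : ‖v‖ ^ 2 + s ^ 2 ≤ 1 := by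
      rw [← norm_add_smul_sq he hv]
      simpa using hx
    rw [cylinderMap_add_smul he hv, add_smul_mem_solidCylinder_iff he (inner_radialCubic_eq_zero hv)]
    refine ⟨norm_radialCubic_le_one ?_, abs_chebT3_le_one ?_⟩
    · exact (sq_le_one_iff₀ (norm_nonneg v)).1 (by nlinarith)
    · exact sq_le_one_iff_abs_le_one _ |>.1 (by nlinarith [sq_nonneg ‖v‖])
  · obtain ⟨v, s, hv, rfl⟩ := exists_add_smul_eq he y
    rintro hy
    obtain ⟨hv1, hs1⟩ := (add_smul_mem_solidCylinder_iff he hv s).1 hy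
    obtain ⟨c, hc, hcv⟩ := exists_norm_smul_le_radialCubic_eq hv1
    obtain ⟨t, ht, rfl⟩ := exists_abs_le_half_chebT3_eq hs1
    have hcv0 : ⟪c • v, e⟫ = 0 := by simp [real_inner_smul_left, hv]
    refine ⟨c • v + t • e, ?_, by rw [cylinderMap_add_smul he hcv0, hcv]⟩
    have hsq : ‖c • v + t • e‖ ^ 2 ≤ 1 := by
      rw [norm_add_smul_sq he hcv0, ← sq_abs t]
      nlinarith [norm_nonneg (c • v), abs_nonneg t]
    simpa using (sq_le_one_iff₀ (norm_nonneg _)).1 hsq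

end Cylinder

section Coordinates

variable {ι : Type} [Fintype ι] [DecidableEq ι]

lemma inner_single_one_right (k : ι) (x : EuclideanSpace ℝ ι) :
    ⟪x, EuclideanSpace.single k (1 : ℝ)⟫ = x k := by
  simp [EuclideanSpace.inner_single_right]

lemma norm_sub_smul_single_sq (k : ι) (x : EuclideanSpace ℝ ι) :
    ‖x - x k • EuclideanSpace.single k (1 : ℝ)‖ ^ 2 = ∑ i, if i ≠ k then x i ^ 2 else 0 := by
  rw [EuclideanSpace.norm_sq_eq]
  refine Finset.sum_congr rfl fun i _ => ?_
  by_cases h : i = k <;> simp [h]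

lemma solidCylinder_single (k : ι) :
    solidCylinder (EuclideanSpace.single k (1 : ℝ)) =
      {x | (∑ i, if i ≠ k then x i ^ 2 else 0) ≤ 1 ∧ |x k| ≤ 1} := by
  ext x
  simp only [solidCylinder, mem_ofPred_eq, inner_single_one_right,
    ← sq_le_one_iff₀ (norm_nonneg _), norm_sub_smul_single_sq]

lemma cylinderMap_single_apply (k : ι) (x : EuclideanSpace ℝ ι) (i : ι) :
    cylinderMap (EuclideanSpace.single k (1 : ℝ)) x i =
      if i = k then chebT3 (x k) else (2 - 32 / 27 * ∑ j, if j ≠ k then x j ^ 2 else 0) * x i := by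
  rw [cylinderMap, radialCubic, inner_single_one_right, norm_sub_smul_single_sq]
  by_cases h : i = k <;> simp [h]

lemma isPolynomialMap_cylinderMap_single (k : ι) :
    IsPolynomialMap (cylinderMap (EuclideanSpace.single k (1 : ℝ))) := by
  open MvPolynomial in
  refine ⟨fun i => if i = k then C 4 * X k ^ 3 - C 3 * X k
    else (C 2 - C (32 / 27) * ∑ j, if j ≠ k then X j ^ 2 else 0) * X i, fun x i => ?_⟩
  by_cases h : i = k <;>
    simp [h, cylinderMap_single_apply, chebT3, apply_ite (MvPolynomial.eval _)]

end Coordinates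

/-- The solid cylinder `Cₙ := {x : x₁² + ⋯ + x_{n-1}² ≤ 1, |xₙ| ≤ 1}` is the image of
the closed unit ball `B̄ₙ` under a polynomial map `ℝⁿ → ℝⁿ`. -/
theorem cylinder_is_poly_image_ball (n : ℕ) (hn : 2 ≤ n) :
    ∃ f : EuclideanSpace ℝ (Fin n) → EuclideanSpace ℝ (Fin n),
      IsPolynomialMap f ∧
      f '' Metric.closedBall 0 1 =
        {x : EuclideanSpace ℝ (Fin n) |
          (∑ i : Fin n, if (i : ℕ) < n - 1 then (x i) ^ 2 else 0) ≤ 1 ∧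
          |x ⟨n - 1, by omega⟩| ≤ 1} := by
  set k : Fin n := ⟨n - 1, by omega⟩
  refine ⟨cylinderMap (EuclideanSpace.single k 1), isPolynomialMap_cylinderMap_single k, ?_⟩
  have hk (i : Fin n) : (i : ℕ) < n - 1 ↔ i ≠ k := by
    simp only [k, Ne, Fin.ext_iff]; omega
  rw [image_cylinderMap_closedBall (by simp), solidCylinder_single]
  simp only [hk]
end

section
/- Let n ≥ 1 and let Δ ⊆ ℝ^n be the convex hull of n+1 affinely independent points of ℝ^n. Then there exists a polynomial map f : ℝ^{n+1} → ℝ^{n+1} such that f(B̄_{n+1}) = Δ × [−1,1]. -/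
lemma mem_convexHull_range_iff' {ι : Type*} [Fintype ι] {κ : Type*}
    (v : ι → EuclideanSpace ℝ κ) (y : EuclideanSpace ℝ κ) :
    y ∈ convexHull ℝ (Set.range v) ↔
      ∃ μ : ι → ℝ, (∀ i, 0 ≤ μ i) ∧ ∑ i, μ i = 1 ∧ ∑ i, μ i • v i = y := by
  classical
  rw [convexHull_range_eq_exists_affineCombination]
  constructor
  · rintro ⟨s, w, hw0, hw1, rfl⟩
    refine ⟨fun i => if i ∈ s then w i else 0, fun i => ?_, ?_, ?_⟩
    · dsimp only; split
      · exact hw0 _ ‹_›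
      · exact le_refl _
    · rw [Finset.sum_ite_mem, Finset.univ_inter, hw1]
    · rw [Finset.affineCombination_eq_linear_combination s v w hw1]
      simp [ite_smul, Finset.sum_ite_mem]
  · rintro ⟨μ, hμ0, hμ1, rfl⟩
    exact ⟨Finset.univ, μ, fun i _ => hμ0 i, hμ1,
      Finset.affineCombination_eq_linear_combination _ v μ hμ1⟩

lemma euclid_sum_apply {ι κ : Type*} [Fintype ι] (μ : ι → ℝ)
    (v : ι → EuclideanSpace ℝ κ) (j : κ) :
    (∑ i, μ i • v i) j = ∑ i, μ i * v i j := by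
  classical
  induction (Finset.univ : Finset ι) using Finset.induction with
  | empty => simp
  | @insert a s h ih => rw [Finset.sum_insert h, Finset.sum_insert h, ← ih]; rfl

lemma ball_iff (n : ℕ) (x : EuclideanSpace ℝ (Fin (n+1))) :
    x ∈ Metric.closedBall 0 1 ↔
      ∑ k : Fin n, (x k.castSucc)^2 + (x (Fin.last n))^2 ≤ 1 := by
  have hnorm : ‖x‖ = Real.sqrt (∑ i, (x i)^2) := by
    rw [EuclideanSpace.norm_eq]; simp [Real.norm_eq_abs, sq_abs]
  rw [Metric.mem_closedBall, dist_zero_right, hnorm, Fin.sum_univ_castSucc,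
    show (1:ℝ) = Real.sqrt 1 by rw [Real.sqrt_one],
    Real.sqrt_le_sqrt_iff (by positivity), Real.sqrt_one]

open MvPolynomial in
noncomputable def prismP (n : ℕ) (v : Fin (n + 1) → EuclideanSpace ℝ (Fin n)) :
    Fin (n + 1) → MvPolynomial (Fin (n + 1)) ℝ :=
  Fin.snoc
    (fun j => C (v 0 j) + ∑ k : Fin n, (X k.castSucc) ^ 2 *
        ((C 3 - C 2 * ∑ m : Fin n, (X m.castSucc) ^ 2) ^ 2 * C (1/2 : ℝ)) *
        C (v k.succ j - v 0 j))
    (C 3 * X (Fin.last n) - C 4 * X (Fin.last n) ^ 3)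

lemma prismP_eval_last (n : ℕ) (v : Fin (n + 1) → EuclideanSpace ℝ (Fin n))
    (x : EuclideanSpace ℝ (Fin (n+1))) :
    MvPolynomial.eval (fun j => x j) (prismP n v (Fin.last n)) =
      3 * x (Fin.last n) - 4 * x (Fin.last n) ^ 3 := by
  simp [prismP]

lemma prismP_eval_castSucc (n : ℕ) (v : Fin (n + 1) → EuclideanSpace ℝ (Fin n))
    (x : EuclideanSpace ℝ (Fin (n+1))) (j : Fin n) :
    MvPolynomial.eval (fun j => x j) (prismP n v j.castSucc) =
      v 0 j + ∑ k : Fin n, (x k.castSucc) ^ 2 *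
        ((3 - 2 * ∑ m : Fin n, (x m.castSucc) ^ 2) ^ 2 * (1/2)) *
        (v k.succ j - v 0 j) := by
  simp [prismP, Fin.snoc_castSucc]

/-- If `Δ ⊆ ℝⁿ` is the convex hull of `n+1` affinely independent points (an `n`-simplex),
then the prism `Δ × [−1,1] ⊆ ℝⁿ⁺¹` is the image of the closed unit ball `B̄_{n+1}` under a
polynomial map `ℝⁿ⁺¹ → ℝⁿ⁺¹`. -/
theorem simplicial_prism_is_poly_image_ball (n : ℕ) (hn : 1 ≤ n)
    (v : Fin (n + 1) → EuclideanSpace ℝ (Fin n)) (hv : AffineIndependent ℝ v) :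
    ∃ f : EuclideanSpace ℝ (Fin (n + 1)) → EuclideanSpace ℝ (Fin (n + 1)),
      IsPolynomialMap f ∧
      f '' Metric.closedBall 0 1 =
        {x : EuclideanSpace ℝ (Fin (n + 1)) |
          (WithLp.toLp 2 (fun i : Fin n => x i.castSucc) : EuclideanSpace ℝ (Fin n)) ∈
              convexHull ℝ (Set.range v) ∧
          x (Fin.last n) ∈ Set.Icc (-1 : ℝ) 1} := by
  classical
  refine ⟨fun x => (WithLp.toLp 2 (fun i => MvPolynomial.eval (fun j => x j) (prismP n v i)) :
      EuclideanSpace ℝ (Fin (n+1))), ⟨prismP n v, fun _ _ => rfl⟩, ?_⟩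
  ext y
  simp only [Set.mem_image, Set.mem_setOf_eq]
  constructor
  · rintro ⟨x, hx, rfl⟩
    rw [ball_iff] at hx
    set u : ℝ := ∑ k : Fin n, (x k.castSucc)^2 with hu_def
    have hu0 : 0 ≤ u := Finset.sum_nonneg fun k _ => sq_nonneg _
    have ht2 : (x (Fin.last n))^2 ≤ 1 - u := by linarith
    have hu1 : u ≤ 1 := by nlinarith [sq_nonneg (x (Fin.last n))]
    constructor
    · rw [mem_convexHull_range_iff']
      set lam : Fin n → ℝ := fun k => (x k.castSucc)^2 * ((3 - 2*u)^2 * (1/2)) with hlam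
      have hlamsum : ∑ k, lam k = u * ((3 - 2*u)^2 * (1/2)) := by
        rw [hlam, ← Finset.sum_mul]
      have hlam0 : ∀ k, 0 ≤ lam k := fun k => by
        have := sq_nonneg (x k.castSucc); have := sq_nonneg (3 - 2*u); positivity
      have hlamle : ∑ k, lam k ≤ 1 := by rw [hlamsum]; nlinarith [sq_nonneg (2*u-1)]
      refine ⟨Fin.cases (1 - ∑ k, lam k) lam, ?_, ?_, ?_⟩
      · intro i
        refine Fin.cases ?_ (fun k => ?_) i
        · simpa using by linarith
        · simpa using hlam0 k
      · rw [Fin.sum_univ_succ]; simp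
      · ext j
        rw [euclid_sum_apply, Fin.sum_univ_succ]
        simp only [Fin.cases_zero, Fin.cases_succ]
        show _ = MvPolynomial.eval (fun j => x j) (prismP n v j.castSucc)
        rw [prismP_eval_castSucc, ← hu_def]
        have : ∀ k : Fin n, (x k.castSucc)^2 * ((3 - 2*u)^2 * (1/2)) *
            (v k.succ j - v 0 j) = lam k * (v k.succ j - v 0 j) := fun k => by rw [hlam]
        rw [Finset.sum_congr rfl fun k _ => this k]
        simp only [mul_sub, Finset.sum_sub_distrib, ← Finset.sum_mul]
        ring
    · show MvPolynomial.eval (fun j => x j) (prismP n v (Fin.last n)) ∈ Set.Icc (-1:ℝ) 1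
      rw [prismP_eval_last]
      set t := x (Fin.last n)
      have ht : t^2 ≤ 1 := by linarith
      have htu : t ≤ 1 := by nlinarith [sq_nonneg (t-1)]
      have htl : -1 ≤ t := by nlinarith [sq_nonneg (t+1)]
      constructor
      · nlinarith [sq_nonneg (1 + 2*t), sq_nonneg (1 - 2*t)]
      · nlinarith [sq_nonneg (1 + 2*t), sq_nonneg (1 - 2*t)]
  · rintro ⟨hy1, hy2⟩
    rw [mem_convexHull_range_iff'] at hy1
    obtain ⟨μ, hμ0, hμ1, hμv⟩ := hy1
    set L : ℝ := ∑ k : Fin n, μ k.succ with hL_def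
    have hμ0L : μ 0 + L = 1 := by rw [Fin.sum_univ_succ] at hμ1; exact hμ1
    have hL0 : 0 ≤ L := Finset.sum_nonneg fun k _ => hμ0 _
    have hL1 : L ≤ 1 := by linarith [hμ0 0]
    -- find u with u * ((3-2u)^2 * (1/2)) = L
    have hIVT1 := intermediate_value_Icc (show (0:ℝ) ≤ 1/2 by norm_num)
      (Continuous.continuousOn (f := fun u : ℝ => u * ((3 - 2*u)^2 * (1/2))) (by fun_prop))
    have hmem1 : L ∈ Set.Icc ((fun u : ℝ => u * ((3 - 2*u)^2 * (1/2))) 0)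
        ((fun u : ℝ => u * ((3 - 2*u)^2 * (1/2))) (1/2)) := by
      norm_num; exact ⟨hL0, hL1⟩
    obtain ⟨u, hu, hPu⟩ := hIVT1 hmem1
    -- find t with 3t - 4t^3 = y last
    have hIVT2 := intermediate_value_Icc (show -(1/2:ℝ) ≤ 1/2 by norm_num)
      (Continuous.continuousOn (f := fun t : ℝ => 3*t - 4*t^3) (by fun_prop))
    have hmem2 : y (Fin.last n) ∈ Set.Icc ((fun t : ℝ => 3*t - 4*t^3) (-(1/2)))
        ((fun t : ℝ => 3*t - 4*t^3) (1/2)) := by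
      norm_num; exact ⟨hy2.1, hy2.2⟩
    obtain ⟨t, ht, hQt⟩ := hIVT2 hmem2
    simp only at hPu hQt
    have h32 : (2:ℝ) ≤ 3 - 2*u := by linarith [hu.2]
    have h32ne : (3 - 2*u) ≠ 0 := by linarith
    set x : EuclideanSpace ℝ (Fin (n+1)) :=
      WithLp.toLp 2 (Fin.snoc (fun k : Fin n => Real.sqrt (2 * μ k.succ) / (3 - 2*u)) t :
        Fin (n+1) → ℝ) with hx_def
    have hxlast : x (Fin.last n) = t := by rw [hx_def]; exact Fin.snoc_last (α := fun _ => ℝ) t (fun k : Fin n => Real.sqrt (2 * μ k.succ) / (3 - 2*u))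
    have hxk : ∀ k : Fin n, x k.castSucc = Real.sqrt (2 * μ k.succ) / (3 - 2*u) :=
      fun k => by rw [hx_def]; exact Fin.snoc_castSucc (α := fun _ => ℝ) t (fun k : Fin n => Real.sqrt (2 * μ k.succ) / (3 - 2*u)) k
    have hsq : ∀ k : Fin n, (x k.castSucc)^2 = 2 * μ k.succ / (3 - 2*u)^2 := by
      intro k
      rw [hxk k, div_pow, Real.sq_sqrt (by have := hμ0 k.succ; positivity)]
    have hU : ∑ k : Fin n, (x k.castSucc)^2 = u := by
      rw [Finset.sum_congr rfl fun k _ => hsq k, ← Finset.sum_div, ← Finset.mul_sum, ← hL_def,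
        ← hPu]
      field_simp
    refine ⟨x, ?_, ?_⟩
    · rw [ball_iff, hU, hxlast]
      have ht1 : -(1/2:ℝ) ≤ t := ht.1
      have ht2 : t ≤ (1/2:ℝ) := ht.2
      nlinarith [hu.1, hu.2]
    · ext i
      refine Fin.lastCases ?_ (fun j => ?_) i
      · show MvPolynomial.eval (fun j => x j) (prismP n v (Fin.last n)) = _
        rw [prismP_eval_last, hxlast, hQt]
      · show MvPolynomial.eval (fun j => x j) (prismP n v j.castSucc) = _
        rw [prismP_eval_castSucc, hU]
        have hterm : ∀ k : Fin n, (x k.castSucc)^2 * ((3 - 2*u)^2 * (1/2)) *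
            (v k.succ j - v 0 j) = μ k.succ * (v k.succ j - v 0 j) := by
          intro k
          rw [hsq k]
          field_simp
        rw [Finset.sum_congr rfl fun k _ => hterm k]
        have h1 : μ 0 * v 0 j + ∑ k : Fin n, μ k.succ * v k.succ j = y j.castSucc := by
          have := congrArg (· j) hμv
          rw [euclid_sum_apply, Fin.sum_univ_succ] at this
          exact this
        have h2 : μ 0 = 1 - L := by linarith
        simp only [mul_sub, Finset.sum_sub_distrib, ← Finset.sum_mul, ← hL_def]
        rw [← h1, h2]
        ring
end

section
/- For every n ≥ 1 there exists a polynomial map f : ℝ^n → ℝ^n such that f(B̄_n) = [−1,1]^n, the n-dimensional hypercube. -/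
open Real Set Polynomial Polynomial.Chebyshev

noncomputable def coordwiseEval {ι : Type*} (p : ℝ[X]) :
    EuclideanSpace ℝ ι → EuclideanSpace ℝ ι :=
  fun x => WithLp.toLp 2 fun i => p.eval (x i)

theorem isPolynomialMap_coordwiseEval {ι : Type} (p : ℝ[X]) :
    IsPolynomialMap (coordwiseEval (ι := ι) p) :=
  ⟨fun i => aeval (MvPolynomial.X i) p, fun x i => by
    simpa [coordwiseEval] using
      aeval_algHom_apply (MvPolynomial.aeval (x ·)) (MvPolynomial.X i) p⟩

theorem EuclideanSpace.norm_sq_le_card_mul_sq {ι : Type*} [Fintype ι] {x : EuclideanSpace ℝ ι}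
    {δ : ℝ} (hx : ∀ i, |x i| ≤ δ) : ‖x‖ ^ 2 ≤ Fintype.card ι * δ ^ 2 := by
  rw [EuclideanSpace.real_norm_sq_eq]
  calc ∑ i, x i ^ 2 ≤ ∑ _i : ι, δ ^ 2 := Finset.sum_le_sum fun i _ => sq_le_sq.mpr <|
        (hx i).trans (le_abs_self δ)
    _ = Fintype.card ι * δ ^ 2 := by simp

theorem surjOn_eval_T_real {δ : ℝ} (hδ : 0 < δ) {m : ℕ} (hm : π ≤ m * δ) :
    SurjOn (T ℝ m).eval (Icc (-δ) δ) (Icc (-1) 1) := by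
  have hm0 : (0 : ℝ) < m := pos_of_mul_pos_left (pi_pos.trans_le hm) hδ.le
  intro y hy
  obtain ⟨s, ⟨hs₁, hs₂⟩, rfl⟩ :
      y ∈ cos '' Icc (m * (π / 2 - δ)) (m * (π / 2 - δ) + 2 * π) := by
    rwa [cos_periodic.image_Icc two_pi_pos, range_cos]
  have hθ : |π / 2 - s / m| ≤ δ := by
    have h₁ : π / 2 - δ ≤ s / m := by rw [le_div_iff₀ hm0]; linarith
    have h₂ : s / m ≤ π / 2 + δ := by rw [div_le_iff₀ hm0]; linarith
    exact abs_le.mpr ⟨by linarith, by linarith⟩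
  refine ⟨cos (s / m), abs_le.mp ?_, ?_⟩
  · calc |cos (s / m)| = |sin (π / 2 - s / m)| := by rw [sin_pi_div_two_sub]
      _ ≤ δ := abs_sin_le_abs.trans hθ
  · simp [T_real_cos, mul_div_cancel₀ _ hm0.ne']

theorem coordwiseEval_image_closedBall {ι : Type*} [Fintype ι] {p : ℝ[X]} {δ : ℝ}
    (hp_maps : MapsTo p.eval (Icc (-1) 1) (Icc (-1) 1))
    (hp_surj : SurjOn p.eval (Icc (-δ) δ) (Icc (-1) 1))
    (hδ : Fintype.card ι * δ ^ 2 ≤ 1) :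
    coordwiseEval p '' Metric.closedBall 0 1 =
      {x : EuclideanSpace ℝ ι | ∀ i, x i ∈ Icc (-1) 1} := by
  ext y
  constructor
  · rintro ⟨x, hx, rfl⟩ i
    have hxi : |x i| ≤ 1 := (PiLp.norm_apply_le x i).trans (mem_closedBall_zero_iff.mp hx)
    exact hp_maps (abs_le.mp hxi)
  · intro hy
    choose x hx hxy using fun i => hp_surj (hy i)
    refine ⟨WithLp.toLp 2 x, ?_, WithLp.ofLp_injective 2 (funext hxy)⟩
    have hx_sq := EuclideanSpace.norm_sq_le_card_mul_sq (x := WithLp.toLp 2 x)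
      fun i => abs_le.mpr (hx i)
    rw [mem_closedBall_zero_iff]
    nlinarith [norm_nonneg (WithLp.toLp 2 x)]

theorem hypercube_is_poly_image_ball_general (n : ℕ) :
    ∃ f : EuclideanSpace ℝ (Fin n) → EuclideanSpace ℝ (Fin n),
      IsPolynomialMap f ∧
      f '' Metric.closedBall 0 1 =
        {x : EuclideanSpace ℝ (Fin n) | ∀ i, x i ∈ Set.Icc (-1 : ℝ) 1} := by
  set δ : ℝ := 1 / (n + 1)
  have hδ : 0 < δ := by positivity
  have hnδ : (Fintype.card (Fin n) : ℝ) * δ ^ 2 ≤ 1 := by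
    rw [Fintype.card_fin, div_pow, ← mul_div_assoc, div_le_one (by positivity)]
    nlinarith
  obtain ⟨m, hm⟩ := exists_nat_ge (π / δ)
  exact ⟨coordwiseEval (T ℝ m), isPolynomialMap_coordwiseEval _,
    coordwiseEval_image_closedBall (fun _ => eval_T_real_mem_Icc m)
      (surjOn_eval_T_real hδ ((div_le_iff₀ hδ).mp hm)) hnδ⟩

/-- The hypercube `[−1,1]ⁿ` is the image of the closed unit ball `B̄ₙ` under a
polynomial map `ℝⁿ → ℝⁿ`. -/
theorem hypercube_is_poly_image_ball (n : ℕ) (hn : 1 ≤ n) :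
    ∃ f : EuclideanSpace ℝ (Fin n) → EuclideanSpace ℝ (Fin n),
      IsPolynomialMap f ∧
      f '' Metric.closedBall 0 1 =
        {x : EuclideanSpace ℝ (Fin n) | ∀ i, x i ∈ Set.Icc (-1 : ℝ) 1} :=
  hypercube_is_poly_image_ball_general n
end

section
/- For every n ≥ 1 there exists a polynomial map f : ℝ^n → ℝ^n such that f([−1,1]^n) = B̄_n and, moreover, there exists ε₀ > 0 such that f(B_n(0, 1+ε)) = B̄_n for every 0 < ε < ε₀, where B_n(0,r) denotes the open Euclidean ball of radius r centered at the origin of ℝ^n. -/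
open Polynomial Metric

namespace Polynomial.Chebyshev

theorem exists_T_two_mul_eq_and_T_two_mul_add_one_eq (R : Type*) [CommRing R] (j : ℕ) :
    (∃ E : R[X], T R (2 * j) = E.comp (X ^ 2)) ∧
      ∃ O : R[X], T R (2 * j + 1) = X * O.comp (X ^ 2) := by
  induction j with
  | zero => exact ⟨⟨1, by simp⟩, ⟨1, by simp⟩⟩
  | succ j ih =>
    obtain ⟨⟨E, hE⟩, ⟨O, hO⟩⟩ := ih
    have hT_even : T R (2 * (j + 1 : ℕ)) = (2 * X * O - E).comp (X ^ 2) := by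
      rw [show (2 * (j + 1 : ℕ) : ℤ) = 2 * j + 2 by push_cast; ring, T_add_two, hO, hE]
      simp only [sub_comp, mul_comp, ofNat_comp, X_comp]
      ring
    refine ⟨⟨_, hT_even⟩, 2 * (2 * X * O - E) - O, ?_⟩
    rw [show (2 * (j + 1 : ℕ) + 1 : ℤ) = 2 * j + 1 + 2 by push_cast; ring, T_add_two,
      show (2 * j + 1 + 1 : ℤ) = 2 * (j + 1 : ℕ) by push_cast; ring, hT_even, hO]
    simp only [sub_comp, mul_comp, ofNat_comp, X_comp]
    ring

end Polynomial.Chebyshev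

/- `r t = T_m (a t)` with `m = 4j + 1` and `a = sin (π / 2m) = cos (2jπ / m)`, so that
`r 1 = cos (2jπ) = 1`, while `|a t| ≤ π R / 2m < 1` for `|t| ≤ R` once `j > π R / 8`. -/
open Polynomial.Chebyshev in
theorem exists_eval_one_eq_one_and_abs_mul_eval_sq_le_one (R : ℝ) :
    ∃ P : ℝ[X], P.eval 1 = 1 ∧ ∀ t, |t| ≤ R → |t * P.eval (t ^ 2)| ≤ 1 := by
  obtain ⟨j, hj⟩ := exists_nat_gt (Real.pi * R / 8)
  obtain ⟨m, hm⟩ : ∃ m : ℕ, m = 4 * j + 1 := ⟨_, rfl⟩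
  have hm_pos : (0 : ℝ) < m := by rw [hm]; positivity
  obtain ⟨a, ha⟩ : ∃ a, a = Real.sin (Real.pi / (2 * m)) := ⟨_, rfl⟩
  obtain ⟨O, hO⟩ := (exists_T_two_mul_eq_and_T_two_mul_add_one_eq ℝ (2 * j)).2
  have hT : ∀ t : ℝ, t * (C a * O.comp (C (a ^ 2) * X)).eval (t ^ 2) = (T ℝ m).eval (a * t) := by
    intro t
    rw [show (m : ℤ) = 2 * (2 * j : ℕ) + 1 by omega, hO]
    simp only [eval_mul, eval_C, eval_comp, eval_X, eval_pow]
    rw [mul_pow]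
    ring
  refine ⟨C a * O.comp (C (a ^ 2) * X), ?_, fun t ht => ?_⟩
  · have ha_cos : a = Real.cos ((2 * j : ℕ) * Real.pi / m) := by
      rw [ha, ← Real.cos_pi_div_two_sub]
      congr 1
      field_simp
      rw [hm]
      push_cast
      ring
    have hTa : (T ℝ m).eval a = 1 := by
      rw [ha_cos, eval_T_real_cos_int_mul_pi_div (by omega)]
      simp
    simpa [hTa] using hT 1
  · rw [hT]
    refine abs_eval_T_real_le_one _ ?_
    calc |a * t| ≤ Real.pi / (2 * m) * R := by
          rw [abs_mul]
          have h_sin : |a| ≤ Real.pi / (2 * m) := by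
            simpa [ha, abs_of_pos (show 0 < Real.pi / (2 * m) by positivity)] using
              Real.abs_sin_le_abs (x := Real.pi / (2 * m))
          gcongr
      _ ≤ 1 := by
          have hm_cast : (m : ℝ) = 4 * j + 1 := by exact_mod_cast hm
          rw [div_mul_eq_mul_div, div_le_one (by positivity)]
          linarith

namespace EuclideanSpace

variable {ι : Type} [Fintype ι]

noncomputable def radialMap (P : ℝ[X]) (x : EuclideanSpace ℝ ι) : EuclideanSpace ℝ ι :=
  P.eval (‖x‖ ^ 2) • x

theorem isPolynomialMap_radialMap (P : ℝ[X]) : IsPolynomialMap (radialMap (ι := ι) P) := by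
  refine ⟨fun i => aeval (∑ j, MvPolynomial.X j ^ 2) P * MvPolynomial.X i, fun x i => ?_⟩
  rw [map_mul, ← MvPolynomial.coe_aeval_eq_eval, AlgHom.coe_toRingHom, ← aeval_algHom_apply]
  simp [radialMap, real_norm_sq_eq]

theorem norm_radialMap (P : ℝ[X]) (x : EuclideanSpace ℝ ι) :
    ‖radialMap P x‖ = |‖x‖ * P.eval (‖x‖ ^ 2)| := by
  rw [radialMap, norm_smul, Real.norm_eq_abs, abs_mul, abs_norm, mul_comm]

theorem closedBall_subset_image_radialMap {P : ℝ[X]} (hP : P.eval 1 = 1) :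
    closedBall (0 : EuclideanSpace ℝ ι) 1 ⊆ radialMap P '' closedBall 0 1 := by
  intro y hy
  rw [mem_closedBall_zero_iff] at hy
  have hcont : Continuous fun t : ℝ => t * P.eval (t ^ 2) := by fun_prop
  obtain ⟨t, ⟨ht₀, ht₁⟩, hty : t * P.eval (t ^ 2) = ‖y‖⟩ :=
    intermediate_value_Icc zero_le_one hcont.continuousOn <|
      show ‖y‖ ∈ Set.Icc (0 * P.eval (0 ^ 2)) (1 * P.eval (1 ^ 2)) by simpa [hP] using hy
  rcases eq_or_ne y 0 with rfl | hy₀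
  · exact ⟨0, by simp, by simp [radialMap]⟩
  have hy_pos : 0 < ‖y‖ := norm_pos_iff.mpr hy₀
  have hx : ‖(t / ‖y‖) • y‖ = t := by
    rw [norm_smul, Real.norm_eq_abs, abs_of_nonneg (by positivity), div_mul_cancel₀ _ hy_pos.ne']
  refine ⟨(t / ‖y‖) • y, by rwa [mem_closedBall_zero_iff, hx], ?_⟩
  rw [radialMap, hx, smul_smul, mul_div_left_comm, ← mul_div_assoc, hty,
    div_self hy_pos.ne', one_smul]

theorem image_radialMap_eq_closedBall {P : ℝ[X]} {R : ℝ} {S : Set (EuclideanSpace ℝ ι)}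
    (hP : P.eval 1 = 1) (hPR : ∀ t, |t| ≤ R → |t * P.eval (t ^ 2)| ≤ 1)
    (hS₁ : closedBall 0 1 ⊆ S) (hSR : S ⊆ closedBall 0 R) :
    radialMap P '' S = closedBall 0 1 := by
  refine subset_antisymm ?_ ((closedBall_subset_image_radialMap hP).trans (Set.image_mono hS₁))
  rintro _ ⟨x, hx, rfl⟩
  rw [mem_closedBall_zero_iff, norm_radialMap]
  exact hPR _ (by simpa using mem_closedBall_zero_iff.mp (hSR hx))

def cube (ι : Type) : Set (EuclideanSpace ℝ ι) := {x | ∀ i, x i ∈ Set.Icc (-1 : ℝ) 1}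

theorem closedBall_zero_one_subset_cube : closedBall (0 : EuclideanSpace ℝ ι) 1 ⊆ cube ι :=
  fun x hx i => abs_le.mp <| (PiLp.norm_apply_le x i).trans (mem_closedBall_zero_iff.mp hx)

theorem cube_subset_closedBall_sqrt_card : cube ι ⊆ closedBall 0 √(Fintype.card ι) := by
  intro x hx
  rw [mem_closedBall_zero_iff, ← Real.sqrt_sq (norm_nonneg x), real_norm_sq_eq]
  gcongr
  calc ∑ i, x i ^ 2 ≤ ∑ _i : ι, (1 : ℝ) := Finset.sum_le_sum fun i _ =>
        (sq_le_one_iff_abs_le_one (x i)).mpr (abs_le.mpr (hx i))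
    _ = Fintype.card ι := by simp

end EuclideanSpace

open EuclideanSpace

theorem exists_poly_cube_onto_ball_general (n : ℕ) :
    ∃ f : EuclideanSpace ℝ (Fin n) → EuclideanSpace ℝ (Fin n),
      IsPolynomialMap f ∧
      f '' {x : EuclideanSpace ℝ (Fin n) | ∀ i, x i ∈ Set.Icc (-1 : ℝ) 1} =
        Metric.closedBall 0 1 ∧
      ∃ ε₀ > (0 : ℝ), ∀ ε : ℝ, 0 < ε → ε < ε₀ →
        f '' Metric.ball 0 (1 + ε) = Metric.closedBall 0 1 := by
  obtain ⟨P, hP₁, hPR⟩ := exists_eval_one_eq_one_and_abs_mul_eval_sq_le_one (√n + 2)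
  have h_cube : cube (Fin n) ⊆ closedBall 0 (√n + 2) :=
    cube_subset_closedBall_sqrt_card.trans (closedBall_subset_closedBall (by simp))
  have h_ball (ε : ℝ) (hε : ε < 1) :
      ball (0 : EuclideanSpace ℝ (Fin n)) (1 + ε) ⊆ closedBall 0 (√n + 2) :=
    ball_subset_closedBall.trans (closedBall_subset_closedBall (by linarith [Real.sqrt_nonneg n]))
  refine ⟨radialMap P, isPolynomialMap_radialMap P,
    image_radialMap_eq_closedBall hP₁ hPR closedBall_zero_one_subset_cube h_cube,
    1, one_pos, fun ε hε hε₁ => ?_⟩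
  exact image_radialMap_eq_closedBall hP₁ hPR (closedBall_subset_ball (by linarith)) (h_ball ε hε₁)

/-- There is a polynomial map `f : ℝⁿ → ℝⁿ` with `f([−1,1]ⁿ) = B̄ₙ` and such that,
for some `ε₀ > 0`, `f(Bₙ(0, 1+ε)) = B̄ₙ` for every `0 < ε < ε₀`. -/
theorem exists_poly_cube_onto_ball (n : ℕ) (hn : 1 ≤ n) :
    ∃ f : EuclideanSpace ℝ (Fin n) → EuclideanSpace ℝ (Fin n),
      IsPolynomialMap f ∧
      f '' {x : EuclideanSpace ℝ (Fin n) | ∀ i, x i ∈ Set.Icc (-1 : ℝ) 1} =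
        Metric.closedBall 0 1 ∧
      ∃ ε₀ > (0 : ℝ), ∀ ε : ℝ, 0 < ε → ε < ε₀ →
        f '' Metric.ball 0 (1 + ε) = Metric.closedBall 0 1 :=
  exists_poly_cube_onto_ball_general n
end

section
/- Let ℓ ≥ 1 and let n₁,…,n_ℓ ≥ 1 be positive integers with n := n₁ + ⋯ + n_ℓ. Then there exists a polynomial map f : ℝ^n → ℝ^n whose image of B̄_n is the product of closed unit balls B̄_{n₁} × ⋯ × B̄_{n_ℓ} ⊆ ℝ^n, i.e. the set of x ∈ ℝ^n such that for each i the sum of the squares of the coordinates of x in the i-th block of nᵢ coordinates is at most 1. -/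
/-!
The cubic `tripleSin t = 3t - 4t³` satisfies `tripleSin (sin θ) = sin 3θ`, so it maps `[-1, 1]`
into itself, and on `[0, 1/2]` it at least doubles its argument, so its `k`-th iterate reaches `1`
at some `R ≤ 2⁻ᵏ`. The radial map `v ↦ (3 - 4‖v‖²) v` acts on the norm as `tripleSin` does, and
iterating it `ℓ` times on each of the `ℓ` blocks maps the unit ball into the product of unit balls.
Conversely, by the intermediate value theorem every point of the product is the image of a point
whose blocks have norm at most `R ≤ 2⁻ˡ`, hence of squared norm at most `ℓ / 4ˡ ≤ 1`.
-/

open Metric Set MvPolynomial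

namespace IsPolynomialMap

variable {σ τ υ : Type}

lemma id : IsPolynomialMap (id : EuclideanSpace ℝ σ → EuclideanSpace ℝ σ) :=
  ⟨X, fun x i => by simp⟩

lemma comp {g : EuclideanSpace ℝ τ → EuclideanSpace ℝ υ}
    {f : EuclideanSpace ℝ σ → EuclideanSpace ℝ τ} (hg : IsPolynomialMap g)
    (hf : IsPolynomialMap f) : IsPolynomialMap (g ∘ f) := by
  obtain ⟨q, hq⟩ := hg
  obtain ⟨p, hp⟩ := hf
  refine ⟨fun i => bind₁ p (q i), fun x i => ?_⟩
  simp only [Function.comp_apply, hq, hp]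
  exact (eval₂Hom_bind₁ (RingHom.id ℝ) _ p (q i)).symm

lemma iterate {f : EuclideanSpace ℝ σ → EuclideanSpace ℝ σ} (hf : IsPolynomialMap f) :
    ∀ k, IsPolynomialMap f^[k]
  | 0 => id
  | k + 1 => (iterate hf k).comp hf

end IsPolynomialMap

noncomputable def tripleSin (r : ℝ) : ℝ := 3 * r - 4 * r ^ 3

lemma tripleSin_sin (θ : ℝ) : tripleSin (Real.sin θ) = Real.sin (3 * θ) :=
  (Real.sin_three_mul θ).symm

lemma continuous_tripleSin : Continuous tripleSin := by unfold tripleSin; fun_prop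

@[simp] lemma tripleSin_zero : tripleSin 0 = 0 := by simp [tripleSin]

lemma abs_tripleSin_le_one {r : ℝ} (hr : |r| ≤ 1) : |tripleSin r| ≤ 1 := by
  rw [abs_le] at hr
  rw [← Real.sin_arcsin hr.1 hr.2, tripleSin_sin]
  exact Real.abs_sin_le_one _

lemma two_mul_le_tripleSin {r : ℝ} (h0 : 0 ≤ r) (h1 : r ≤ 1 / 2) : 2 * r ≤ tripleSin r := by
  unfold tripleSin
  have h12 : 0 ≤ (1 - 2 * r) * (1 + 2 * r) := mul_nonneg (by linarith) (by linarith)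
  nlinarith [mul_nonneg h0 h12]

lemma exists_two_mul_le_tripleSin_eq {r : ℝ} (h0 : 0 ≤ r) (h1 : r ≤ 1) :
    ∃ s, 0 ≤ s ∧ 2 * s ≤ r ∧ tripleSin s = r := by
  have hr : r ∈ Icc (tripleSin 0) (tripleSin (1 / 2)) := by
    norm_num [tripleSin]; exact ⟨h0, h1⟩
  obtain ⟨s, ⟨hs0, hs1⟩, rfl⟩ :=
    intermediate_value_Icc (by norm_num) continuous_tripleSin.continuousOn hr
  exact ⟨s, hs0, two_mul_le_tripleSin hs0 hs1, rfl⟩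

lemma exists_iterate_tripleSin_eq_one (k : ℕ) :
    ∃ R, 0 ≤ R ∧ R ≤ (1 / 2) ^ k ∧ tripleSin^[k] R = 1 := by
  induction k with
  | zero => exact ⟨1, by norm_num⟩
  | succ k ih =>
    obtain ⟨R, hR0, hRk, hR1⟩ := ih
    obtain ⟨s, hs0, hsR, rfl⟩ :=
      exists_two_mul_le_tripleSin_eq hR0 (hRk.trans (pow_le_one₀ (by norm_num) (by norm_num)))
    refine ⟨s, hs0, ?_, hR1⟩
    rw [pow_succ]; linarith

section Radial

variable {E : Type*} [NormedAddCommGroup E] [NormedSpace ℝ E]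

noncomputable def tripleSinRadial (v : E) : E := (3 - 4 * ‖v‖ ^ 2) • v

@[simp] lemma tripleSinRadial_zero : tripleSinRadial (0 : E) = 0 := by simp [tripleSinRadial]

lemma norm_tripleSinRadial (v : E) : ‖tripleSinRadial v‖ = |tripleSin ‖v‖| := by
  rw [tripleSinRadial, norm_smul, Real.norm_eq_abs, tripleSin, ← abs_norm v, ← abs_mul,
    abs_norm]
  ring_nf

lemma mapsTo_tripleSinRadial_closedBall :
    MapsTo tripleSinRadial (closedBall (0 : E) 1) (closedBall 0 1) := fun v hv => by
  rw [mem_closedBall_zero_iff] at hv ⊢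
  rw [norm_tripleSinRadial]
  exact abs_tripleSin_le_one (by rwa [abs_norm])

lemma iterate_tripleSinRadial_smul {u : E} (hu : ‖u‖ = 1) (k : ℕ) (t : ℝ) :
    tripleSinRadial^[k] (t • u) = tripleSin^[k] t • u := by
  induction k generalizing t with
  | zero => rfl
  | succ k ih =>
    have h1 : tripleSinRadial (t • u) = tripleSin t • u := by
      rw [tripleSinRadial, norm_smul, hu, smul_smul, Real.norm_eq_abs, mul_one, sq_abs, tripleSin]
      ring_nf
    rw [Function.iterate_succ_apply, h1, ih, Function.iterate_succ_apply]

lemma exists_iterate_tripleSinRadial_eq {k : ℕ} {R : ℝ} (hR : 0 ≤ R)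
    (hR1 : tripleSin^[k] R = 1) {w : E} (hw : ‖w‖ ≤ 1) :
    ∃ v, ‖v‖ ≤ R ∧ tripleSinRadial^[k] v = w := by
  rcases eq_or_ne w 0 with rfl | hw0
  · exact ⟨0, by simpa using hR, Function.iterate_fixed tripleSinRadial_zero k⟩
  have hnorm : ‖w‖ ∈ Icc (tripleSin^[k] 0) (tripleSin^[k] R) := by
    rw [Function.iterate_fixed tripleSin_zero, hR1]; exact ⟨norm_nonneg w, hw⟩
  obtain ⟨r, ⟨hr0, hrR⟩, hr⟩ :=
    intermediate_value_Icc hR (continuous_tripleSin.iterate k).continuousOn hnorm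
  have hw0' : ‖w‖ ≠ 0 := norm_ne_zero_iff.mpr hw0
  have hu : ‖‖w‖⁻¹ • w‖ = 1 := by
    rw [norm_smul, norm_inv, norm_norm, inv_mul_cancel₀ hw0']
  refine ⟨r • ‖w‖⁻¹ • w, ?_, ?_⟩
  · rwa [norm_smul, hu, mul_one, Real.norm_of_nonneg hr0]
  · rw [iterate_tripleSinRadial_smul hu, hr, smul_inv_smul₀ hw0']

end Radial

section Product

variable {ι : Type*} [Fintype ι] {E : ι → Type*} [∀ i, NormedAddCommGroup (E i)]
  [∀ i, NormedSpace ℝ (E i)]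

noncomputable def blockTripleSinRadial (b : PiLp 2 E) : PiLp 2 E :=
  WithLp.toLp 2 fun i => tripleSinRadial (b i)

omit [Fintype ι] in
lemma iterate_blockTripleSinRadial_apply (k : ℕ) (b : PiLp 2 E) (i : ι) :
    blockTripleSinRadial^[k] b i = tripleSinRadial^[k] (b i) := by
  induction k generalizing b with
  | zero => rfl
  | succ k ih => rw [Function.iterate_succ_apply, ih, Function.iterate_succ_apply]; rfl

theorem image_iterate_blockTripleSinRadial_closedBall :
    blockTripleSinRadial^[Fintype.card ι] '' closedBall (0 : PiLp 2 E) 1 =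
      {b | ∀ i, ‖b i‖ ≤ 1} := by
  set k := Fintype.card ι
  apply Subset.antisymm
  · rintro _ ⟨b, hb, rfl⟩ i
    rw [iterate_blockTripleSinRadial_apply, ← mem_closedBall_zero_iff]
    refine (mapsTo_tripleSinRadial_closedBall.iterate k) ?_
    rw [mem_closedBall_zero_iff] at hb ⊢
    exact (PiLp.norm_apply_le b i).trans hb
  · intro w hw
    obtain ⟨R, hR0, hRk, hR1⟩ := exists_iterate_tripleSin_eq_one k
    choose v hvR hvw using fun i => exists_iterate_tripleSinRadial_eq hR0 hR1 (hw i)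
    refine ⟨WithLp.toLp 2 v, ?_, PiLp.ext fun i => ?_⟩
    · rw [mem_closedBall_zero_iff, ← sq_le_one_iff₀ (norm_nonneg _), PiLp.norm_sq_eq_of_L2]
      calc ∑ i, ‖v i‖ ^ 2 ≤ ∑ _i : ι, ((1 / 2) ^ k) ^ 2 :=
            Finset.sum_le_sum fun i _ => pow_le_pow_left₀ (norm_nonneg _) ((hvR i).trans hRk) 2
        _ = k * ((1 / 2) ^ k) ^ 2 := by rw [Finset.sum_const, Finset.card_univ, nsmul_eq_mul]
        _ ≤ 1 := by
          rw [← pow_mul, mul_comm k, pow_mul, one_div, inv_pow, inv_pow, ← div_eq_mul_inv,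
            div_le_one (by positivity)]
          norm_num
          exact_mod_cast (Nat.lt_pow_self (by norm_num)).le
    · rw [iterate_blockTripleSinRadial_apply]; exact hvw i

end Product

section Euclidean

variable {ι : Type} [Fintype ι] {κ : ι → Type} [∀ i, Fintype (κ i)]

lemma EuclideanSpace.norm_le_one_iff_sum_sq_le_one {σ : Type} [Fintype σ]
    (x : EuclideanSpace ℝ σ) : ‖x‖ ≤ 1 ↔ ∑ j, x j ^ 2 ≤ 1 := by
  rw [← sq_le_one_iff₀ (norm_nonneg x), EuclideanSpace.real_norm_sq_eq]

variable (κ) in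
noncomputable abbrev sigmaCurry :
    EuclideanSpace ℝ (Σ i, κ i) ≃ₗᵢ[ℝ] PiLp 2 fun i => EuclideanSpace ℝ (κ i) :=
  LinearIsometryEquiv.piLpCurry ℝ 2 fun _ _ => ℝ

noncomputable def sigmaTripleSinRadial (x : EuclideanSpace ℝ (Σ i, κ i)) :
    EuclideanSpace ℝ (Σ i, κ i) :=
  (sigmaCurry κ).symm (blockTripleSinRadial (sigmaCurry κ x))

lemma sigmaTripleSinRadial_apply (x : EuclideanSpace ℝ (Σ i, κ i)) (t : Σ i, κ i) :
    sigmaTripleSinRadial x t = (3 - 4 * ∑ j, x ⟨t.1, j⟩ ^ 2) * x t := by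
  simp only [sigmaTripleSinRadial, blockTripleSinRadial, tripleSinRadial,
    LinearIsometryEquiv.piLpCurry_apply, EuclideanSpace.real_norm_sq_eq,
    LinearIsometryEquiv.piLpCurry_symm_apply, PiLp.smul_apply, smul_eq_mul]
  rfl

lemma isPolynomialMap_sigmaTripleSinRadial :
    IsPolynomialMap (sigmaTripleSinRadial : EuclideanSpace ℝ (Σ i, κ i) → _) := by
  refine ⟨fun t => (C 3 - C 4 * ∑ j, X ⟨t.1, j⟩ ^ 2) * X t, fun x t => ?_⟩
  simp [sigmaTripleSinRadial_apply]

lemma iterate_sigmaTripleSinRadial (k : ℕ) :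
    (sigmaTripleSinRadial : EuclideanSpace ℝ (Σ i, κ i) → _)^[k] =
      (sigmaCurry κ).symm ∘ blockTripleSinRadial^[k] ∘ sigmaCurry κ := by
  have h : Function.Semiconj (sigmaCurry κ).symm blockTripleSinRadial sigmaTripleSinRadial :=
    fun b => by simp [sigmaTripleSinRadial]
  funext x
  simpa using (h.iterate_right k (sigmaCurry κ x)).symm

end Euclidean

theorem product_of_balls_is_poly_image_ball_general (ℓ : ℕ)
    (N : Fin ℓ → ℕ) :
    ∃ f : EuclideanSpace ℝ ((i : Fin ℓ) × Fin (N i)) →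
            EuclideanSpace ℝ ((i : Fin ℓ) × Fin (N i)),
      IsPolynomialMap f ∧
      f '' Metric.closedBall 0 1 =
        {x : EuclideanSpace ℝ ((i : Fin ℓ) × Fin (N i)) |
          ∀ i : Fin ℓ, ∑ j : Fin (N i), (x ⟨i, j⟩) ^ 2 ≤ 1} := by
  refine ⟨sigmaTripleSinRadial^[Fintype.card (Fin ℓ)],
    isPolynomialMap_sigmaTripleSinRadial.iterate _, ?_⟩
  rw [iterate_sigmaTripleSinRadial, image_comp, image_comp, LinearIsometryEquiv.image_closedBall,
    map_zero, image_iterate_blockTripleSinRadial_closedBall,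
    LinearIsometryEquiv.image_eq_preimage_symm, LinearIsometryEquiv.symm_symm]
  ext x
  simp only [mem_preimage, mem_ofPred_eq, EuclideanSpace.norm_le_one_iff_sum_sq_le_one]
  rfl

/-- A product of closed unit balls `B̄_{n₁} × ⋯ × B̄_{n_ℓ} ⊆ ℝⁿ` (where
`n = n₁ + ⋯ + n_ℓ`, the coordinates of `ℝⁿ` being grouped into blocks of sizes
`n₁, …, n_ℓ`) is the image of the closed unit ball `B̄ₙ` under a polynomial map
`ℝⁿ → ℝⁿ`. -/
theorem product_of_balls_is_poly_image_ball (ℓ : ℕ) (hℓ : 1 ≤ ℓ)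
    (N : Fin ℓ → ℕ) (hN : ∀ i, 1 ≤ N i) :
    ∃ f : EuclideanSpace ℝ ((i : Fin ℓ) × Fin (N i)) →
            EuclideanSpace ℝ ((i : Fin ℓ) × Fin (N i)),
      IsPolynomialMap f ∧
      f '' Metric.closedBall 0 1 =
        {x : EuclideanSpace ℝ ((i : Fin ℓ) × Fin (N i)) |
          ∀ i : Fin ℓ, ∑ j : Fin (N i), (x ⟨i, j⟩) ^ 2 ≤ 1} :=
  product_of_balls_is_poly_image_ball_general ℓ N
end

section
/- Let f : ℝ^m → ℝ^n be a polynomial map and set S := f(B̄_m). Then there exists a polynomial map F : ℝ^{m(n+1)+n} → ℝ^n such that F(B̄_{m(n+1)+n}) equals the convex hull of S. -/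
open Polynomial Set Metric

namespace Polynomial.Chebyshev

theorem exists_T_two_mul_add_one_eq_X_mul_comp (R : Type*) [CommRing R] (j : ℕ) :
    ∃ q : R[X], T R (2 * j + 1) = X * q.comp (X ^ 2) := by
  induction j with
  | zero => exact ⟨1, by simp⟩
  | succ j ih =>
    obtain ⟨q, hq⟩ := ih
    refine ⟨2 * (T R (j + 1)).comp (2 * X - 1) - q, ?_⟩
    have hT : T R (2 * ((j + 1 : ℕ) : ℤ)) = (T R (j + 1)).comp (2 * X ^ 2 - 1) := by
      rw [show 2 * ((j + 1 : ℕ) : ℤ) = (j + 1) * 2 by push_cast; ring, T_mul, T_two]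
    rw [show 2 * ((j + 1 : ℕ) : ℤ) + 1 = 2 * j + 1 + 2 by push_cast; ring, T_add_two,
      show (2 * j + 1 + 1 : ℤ) = 2 * ((j + 1 : ℕ) : ℤ) by push_cast; ring, hT, hq]
    simp only [sub_comp, mul_comp, comp_assoc, ofNat_comp, X_comp, one_comp]
    push_cast
    ring

end Polynomial.Chebyshev

open Polynomial.Chebyshev in
theorem exists_odd_polynomial_bounded_eq_one_near_zero {ε : ℝ} (hε : 0 < ε) :
    ∃ q : ℝ[X], (∀ s, |s| ≤ 1 → |s * q.eval (s ^ 2)| ≤ 1) ∧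
      ∃ s₀ ∈ Icc 0 ε, s₀ * q.eval (s₀ ^ 2) = 1 := by
  obtain ⟨L, hL⟩ := exists_nat_gt (Real.pi / (2 * ε))
  obtain ⟨q, hq⟩ := exists_T_two_mul_add_one_eq_X_mul_comp ℝ (2 * L)
  have hT : ∀ s, s * q.eval (s ^ 2) = (T ℝ (4 * L + 1 : ℕ)).eval s := fun s => by
    rw [show ((4 * L + 1 : ℕ) : ℤ) = 2 * ((2 * L : ℕ) : ℤ) + 1 by push_cast; ring, hq]
    simp
  -- `s₀ = cos (π / 2 - π / (2K))` with `K = 4L + 1`, so that `K (π / 2 - π / (2K)) = 2πL`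
  refine ⟨q, fun s hs => ?_, Real.sin (Real.pi / (2 * (4 * L + 1))), ⟨?_, ?_⟩, ?_⟩
  · obtain ⟨θ, -, rfl⟩ := Real.surjOn_cos (abs_le.mp hs)
    rw [hT, T_real_cos]
    exact Real.abs_cos_le_one _
  · exact Real.sin_nonneg_of_nonneg_of_le_pi (by positivity)
      (div_le_self Real.pi_pos.le (by linarith))
  · refine (Real.sin_le (by positivity)).trans ?_
    rw [div_le_iff₀ (by positivity)]
    rw [div_lt_iff₀ (by positivity)] at hL
    nlinarith
  · rw [hT, ← Real.cos_pi_div_two_sub, T_real_cos]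
    convert Real.cos_nat_mul_two_pi L using 2
    push_cast
    field_simp
    ring

section Radial

variable {E : Type*} [NormedAddCommGroup E] [NormedSpace ℝ E] {q : ℝ[X]}

noncomputable def radialMap (q : ℝ[X]) (x : E) : E := q.eval (‖x‖ ^ 2) • x

theorem norm_radialMap (x : E) : ‖radialMap q x‖ = |‖x‖ * q.eval (‖x‖ ^ 2)| := by
  rw [radialMap, norm_smul, Real.norm_eq_abs, abs_mul, abs_norm, mul_comm]

theorem radialMap_smul_of_norm_eq_one {u : E} (hu : ‖u‖ = 1) {s : ℝ} (hs : 0 ≤ s) :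
    radialMap q (s • u) = (s * q.eval (s ^ 2)) • u := by
  rw [radialMap, norm_smul, hu, mul_one, Real.norm_of_nonneg hs, smul_smul, mul_comm]

theorem mapsTo_radialMap_closedBall (hq : ∀ s, |s| ≤ 1 → |s * q.eval (s ^ 2)| ≤ 1) :
    MapsTo (radialMap q) (closedBall (0 : E) 1) (closedBall 0 1) := by
  intro x hx
  rw [mem_closedBall_zero_iff] at hx ⊢
  rw [norm_radialMap]
  exact hq _ (by rwa [abs_norm])

theorem closedBall_subset_image_radialMap {s₀ : ℝ} (hs₀ : 0 ≤ s₀)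
    (hq : s₀ * q.eval (s₀ ^ 2) = 1) : closedBall (0 : E) 1 ⊆ radialMap q '' closedBall 0 s₀ := by
  intro y hy
  rw [mem_closedBall_zero_iff] at hy
  rcases eq_or_ne y 0 with rfl | hy0
  · exact ⟨0, by simp [hs₀], by simp [radialMap]⟩
  have hcont : ContinuousOn (fun s => s * q.eval (s ^ 2)) (Icc 0 s₀) := by fun_prop
  obtain ⟨s, hs, hsy : s * q.eval (s ^ 2) = ‖y‖⟩ := intermediate_value_Icc hs₀ hcont
    (show ‖y‖ ∈ Icc _ _ by simpa [hq] using hy)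
  have hu : ‖‖y‖⁻¹ • y‖ = 1 := norm_smul_inv_norm hy0
  refine ⟨s • ‖y‖⁻¹ • y, ?_, ?_⟩
  · rw [mem_closedBall_zero_iff, norm_smul, hu, mul_one, Real.norm_of_nonneg hs.1]
    exact hs.2
  · rw [radialMap_smul_of_norm_eq_one hu hs.1, hsy, smul_inv_smul₀ (norm_ne_zero_iff.mpr hy0)]

theorem radialMap_image_closedBall (hq : ∀ s, |s| ≤ 1 → |s * q.eval (s ^ 2)| ≤ 1)
    {s₀ r : ℝ} (hs₀ : 0 ≤ s₀) (hqs₀ : s₀ * q.eval (s₀ ^ 2) = 1) (hs₀r : s₀ ≤ r) (hr : r ≤ 1) :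
    radialMap q '' closedBall (0 : E) r = closedBall 0 1 :=
  ((image_mono (closedBall_subset_closedBall hr)).trans
      (mapsTo_radialMap_closedBall hq).image_subset).antisymm
    ((closedBall_subset_image_radialMap hs₀ hqs₀).trans
      (image_mono (closedBall_subset_closedBall hs₀r)))

end Radial

theorem MvPolynomial.aeval_fn_apply {σ X : Type*} (g : σ → X → ℝ) (p : MvPolynomial σ ℝ) (x : X) :
    MvPolynomial.aeval g p x = MvPolynomial.eval (fun i => g i x) p := by
  simpa using congrArg (· p) (MvPolynomial.comp_aeval g (Pi.evalAlgHom ℝ (fun _ => ℝ) x))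

noncomputable def mvPolynomialFunctions (σ : Type) : Subalgebra ℝ (EuclideanSpace ℝ σ → ℝ) :=
  (MvPolynomial.aeval fun i (x : EuclideanSpace ℝ σ) => x i).range

namespace mvPolynomialFunctions

variable {σ τ : Type}

theorem aeval_mem {g : τ → EuclideanSpace ℝ σ → ℝ} (hg : ∀ j, g j ∈ mvPolynomialFunctions σ)
    (p : MvPolynomial τ ℝ) : MvPolynomial.aeval g p ∈ mvPolynomialFunctions σ := by
  have : (MvPolynomial.aeval g).range ≤ mvPolynomialFunctions σ := by
    rw [MvPolynomial.aeval_range]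
    exact Algebra.adjoin_le (range_subset_iff.mpr hg)
  exact this ⟨p, rfl⟩

theorem apply_mem (i : σ) : (fun x : EuclideanSpace ℝ σ => x i) ∈ mvPolynomialFunctions σ :=
  ⟨MvPolynomial.X i, MvPolynomial.aeval_X _ _⟩

theorem norm_sq_mem [Fintype σ] :
    (fun x : EuclideanSpace ℝ σ => ‖x‖ ^ 2) ∈ mvPolynomialFunctions σ := by
  have h : (fun x : EuclideanSpace ℝ σ => ‖x‖ ^ 2) = ∑ i, (fun x => x i) ^ 2 := by
    ext x
    simp [EuclideanSpace.real_norm_sq_eq]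
  rw [h]
  exact Subalgebra.sum_mem _ fun i _ => Subalgebra.pow_mem _ (apply_mem i) 2

theorem polynomial_eval_mem {g : EuclideanSpace ℝ σ → ℝ} (hg : g ∈ mvPolynomialFunctions σ)
    (q : ℝ[X]) : (fun x => q.eval (g x)) ∈ mvPolynomialFunctions σ := by
  have h := (Polynomial.aeval (⟨g, hg⟩ : mvPolynomialFunctions σ) q).2
  rw [Polynomial.aeval_subalgebra_coe] at h
  convert h using 1
  ext x
  simp [Polynomial.aeval_fn_apply]

end mvPolynomialFunctions

section PolynomialMaps

variable {σ τ υ : Type}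

theorem isPolynomialMap_iff {f : EuclideanSpace ℝ σ → EuclideanSpace ℝ τ} :
    IsPolynomialMap f ↔ ∀ j, (fun x => f x j) ∈ mvPolynomialFunctions σ := by
  simp only [IsPolynomialMap, mvPolynomialFunctions, AlgHom.mem_range, funext_iff,
    MvPolynomial.aeval_fn_apply]
  constructor
  · rintro ⟨p, hp⟩ j
    exact ⟨p j, fun x => (hp x j).symm⟩
  · intro h
    choose p hp using h
    exact ⟨p, fun x j => (hp j x).symm⟩

theorem IsPolynomialMap.comp_mem {f : EuclideanSpace ℝ σ → EuclideanSpace ℝ τ}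
    (hf : IsPolynomialMap f) {g : EuclideanSpace ℝ τ → ℝ} (hg : g ∈ mvPolynomialFunctions τ) :
    g ∘ f ∈ mvPolynomialFunctions σ := by
  obtain ⟨p, rfl⟩ := hg
  convert mvPolynomialFunctions.aeval_mem (isPolynomialMap_iff.mp hf) p using 1
  ext x
  simp [MvPolynomial.aeval_fn_apply]

theorem IsPolynomialMap.comp_s10 {g : EuclideanSpace ℝ τ → EuclideanSpace ℝ υ}
    {f : EuclideanSpace ℝ σ → EuclideanSpace ℝ τ} (hg : IsPolynomialMap g)
    (hf : IsPolynomialMap f) : IsPolynomialMap (g ∘ f) :=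
  isPolynomialMap_iff.mpr fun j => hf.comp_mem (isPolynomialMap_iff.mp hg j)

theorem isPolynomialMap_toLp_comp (e : τ → σ) :
    IsPolynomialMap fun x : EuclideanSpace ℝ σ => WithLp.toLp 2 fun j => x (e j) :=
  ⟨fun j => MvPolynomial.X (e j), by simp⟩

theorem isPolynomialMap_radialMap [Fintype σ] (q : ℝ[X]) :
    IsPolynomialMap (radialMap q : EuclideanSpace ℝ σ → EuclideanSpace ℝ σ) :=
  isPolynomialMap_iff.mpr fun i => Subalgebra.mul_mem _
    (mvPolynomialFunctions.polynomial_eval_mem mvPolynomialFunctions.norm_sq_mem q)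
    (mvPolynomialFunctions.apply_mem i)

theorem isPolynomialMap_sum_smul {ι : Type*} [Fintype ι] {a : ι → EuclideanSpace ℝ σ → ℝ}
    {b : ι → EuclideanSpace ℝ σ → EuclideanSpace ℝ τ} (ha : ∀ i, a i ∈ mvPolynomialFunctions σ)
    (hb : ∀ i, IsPolynomialMap (b i)) : IsPolynomialMap fun x => ∑ i, a i x • b i x := by
  refine isPolynomialMap_iff.mpr fun j => ?_
  convert Subalgebra.sum_mem _ (t := Finset.univ) fun i _ =>
    Subalgebra.mul_mem _ (ha i) (isPolynomialMap_iff.mp (hb i) j) using 1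
  ext x
  simp

end PolynomialMaps

section BlockSplit

variable {ν ι κ δ : Type} [Fintype ν] [Fintype ι] [Fintype κ] [Fintype δ]

noncomputable def blockSplit (e : ν ⊕ (ι × κ) ≃ δ) (z : EuclideanSpace ℝ δ) :
    EuclideanSpace ℝ ν × (ι → EuclideanSpace ℝ κ) :=
  (WithLp.toLp 2 fun j => z (e (.inl j)), fun i => WithLp.toLp 2 fun k => z (e (.inr (i, k))))

theorem norm_sq_eq_blockSplit (e : ν ⊕ (ι × κ) ≃ δ) (z : EuclideanSpace ℝ δ) :
    ‖z‖ ^ 2 = ‖(blockSplit e z).1‖ ^ 2 + ∑ i, ‖(blockSplit e z).2 i‖ ^ 2 := by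
  simp only [EuclideanSpace.real_norm_sq_eq, blockSplit]
  rw [← e.sum_comp, Fintype.sum_sum_type, Fintype.sum_prod_type]

theorem blockSplit_image_closedBall_subset (e : ν ⊕ (ι × κ) ≃ δ) :
    blockSplit e '' closedBall 0 1 ⊆ closedBall 0 1 ×ˢ univ.pi fun _ => closedBall 0 1 := by
  rintro _ ⟨z, hz, rfl⟩
  rw [mem_closedBall_zero_iff] at hz
  have hsum := norm_sq_eq_blockSplit e z
  have hz2 : ‖z‖ ^ 2 ≤ 1 := pow_le_one₀ (norm_nonneg z) hz
  have hblock : ∀ i, ‖(blockSplit e z).2 i‖ ^ 2 ≤ ∑ i, ‖(blockSplit e z).2 i‖ ^ 2 := fun i =>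
    Finset.single_le_sum (f := fun i => ‖(blockSplit e z).2 i‖ ^ 2) (fun _ _ => by positivity)
      (Finset.mem_univ i)
  refine ⟨?_, fun i _ => ?_⟩ <;> rw [mem_closedBall_zero_iff, ← sq_le_one_iff₀ (norm_nonneg _)]
  · nlinarith [Finset.sum_nonneg fun i (_ : i ∈ Finset.univ) => sq_nonneg ‖(blockSplit e z).2 i‖]
  · nlinarith [hblock i, sq_nonneg ‖(blockSplit e z).1‖]

theorem closedBall_prod_pi_subset_blockSplit_image (e : ν ⊕ (ι × κ) ≃ δ) {ε : ℝ}
    (hε : (Fintype.card ι + 1) * ε ^ 2 ≤ 1) :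
    closedBall 0 ε ×ˢ (univ.pi fun _ => closedBall 0 ε) ⊆ blockSplit e '' closedBall 0 1 := by
  rintro ⟨t, x⟩ ⟨ht, hx⟩
  set z : EuclideanSpace ℝ δ :=
    WithLp.toLp 2 fun a => Sum.elim (fun j => t j) (fun p => x p.1 p.2) (e.symm a)
  have hz : blockSplit e z = (t, x) := by
    simp [z, blockSplit]
  refine ⟨z, ?_, hz⟩
  have hnorm : ‖z‖ ^ 2 ≤ 1 := calc
    ‖z‖ ^ 2 = ‖t‖ ^ 2 + ∑ i, ‖x i‖ ^ 2 := by rw [norm_sq_eq_blockSplit e, hz]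
    _ ≤ ε ^ 2 + ∑ _i : ι, ε ^ 2 := by
      gcongr with i
      exacts [mem_closedBall_zero_iff.mp ht, mem_closedBall_zero_iff.mp (hx i (mem_univ i))]
    _ ≤ 1 := by simpa [add_mul, add_comm] using hε
  rw [mem_closedBall_zero_iff, ← sq_le_one_iff₀ (norm_nonneg _)]
  exact hnorm

end BlockSplit

noncomputable def simplexParam {n : ℕ} (t : EuclideanSpace ℝ (Fin n)) : Fin (n + 1) → ℝ :=
  Fin.snoc (fun i => t i ^ 2) (1 - ‖t‖ ^ 2)

theorem simplexParam_apply_mem {n : ℕ} (i : Fin (n + 1)) :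
    (fun t => simplexParam t i) ∈ mvPolynomialFunctions (Fin n) := by
  induction i using Fin.lastCases with
  | last =>
    simp only [simplexParam, Fin.snoc_last]
    exact Subalgebra.sub_mem _ (Subalgebra.one_mem _) mvPolynomialFunctions.norm_sq_mem
  | cast i =>
    simp only [simplexParam, Fin.snoc_castSucc]
    exact Subalgebra.pow_mem _ (mvPolynomialFunctions.apply_mem i) 2

theorem simplexParam_image_closedBall (n : ℕ) :
    simplexParam '' closedBall (0 : EuclideanSpace ℝ (Fin n)) 1 = stdSimplex ℝ (Fin (n + 1)) := by
  apply Subset.antisymm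
  · rintro _ ⟨t, ht, rfl⟩
    rw [mem_closedBall_zero_iff] at ht
    refine ⟨fun i => ?_, ?_⟩
    · induction i using Fin.lastCases with
      | last => simpa [simplexParam] using ht
      | cast i => simpa [simplexParam] using sq_nonneg (t i)
    · simp [simplexParam, Fin.sum_univ_castSucc, EuclideanSpace.real_norm_sq_eq]
  · rintro μ ⟨hμ0, hμ1⟩
    set t : EuclideanSpace ℝ (Fin n) := WithLp.toLp 2 fun i => √(μ i.castSucc)
    have ht : ‖t‖ ^ 2 = 1 - μ (Fin.last n) := by
      rw [← hμ1, Fin.sum_univ_castSucc, EuclideanSpace.real_norm_sq_eq]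
      simp [t, Real.sq_sqrt (hμ0 _)]
    refine ⟨t, ?_, funext fun i => ?_⟩
    · rw [mem_closedBall_zero_iff, ← sq_le_one_iff₀ (norm_nonneg _), ht]
      linarith [hμ0 (Fin.last n)]
    · induction i using Fin.lastCases with
      | last => simp [simplexParam, ht]
      | cast i => simp [simplexParam, t, Real.sq_sqrt (hμ0 _)]

theorem image_stdSimplex_prod_pi_eq_convexHull {𝕜 E ι : Type*} [Field 𝕜] [LinearOrder 𝕜]
    [IsStrictOrderedRing 𝕜] [AddCommGroup E] [Module 𝕜 E] [FiniteDimensional 𝕜 E] [Fintype ι]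
    (hι : Module.finrank 𝕜 E < Fintype.card ι) (S : Set E) :
    (fun p : (ι → 𝕜) × (ι → E) => ∑ i, p.1 i • p.2 i) '' (stdSimplex 𝕜 ι ×ˢ univ.pi fun _ => S) =
      convexHull 𝕜 S := by
  apply Subset.antisymm
  · rintro _ ⟨⟨w, y⟩, ⟨⟨hw0, hw1⟩, hy⟩, rfl⟩
    exact (convex_convexHull 𝕜 S).sum_mem (fun i _ => hw0 i) hw1
      fun i _ => subset_convexHull 𝕜 S (hy i (mem_univ i))
  · intro x hx
    obtain ⟨κ, _, y, w, hyS, hy, hw0, hw1, rfl⟩ := eq_pos_convex_span_of_mem_convexHull hx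
    obtain ⟨u⟩ : Nonempty (κ ↪ ι) := Function.Embedding.nonempty_of_card_le <| by
      have := hy.card_le_finrank_succ
      have := Submodule.finrank_le (vectorSpan 𝕜 (range y))
      omega
    obtain ⟨x₀, hx₀⟩ := (convexHull_nonempty_iff.mp ⟨_, hx⟩)
    -- pad the Carathéodory combination with zero weights on the indices outside `range u`
    refine ⟨(Function.extend u w 0, Function.extend u y fun _ => x₀), ⟨⟨fun i => ?_, ?_⟩, ?_⟩, ?_⟩
    · rcases em (∃ k, u k = i) with ⟨k, rfl⟩ | hi
      · simpa [u.injective.extend_apply] using (hw0 k).le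
      · simp [Function.extend_apply' _ _ _ hi]
    · rw [← hw1]
      exact (Fintype.sum_of_injective u u.injective w (Function.extend u w 0)
        (fun i hi => Function.extend_apply' _ _ _ hi)
        fun k => (u.injective.extend_apply ..).symm).symm
    · intro i _
      rcases em (∃ k, u k = i) with ⟨k, rfl⟩ | hi
      · simpa [u.injective.extend_apply] using hyS (mem_range_self k)
      · simpa [Function.extend_apply' _ _ _ hi] using hx₀
    · exact (Fintype.sum_of_injective u u.injective _ _
        (fun i hi => by simp [Function.extend_apply' _ _ _ hi])
        fun k => by simp [u.injective.extend_apply]).symm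

/-- If `S = f(B̄ₘ)` for a polynomial map `f : ℝᵐ → ℝⁿ`, then the convex hull of `S` is
the image of the closed unit ball `B̄_{m(n+1)+n}` under a polynomial map
`ℝ^{m(n+1)+n} → ℝⁿ`. -/
theorem convexHull_poly_image_ball (m n : ℕ)
    (f : EuclideanSpace ℝ (Fin m) → EuclideanSpace ℝ (Fin n))
    (hf : IsPolynomialMap f) :
    ∃ F : EuclideanSpace ℝ (Fin (m * (n + 1) + n)) → EuclideanSpace ℝ (Fin n),
      IsPolynomialMap F ∧
      F '' Metric.closedBall 0 1 = convexHull ℝ (f '' Metric.closedBall 0 1) := by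
  set ε : ℝ := 1 / (n + 2)
  have hε : (Fintype.card (Fin (n + 1)) + 1) * ε ^ 2 ≤ 1 := by
    simp only [ε, Fintype.card_fin]
    field_simp
    push_cast
    nlinarith
  have hε1 : ε ≤ 1 := div_le_one_of_le₀ (by linarith) (by positivity)
  obtain ⟨q, hq, s₀, ⟨hs₀, hs₀ε⟩, hqs₀⟩ :=
    exists_odd_polynomial_bounded_eq_one_near_zero (ε := ε) (by positivity)
  let e : Fin n ⊕ (Fin (n + 1) × Fin m) ≃ Fin (m * (n + 1) + n) :=
    Fintype.equivOfCardEq (by simp; ring)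
  let G := Prod.map (simplexParam ∘ radialMap (E := EuclideanSpace ℝ (Fin n)) q)
    (Pi.map fun (_ : Fin (n + 1)) => f ∘ radialMap q)
  have hG : ∀ r, ε ≤ r → r ≤ 1 → G '' (closedBall 0 r ×ˢ univ.pi fun _ => closedBall 0 r) =
      stdSimplex ℝ (Fin (n + 1)) ×ˢ univ.pi fun _ => f '' closedBall 0 1 := by
    intro r hεr hr
    simp only [G, prodMap_image_prod, piMap_image_univ_pi, image_comp,
      radialMap_image_closedBall hq hs₀ hqs₀ (hs₀ε.trans hεr) hr, simplexParam_image_closedBall]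
  have hGsplit : G '' (blockSplit e '' closedBall 0 1) =
      stdSimplex ℝ (Fin (n + 1)) ×ˢ univ.pi fun _ => f '' closedBall 0 1 :=
    ((image_mono (blockSplit_image_closedBall_subset e)).trans (hG 1 hε1 le_rfl).le).antisymm
      ((hG ε le_rfl hε1).ge.trans (image_mono (closedBall_prod_pi_subset_blockSplit_image e hε)))
  refine ⟨fun z => ∑ i, (G (blockSplit e z)).1 i • (G (blockSplit e z)).2 i, ?_, ?_⟩
  · exact isPolynomialMap_sum_smul
      (fun i => ((isPolynomialMap_radialMap q).comp_s10 (isPolynomialMap_toLp_comp _)).comp_mem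
        (simplexParam_apply_mem i))
      fun i => hf.comp_s10 ((isPolynomialMap_radialMap q).comp_s10 (isPolynomialMap_toLp_comp _))
  · rw [← image_stdSimplex_prod_pi_eq_convexHull (ι := Fin (n + 1)) (by simp), ← hGsplit,
      image_image, image_image]
end

section
/- Let α be a real number with 0 < α ≤ arcsin(√(2/3)) and set m := tan α. Define the triangle T(α) := {(x,y) ∈ ℝ² : 0 ≤ x ≤ 1 and |y| ≤ m·x} and the circular sector S(α) := {(x,y) ∈ ℝ² : x² + y² ≤ 1 and |y| ≤ m·x}. Then the polynomial map φ₀ : ℝ² → ℝ², (x,y) ↦ ((3 − x² − y²)/2)·(x, y), satisfies φ₀(T(α)) = S(α). -/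
set_option maxHeartbeats 1600000


/-- For `0 < α ≤ arcsin √(2/3)` with `m = tan α`, the polynomial map
`φ₀(x,y) = ((3 − x² − y²)/2)·(x,y)` maps the triangle
`T(α) = {0 ≤ x ≤ 1, |y| ≤ m·x}` onto the circular sector
`S(α) = {x² + y² ≤ 1, |y| ≤ m·x}`. -/
theorem triangle_onto_circular_sector (α : ℝ) (h0 : 0 < α)
    (h1 : α ≤ Real.arcsin (Real.sqrt (2 / 3))) :
    (fun p : ℝ × ℝ =>
        ((3 - p.1 ^ 2 - p.2 ^ 2) / 2 * p.1, (3 - p.1 ^ 2 - p.2 ^ 2) / 2 * p.2)) ''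
        {p : ℝ × ℝ | 0 ≤ p.1 ∧ p.1 ≤ 1 ∧ |p.2| ≤ Real.tan α * p.1} =
      {p : ℝ × ℝ | p.1 ^ 2 + p.2 ^ 2 ≤ 1 ∧ |p.2| ≤ Real.tan α * p.1} := by
  set m := Real.tan α with hm
  have hs23 : Real.sqrt (2 / 3) < 1 := by
    rw [show (1:ℝ) = Real.sqrt 1 by simp]
    exact Real.sqrt_lt_sqrt (by norm_num) (by norm_num)
  have hαlt : α < Real.pi / 2 :=
    lt_of_le_of_lt h1 (Real.arcsin_lt_pi_div_two.2 hs23)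
  have hm0 : 0 < m := Real.tan_pos_of_pos_of_lt_pi_div_two h0 hαlt
  -- tan (arcsin √(2/3)) = √2
  have htan : Real.tan (Real.arcsin (Real.sqrt (2 / 3))) = Real.sqrt 2 := by
    rw [Real.tan_arcsin, Real.sq_sqrt (by norm_num : (0:ℝ) ≤ 2/3)]
    rw [show (1:ℝ) - 2/3 = 1/3 by norm_num]
    rw [div_eq_iff (by positivity), ← Real.sqrt_mul (by norm_num)]
    norm_num
  have hmle : m ≤ Real.sqrt 2 := by
    rcases eq_or_lt_of_le h1 with h | h
    · rw [hm, h, htan]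
    · exact le_of_lt (htan ▸ Real.tan_lt_tan_of_nonneg_of_lt_pi_div_two h0.le
        (Real.arcsin_lt_pi_div_two.2 hs23) h)
  have hm2 : m ^ 2 ≤ 2 := by
    calc m ^ 2 ≤ Real.sqrt 2 ^ 2 := by
          exact pow_le_pow_left₀ hm0.le hmle 2
      _ = 2 := Real.sq_sqrt (by norm_num)
  ext ⟨u, v⟩
  simp only [Set.mem_image, Set.mem_setOf_eq, Prod.mk.injEq, Prod.exists]
  constructor
  · rintro ⟨x, y, ⟨hx0, hx1, hxy⟩, hu, hv⟩
    have hy2 : y ^ 2 ≤ m ^ 2 * x ^ 2 := by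
      have h := mul_self_le_mul_self (abs_nonneg y) hxy
      rw [abs_mul_abs_self] at h
      nlinarith [h]
    have hr3 : x ^ 2 + y ^ 2 ≤ 3 := by nlinarith [sq_nonneg x]
    have hlam : 0 ≤ (3 - x ^ 2 - y ^ 2) / 2 := by linarith
    constructor
    · rw [← hu, ← hv]
      nlinarith [sq_nonneg (x ^ 2 + y ^ 2 - 1), sq_nonneg x, sq_nonneg y]
    · rw [← hu, ← hv, abs_mul, abs_of_nonneg hlam]
      calc (3 - x ^ 2 - y ^ 2) / 2 * |y| ≤ (3 - x ^ 2 - y ^ 2) / 2 * (m * x) :=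
            mul_le_mul_of_nonneg_left hxy hlam
        _ = m * ((3 - x ^ 2 - y ^ 2) / 2 * x) := by ring
  · rintro ⟨hr, hang⟩
    have hu0 : 0 ≤ u := by
      by_contra hneg
      push_neg at hneg
      nlinarith [abs_nonneg v]
    set r' := Real.sqrt (u ^ 2 + v ^ 2) with hr'
    have hr'sq : r' ^ 2 = u ^ 2 + v ^ 2 := Real.sq_sqrt (by positivity)
    have hr'1 : r' ≤ 1 := by
      rw [hr', show (1:ℝ) = Real.sqrt 1 by simp]
      exact Real.sqrt_le_sqrt (by linarith)
    have hr'0 : 0 ≤ r' := Real.sqrt_nonneg _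
    rcases eq_or_lt_of_le hr'0 with h0' | h0'
    · -- r' = 0, so u = v = 0
      have huv : u ^ 2 + v ^ 2 = 0 := by rw [← hr'sq, ← h0']; ring
      have hu : u = 0 := by nlinarith [sq_nonneg u, sq_nonneg v]
      have hv : v = 0 := by nlinarith [sq_nonneg u, sq_nonneg v]
      exact ⟨0, 0, ⟨le_refl 0, by norm_num, by simp⟩, by simp [hu], by simp [hv]⟩
    · -- find r ∈ [0,1] with r(3-r²)/2 = r'
      have hcont : ContinuousOn (fun r : ℝ => r * (3 - r ^ 2) / 2) (Set.Icc 0 1) := by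
        fun_prop
      have hIVT := intermediate_value_Icc (by norm_num : (0:ℝ) ≤ 1) hcont
      have hmem : r' ∈ Set.Icc ((fun r : ℝ => r * (3 - r ^ 2) / 2) 0)
          ((fun r : ℝ => r * (3 - r ^ 2) / 2) 1) := by
        rw [Set.mem_Icc]
        refine ⟨?_, ?_⟩ <;> · norm_num; linarith
      obtain ⟨r, hrmem, hfr0⟩ := hIVT hmem
      have hfr : r * (3 - r ^ 2) / 2 = r' := hfr0
      obtain ⟨hrlo, hrhi⟩ := hrmem
      have hr'ne : r' ≠ 0 := ne_of_gt h0'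
      set c := r / r' with hc
      have hc0 : 0 ≤ c := div_nonneg hrlo hr'0
      have hur : u ≤ r' := by
        have h := Real.sqrt_le_sqrt (show u ^ 2 ≤ u ^ 2 + v ^ 2 by nlinarith [sq_nonneg v])
        rwa [Real.sqrt_sq hu0] at h
      refine ⟨c * u, c * v, ⟨mul_nonneg hc0 hu0, ?_, ?_⟩, ?_, ?_⟩
      · calc c * u ≤ c * r' := mul_le_mul_of_nonneg_left hur hc0
          _ = r := by rw [hc]; field_simp
          _ ≤ 1 := hrhi
      · rw [abs_mul, abs_of_nonneg hc0]
        calc c * |v| ≤ c * (m * u) := mul_le_mul_of_nonneg_left hang hc0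
          _ = m * (c * u) := by ring
      · have hkey : c ^ 2 * (u ^ 2 + v ^ 2) = r ^ 2 := by
          rw [← hr'sq, hc]
          field_simp
        have h2 : (3 - (c * u) ^ 2 - (c * v) ^ 2) / 2 = (3 - r ^ 2) / 2 := by
          have : (c * u) ^ 2 + (c * v) ^ 2 = r ^ 2 := by linear_combination hkey
          linarith
        rw [h2]
        have h3 : (3 - r ^ 2) / 2 * c = 1 := by
          rw [hc]
          field_simp
          linarith [hfr]
        linear_combination u * h3
      · have hkey : c ^ 2 * (u ^ 2 + v ^ 2) = r ^ 2 := by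
          rw [← hr'sq, hc]
          field_simp
        have h2 : (3 - (c * u) ^ 2 - (c * v) ^ 2) / 2 = (3 - r ^ 2) / 2 := by
          have : (c * u) ^ 2 + (c * v) ^ 2 = r ^ 2 := by linear_combination hkey
          linarith
        rw [h2]
        have h3 : (3 - r ^ 2) / 2 * c = 1 := by
          rw [hc]
          field_simp
          linarith [hfr]
        linear_combination v * h3
end

section
/- Let n ≥ 2 and let α be a real number with 0 < α < π/4. Write points of ℝ^n as x = (x₁, x̄) with x̄ ∈ ℝ^{n−1}. Define the n-dimensional hyperbolic sector H(α,n) := {x ∈ ℝ^n : ‖x̄‖ ≤ x₁·tan α and x₁² − ‖x̄‖² ≤ 1} and the n-dimensional hyperbolic segment G(α,n) := {x ∈ ℝ^n : ‖x̄‖ ≤ x₁·tan α, x₁² − ‖x̄‖² ≥ 1, and x₁ ≤ cos α/√(cos 2α)}. Then there exist polynomial maps f, g : ℝ^n → ℝ^n such that f(B̄_n) = H(α,n) and g(B̄_n) = G(α,n). -/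
open Finset

noncomputable section

/-- one-variable real polynomial functions -/
def Poly1 (g : ℝ → ℝ) : Prop := ∃ p : Polynomial ℝ, ∀ t, g t = p.eval t

namespace Poly1

lemma const (c : ℝ) : Poly1 (fun _ => c) := ⟨Polynomial.C c, by simp⟩

lemma id' : Poly1 (fun t => t) := ⟨Polynomial.X, by simp⟩

lemma add {f g} (hf : Poly1 f) (hg : Poly1 g) : Poly1 (fun t => f t + g t) := by
  obtain ⟨p, hp⟩ := hf; obtain ⟨q, hq⟩ := hg
  exact ⟨p + q, by simp [hp, hq]⟩

lemma mul {f g} (hf : Poly1 f) (hg : Poly1 g) : Poly1 (fun t => f t * g t) := by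
  obtain ⟨p, hp⟩ := hf; obtain ⟨q, hq⟩ := hg
  exact ⟨p * q, by simp [hp, hq]⟩

lemma sub {f g} (hf : Poly1 f) (hg : Poly1 g) : Poly1 (fun t => f t - g t) := by
  obtain ⟨p, hp⟩ := hf; obtain ⟨q, hq⟩ := hg
  exact ⟨p - q, by simp [hp, hq]⟩

lemma pow {f} (hf : Poly1 f) (k : ℕ) : Poly1 (fun t => f t ^ k) := by
  induction k with
  | zero => simpa using const 1
  | succ k ih => simpa [pow_succ] using ih.mul hf

end Poly1

/-- two-variable real polynomial functions -/
def P2 (f : ℝ → ℝ → ℝ) : Prop :=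
  ∃ F : MvPolynomial (Fin 2) ℝ,
    ∀ a b : ℝ, f a b = MvPolynomial.eval (fun i : Fin 2 => if i = 0 then a else b) F

namespace P2

lemma const (c : ℝ) : P2 (fun _ _ => c) := ⟨MvPolynomial.C c, by simp⟩

lemma fst : P2 (fun a _ => a) := ⟨MvPolynomial.X 0, by simp⟩

lemma snd : P2 (fun _ b => b) := ⟨MvPolynomial.X 1, by simp⟩

lemma add {f g} (hf : P2 f) (hg : P2 g) : P2 (fun a b => f a b + g a b) := by
  obtain ⟨p, hp⟩ := hf; obtain ⟨q, hq⟩ := hg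
  exact ⟨p + q, by simp [hp, hq]⟩

lemma mul {f g} (hf : P2 f) (hg : P2 g) : P2 (fun a b => f a b * g a b) := by
  obtain ⟨p, hp⟩ := hf; obtain ⟨q, hq⟩ := hg
  exact ⟨p * q, by simp [hp, hq]⟩

lemma sub {f g} (hf : P2 f) (hg : P2 g) : P2 (fun a b => f a b - g a b) := by
  obtain ⟨p, hp⟩ := hf; obtain ⟨q, hq⟩ := hg
  exact ⟨p - q, by simp [hp, hq]⟩

lemma pow {f} (hf : P2 f) (k : ℕ) : P2 (fun a b => f a b ^ k) := by
  induction k with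
  | zero => simpa using const 1
  | succ k ih => simpa [pow_succ] using ih.mul hf

lemma finsetSum {ι : Type*} (s : Finset ι) (f : ι → ℝ → ℝ → ℝ)
    (h : ∀ i ∈ s, P2 (f i)) : P2 (fun a b => ∑ i ∈ s, f i a b) := by
  classical
  induction s using Finset.induction_on with
  | empty => simpa using const 0
  | insert _ _ hx ih =>
    rename_i x s'
    have h1 : P2 (f x) := h x (mem_insert_self _ _)
    have h2 : P2 (fun a b => ∑ i ∈ s', f i a b) := ih (fun i hi => h i (mem_insert_of_mem hi))
    simpa [Finset.sum_insert hx] using h1.add h2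

lemma comp1 {g : ℝ → ℝ} {e : ℝ → ℝ → ℝ} (hg : Poly1 g) (he : P2 e) :
    P2 (fun a b => g (e a b)) := by
  obtain ⟨p, hp⟩ := hg
  have : ∀ a b, g (e a b) = ∑ i ∈ Finset.range (p.natDegree + 1), p.coeff i * (e a b) ^ i := by
    intro a b; rw [hp, Polynomial.eval_eq_sum_range]
  simp only [this]
  exact finsetSum _ _ (fun i _ => (const (p.coeff i)).mul (he.pow i))

end P2

/-- polynomial functions on EuclideanSpace -/
def PolyFun {n : ℕ} (g : EuclideanSpace ℝ (Fin n) → ℝ) : Prop :=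
  ∃ p : MvPolynomial (Fin n) ℝ, ∀ x, g x = MvPolynomial.eval (fun j => x j) p

namespace PolyFun

variable {n : ℕ}

lemma const (c : ℝ) : PolyFun (fun _ : EuclideanSpace ℝ (Fin n) => c) := ⟨MvPolynomial.C c, by simp⟩

lemma coord (j : Fin n) : PolyFun (fun x : EuclideanSpace ℝ (Fin n) => x j) := ⟨MvPolynomial.X j, by simp⟩

lemma add {f g : EuclideanSpace ℝ (Fin n) → ℝ} (hf : PolyFun f) (hg : PolyFun g) :
    PolyFun (fun x => f x + g x) := by
  obtain ⟨p, hp⟩ := hf; obtain ⟨q, hq⟩ := hg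
  exact ⟨p + q, by simp [hp, hq]⟩

lemma mul {f g : EuclideanSpace ℝ (Fin n) → ℝ} (hf : PolyFun f) (hg : PolyFun g) :
    PolyFun (fun x => f x * g x) := by
  obtain ⟨p, hp⟩ := hf; obtain ⟨q, hq⟩ := hg
  exact ⟨p * q, by simp [hp, hq]⟩

lemma pow {f : EuclideanSpace ℝ (Fin n) → ℝ} (hf : PolyFun f) (k : ℕ) :
    PolyFun (fun x => f x ^ k) := by
  induction k with
  | zero => simpa using const 1
  | succ k ih => simpa [pow_succ] using ih.mul hf

lemma finsetSum {ι : Type*} (s : Finset ι) (f : ι → EuclideanSpace ℝ (Fin n) → ℝ)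
    (h : ∀ i ∈ s, PolyFun (f i)) : PolyFun (fun x => ∑ i ∈ s, f i x) := by
  classical
  induction s using Finset.induction_on with
  | empty => simpa using const 0
  | insert _ _ hx ih =>
    rename_i y s'
    have h1 := h y (mem_insert_self _ _)
    have h2 := ih (fun i hi => h i (mem_insert_of_mem hi))
    simpa [Finset.sum_insert hx] using h1.add h2

lemma comp2 {f : ℝ → ℝ → ℝ} {u w : EuclideanSpace ℝ (Fin n) → ℝ}
    (hf : P2 f) (hu : PolyFun u) (hw : PolyFun w) :
    PolyFun (fun x => f (u x) (w x)) := by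
  obtain ⟨F, hF⟩ := hf
  have key : ∀ x, f (u x) (w x)
      = ∑ d ∈ F.support, MvPolynomial.coeff d F * ((u x) ^ d 0 * (w x) ^ d 1) := by
    intro x
    rw [hF, MvPolynomial.eval_eq']
    refine Finset.sum_congr rfl (fun d _ => ?_)
    congr 1
    rw [Fin.prod_univ_two]
    norm_num
  simp only [key]
  exact finsetSum _ _ (fun d _ =>
    (const (MvPolynomial.coeff d F)).mul ((hu.pow (d 0)).mul (hw.pow (d 1))))

end PolyFun

lemma isPolynomialMap_of {n : ℕ} (f : EuclideanSpace ℝ (Fin n) → EuclideanSpace ℝ (Fin n))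
    (h : ∀ i, PolyFun (fun x => f x i)) : IsPolynomialMap f :=
  ⟨fun i => (h i).choose, fun x i => (h i).choose_spec x⟩


section LIFT

variable {n : ℕ}

/-- sum of squares of coordinates away from i0 -/
def Srad {n : ℕ} (i0 : Fin n) (x : EuclideanSpace ℝ (Fin n)) : ℝ :=
  ∑ j ∈ Finset.univ.erase i0, x j ^ 2

lemma Srad_nonneg (i0 : Fin n) (x : EuclideanSpace ℝ (Fin n)) : 0 ≤ Srad i0 x :=
  Finset.sum_nonneg fun _ _ => sq_nonneg _

lemma mem_ball_iff (x : EuclideanSpace ℝ (Fin n)) :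
    x ∈ Metric.closedBall (0 : EuclideanSpace ℝ (Fin n)) 1 ↔ (∑ i, x i ^ 2) ≤ 1 := by
  rw [mem_closedBall_zero_iff, EuclideanSpace.norm_eq]
  have : ∀ i, ‖x i‖ ^ 2 = x i ^ 2 := fun i => by rw [Real.norm_eq_abs, sq_abs]
  simp only [this]
  exact Real.sqrt_le_one

lemma sum_split (i0 : Fin n) (x : EuclideanSpace ℝ (Fin n)) :
    (∑ i, x i ^ 2) = x i0 ^ 2 + Srad i0 x :=
  (Finset.add_sum_erase _ _ (Finset.mem_univ i0)).symm

/-- the lifted map -/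
def liftMap (i0 : Fin n) (p q : ℝ → ℝ → ℝ) :
    EuclideanSpace ℝ (Fin n) → EuclideanSpace ℝ (Fin n) :=
  fun x => WithLp.toLp 2 (fun i => if i = i0 then p (x i0) (Srad i0 x) else q (x i0) (Srad i0 x) * x i)

lemma liftMap_poly (i0 : Fin n) (p q : ℝ → ℝ → ℝ) (hp : P2 p) (hq : P2 q) :
    IsPolynomialMap (liftMap i0 p q) := by
  apply isPolynomialMap_of
  intro i
  have hS : PolyFun (fun x : EuclideanSpace ℝ (Fin n) => Srad i0 x) :=
    PolyFun.finsetSum _ _ (fun j _ => (PolyFun.coord j).pow 2)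
  by_cases h : i = i0
  · subst h
    simpa [liftMap] using PolyFun.comp2 hp (PolyFun.coord i) hS
  · simp only [liftMap, PiLp.toLp_apply, if_neg h]
    exact (PolyFun.comp2 hq (PolyFun.coord i0) hS).mul (PolyFun.coord i)

lemma lift_image (i0 i1 : Fin n) (hne : i1 ≠ i0)
    (p q : ℝ → ℝ → ℝ) (Cond : ℝ → ℝ → Prop)
    (h1 : ∀ x y : ℝ, x ^ 2 + y ^ 2 ≤ 1 → Cond (p x (y ^ 2)) |y * q x (y ^ 2)|)
    (h2 : ∀ a b : ℝ, 0 ≤ b → Cond a b →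
      ∃ x y : ℝ, x ^ 2 + y ^ 2 ≤ 1 ∧ p x (y ^ 2) = a ∧ y * q x (y ^ 2) = b) :
    liftMap i0 p q '' Metric.closedBall 0 1
      = {z : EuclideanSpace ℝ (Fin n) | Cond (z i0) (Real.sqrt (Srad i0 z))} := by
  ext z
  constructor
  · rintro ⟨x, hx, rfl⟩
    rw [mem_ball_iff, sum_split i0] at hx
    set y : ℝ := Real.sqrt (Srad i0 x) with hy
    have hy0 : 0 ≤ y := Real.sqrt_nonneg _
    have hy2 : y ^ 2 = Srad i0 x := Real.sq_sqrt (Srad_nonneg i0 x)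
    have hball : (x i0) ^ 2 + y ^ 2 ≤ 1 := by rw [hy2]; exact hx
    have hz0 : liftMap i0 p q x i0 = p (x i0) (y ^ 2) := by
      simp [liftMap, hy2]
    have hSz : Srad i0 (liftMap i0 p q x) = q (x i0) (y ^ 2) ^ 2 * y ^ 2 := by
      have step : ∀ j ∈ Finset.univ.erase i0,
          (liftMap i0 p q x j) ^ 2 = q (x i0) (y ^ 2) ^ 2 * x j ^ 2 := by
        intro j hj
        have hjne : j ≠ i0 := Finset.ne_of_mem_erase hj
        simp only [liftMap, PiLp.toLp_apply, if_neg hjne, mul_pow, hy2]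
      unfold Srad
      rw [Finset.sum_congr rfl step, ← Finset.mul_sum]
      congr 1
      rw [hy2]
      rfl
    have hsqrt : Real.sqrt (Srad i0 (liftMap i0 p q x)) = |y * q (x i0) (y ^ 2)| := by
      rw [hSz]
      have : q (x i0) (y ^ 2) ^ 2 * y ^ 2 = (y * q (x i0) (y ^ 2)) ^ 2 := by ring
      rw [this, Real.sqrt_sq_eq_abs]
    simp only [Set.mem_setOf_eq, hz0, hsqrt]
    exact h1 (x i0) y hball
  · intro hz
    simp only [Set.mem_setOf_eq] at hz
    set b : ℝ := Real.sqrt (Srad i0 z) with hb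
    have hb0 : 0 ≤ b := Real.sqrt_nonneg _
    have hb2 : b ^ 2 = Srad i0 z := Real.sq_sqrt (Srad_nonneg i0 z)
    obtain ⟨x, y, hxy, hpa, hqb⟩ := h2 (z i0) b hb0 hz
    by_cases hbz : b = 0
    · -- degenerate : all other coordinates of z vanish
      have hS0 : Srad i0 z = 0 := by rw [← hb2, hbz]; ring
      have hzj : ∀ j, j ≠ i0 → z j = 0 := by
        intro j hj
        have hmem : j ∈ Finset.univ.erase i0 := Finset.mem_erase.mpr ⟨hj, Finset.mem_univ j⟩
        have := (Finset.sum_eq_zero_iff_of_nonneg (fun j _ => sq_nonneg (z j))).mp hS0 j hmem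
        exact (pow_eq_zero_iff (two_ne_zero)).mp this
      set w : EuclideanSpace ℝ (Fin n) := WithLp.toLp 2 (fun i => if i = i0 then x else if i = i1 then y else 0)
        with hw
      have h1' : w i0 = x := by simp [hw]
      have h2' : Srad i0 w = y ^ 2 := by
        unfold Srad
        rw [Finset.sum_eq_single_of_mem i1 (Finset.mem_erase.mpr ⟨hne, Finset.mem_univ i1⟩)]
        · simp [hw, hne]
        · intro j hj hji1
          have hji0 : j ≠ i0 := Finset.ne_of_mem_erase hj
          simp [hw, hji0, hji1]
      refine ⟨w, ?_, ?_⟩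
      · rw [mem_ball_iff, sum_split i0, h1', h2']
        exact hxy
      · ext i
        by_cases hi : i = i0
        · subst hi
          simp only [liftMap, PiLp.toLp_apply, if_pos rfl, h1', h2']
          exact hpa
        · simp only [liftMap, PiLp.toLp_apply, if_neg hi, h1', h2']
          by_cases hi1 : i = i1
          · subst hi1
            have hwi : w i = y := by simp [hw, hi]
            rw [hwi]
            have : q x (y ^ 2) * y = 0 := by rw [mul_comm, hqb, hbz]
            rw [this]
            exact (hzj i hi).symm
          · have hwi : w i = 0 := by simp [hw, hi, hi1]
            rw [hwi, mul_zero]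
            exact (hzj i hi).symm
    · -- b ≠ 0
      set w : EuclideanSpace ℝ (Fin n) := WithLp.toLp 2 (fun i => if i = i0 then x else (y / b) * z i) with hw
      have h1' : w i0 = x := by simp [hw]
      have h2' : Srad i0 w = y ^ 2 := by
        unfold Srad
        have step : ∀ j ∈ Finset.univ.erase i0,
            w j ^ 2 = (y / b) ^ 2 * z j ^ 2 := by
          intro j hj
          have hjne : j ≠ i0 := Finset.ne_of_mem_erase hj
          simp [hw, hjne, mul_pow]
        rw [Finset.sum_congr rfl step, ← Finset.mul_sum]
        have hz2 : (∑ j ∈ Finset.univ.erase i0, z j ^ 2) = b ^ 2 := hb2.symm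
        rw [hz2]
        field_simp
      refine ⟨w, ?_, ?_⟩
      · rw [mem_ball_iff, sum_split i0, h1', h2']
        exact hxy
      · ext i
        by_cases hi : i = i0
        · subst hi
          simp only [liftMap, PiLp.toLp_apply, if_pos rfl, h1', h2']
          exact hpa
        · simp only [liftMap, PiLp.toLp_apply, if_neg hi, h1', h2']
          have hwi : w i = (y / b) * z i := by simp [hw, hi]
          rw [hwi, ← mul_assoc]
          have : q x (y ^ 2) * (y / b) = 1 := by
            rw [mul_comm, div_mul_eq_mul_div, hqb, div_self hbz]
          rw [this, one_mul]

end LIFT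

section PLANAR

open Set

lemma cubic_bound {y : ℝ} (hy : y ^ 2 ≤ 1) : (y * (3 - 4 * y ^ 2)) ^ 2 ≤ 1 := by
  nlinarith [mul_nonneg (sub_nonneg.mpr hy) (sq_nonneg (1 - 4 * y ^ 2))]

lemma abs_le_one_of_sq {b : ℝ} (hb : b ^ 2 ≤ 1) : |b| ≤ 1 := by
  nlinarith [abs_nonneg b, sq_abs b]

lemma rect_surj {d u w : ℝ} (hd : 0 < d) (hu0 : 0 ≤ u) (hud : u ≤ d) (hw : |w| ≤ 1) :
    ∃ x y : ℝ, x ^ 2 + y ^ 2 ≤ 1 ∧ 4 * d * x ^ 2 * (1 - x ^ 2) = u ∧ y * (3 - 4 * y ^ 2) = w := by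
  have hsq : Real.sqrt (1 / 2) ^ 2 = 1 / 2 := Real.sq_sqrt (by norm_num)
  have h05 : (0 : ℝ) ≤ Real.sqrt (1 / 2) := Real.sqrt_nonneg _
  have hcont1 : ContinuousOn (fun x : ℝ => 4 * d * x ^ 2 * (1 - x ^ 2))
      (Set.Icc 0 (Real.sqrt (1 / 2))) := by fun_prop
  have e0 : (fun x : ℝ => 4 * d * x ^ 2 * (1 - x ^ 2)) 0 = 0 := by norm_num
  have es : (fun x : ℝ => 4 * d * x ^ 2 * (1 - x ^ 2)) (Real.sqrt (1 / 2)) = d := by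
    simp only
    rw [hsq]
    ring
  have hmem1 : u ∈ Set.Icc ((fun x : ℝ => 4 * d * x ^ 2 * (1 - x ^ 2)) 0)
      ((fun x : ℝ => 4 * d * x ^ 2 * (1 - x ^ 2)) (Real.sqrt (1 / 2))) := by
    rw [e0, es]
    exact ⟨hu0, hud⟩
  obtain ⟨x, hxmem, hxval⟩ := intermediate_value_Icc h05 hcont1 hmem1
  have hcont2 : ContinuousOn (fun y : ℝ => y * (3 - 4 * y ^ 2))
      (Set.Icc (-(1 / 2) : ℝ) (1 / 2)) := by fun_prop
  have e1 : (fun y : ℝ => y * (3 - 4 * y ^ 2)) (-(1 / 2)) = -1 := by norm_num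
  have e2 : (fun y : ℝ => y * (3 - 4 * y ^ 2)) (1 / 2) = 1 := by norm_num
  have hmem2 : w ∈ Set.Icc ((fun y : ℝ => y * (3 - 4 * y ^ 2)) (-(1 / 2)))
      ((fun y : ℝ => y * (3 - 4 * y ^ 2)) (1 / 2)) := by
    rw [e1, e2]
    exact abs_le.mp hw
  obtain ⟨y, hymem, hyval⟩ := intermediate_value_Icc (by norm_num) hcont2 hmem2
  refine ⟨x, y, ?_, hxval, hyval⟩
  have hx2 : x ^ 2 ≤ 1 / 2 := by
    have := pow_le_pow_left₀ hxmem.1 hxmem.2 2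
    rwa [hsq] at this
  have hy2 : y ^ 2 ≤ 1 / 4 := by
    obtain ⟨hya, hyb⟩ := hymem
    nlinarith
  linarith

set_option maxHeartbeats 1000000 in
/-- the radial fold polynomial for the hyperbolic sector -/
lemma exists_h (L : ℝ) (hL : 1 ≤ L) :
    ∃ h : ℝ → ℝ, Poly1 h ∧ Continuous h ∧ (∀ m, 0 ≤ m → m ≤ L → 0 < h m) ∧
      (∀ m, 0 ≤ m → m ≤ L → m * h m ^ 2 ≤ 1) ∧
      (∃ m₀, 0 ≤ m₀ ∧ m₀ ≤ 1 ∧ m₀ * h m₀ ^ 2 = 1) := by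
  obtain ⟨N, hN⟩ := exists_nat_ge (8 * L)
  have hLpos : 0 < L := by linarith
  have hLne : L ≠ 0 := ne_of_gt hLpos
  set h₀ : ℝ → ℝ := fun m => (1 - m / (2 * L)) ^ N with hh₀
  set g₀ : ℝ → ℝ := fun m => m * h₀ m ^ 2 with hg₀
  have hcont₀ : Continuous h₀ := (continuous_const.sub (continuous_id.div_const _)).pow N
  have hcontg : Continuous g₀ := continuous_id'.mul (hcont₀.pow 2)
  have h₀pos : ∀ m : ℝ, m ≤ L → 0 < h₀ m := by
    intro m hm
    apply pow_pos
    have h2 : m / (2 * L) < 1 := (div_lt_one (by linarith)).mpr (by linarith)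
    linarith
  have hdec : ∀ m : ℝ, 1 < m → m ≤ L → g₀ m ≤ g₀ (m / 2) / 2 := by
    intro m hm1 hmL
    set a : ℝ := m / (4 * L) with ha
    have ha0 : 0 < a := div_pos (by linarith) (by linarith)
    have ha14 : a ≤ 1 / 4 := by
      rw [ha, div_le_iff₀ (by linarith : (0:ℝ) < 4 * L)]
      linarith
    have e1 : 1 - m / (2 * L) = 1 - 2 * a := by rw [ha]; field_simp; ring
    have e2 : 1 - m / 2 / (2 * L) = 1 - a := by rw [ha]; field_simp; ring
    have f1 : (0:ℝ) ≤ 1 - 2 * a := by linarith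
    have f1' : (0:ℝ) ≤ 1 - a := by linarith
    have f2 : 1 - 2 * a ≤ (1 - a) ^ 2 := by nlinarith [sq_nonneg a]
    have f3 : (1 - 2 * a) ^ (N * 2) ≤ ((1 - a) ^ 2) ^ (N * 2) := pow_le_pow_left₀ f1 f2 _
    have f3' : ((1 - a) ^ 2) ^ (N * 2) = ((1 - a) ^ (N * 2)) ^ 2 := by
      rw [← pow_mul, ← pow_mul, Nat.mul_comm 2 (N * 2)]
    have hXnn : (0:ℝ) ≤ (1 - a) ^ (N * 2) := pow_nonneg f1' _
    have f4 : 1 + ((N * 2 : ℕ) : ℝ) * a ≤ (1 + a) ^ (N * 2) :=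
      one_add_mul_le_pow (by linarith) (N * 2)
    have f5 : (1 - a) ^ (N * 2) * (1 + a) ^ (N * 2) ≤ 1 := by
      rw [← mul_pow]
      apply pow_le_one₀ (by nlinarith) (by nlinarith)
    have hNa : (4:ℝ) ≤ ((N * 2 : ℕ) : ℝ) * a := by
      push_cast
      have hNm : (N:ℝ) * 1 ≤ (N:ℝ) * m :=
        mul_le_mul_of_nonneg_left (by linarith) (by linarith [hN, hLpos])
      rw [ha]
      rw [show (N:ℝ) * 2 * (m / (4 * L)) = (N:ℝ) * m / (2 * L) by field_simp; ring]
      rw [le_div_iff₀ (by linarith : (0:ℝ) < 2 * L)]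
      nlinarith [hN]
    have f6 : (4:ℝ) ≤ (1 + a) ^ (N * 2) := by linarith
    have f7 : (1 - a) ^ (N * 2) ≤ 1 / 4 := by
      nlinarith [mul_nonneg hXnn (by linarith : (0:ℝ) ≤ (1 + a) ^ (N * 2) - 4)]
    have f8 : (1 - 2 * a) ^ (N * 2) ≤ 1 / 4 * (1 - a) ^ (N * 2) := by
      calc (1 - 2 * a) ^ (N * 2) ≤ ((1 - a) ^ (N * 2)) ^ 2 := by rw [← f3']; exact f3
        _ = (1 - a) ^ (N * 2) * (1 - a) ^ (N * 2) := by ring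
        _ ≤ 1 / 4 * (1 - a) ^ (N * 2) := mul_le_mul_of_nonneg_right f7 hXnn
    show m * h₀ m ^ 2 ≤ m / 2 * h₀ (m / 2) ^ 2 / 2
    rw [hh₀]
    simp only
    rw [e1, e2, ← pow_mul, ← pow_mul]
    have hstep := mul_le_mul_of_nonneg_left f8 (by linarith : (0:ℝ) ≤ m)
    nlinarith [hstep]
  obtain ⟨m₀, hm₀Icc, hmax⟩ :=
    isCompact_Icc.exists_isMaxOn (⟨0, Set.left_mem_Icc.mpr hLpos.le⟩ :
      (Set.Icc (0:ℝ) L).Nonempty) hcontg.continuousOn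
  have hmax' : ∀ y ∈ Set.Icc (0:ℝ) L, g₀ y ≤ g₀ m₀ := fun y hy => hmax hy
  set μ := g₀ m₀ with hμ
  have hh12 : (1:ℝ)/2 ∈ Set.Icc (0:ℝ) L := ⟨by norm_num, by linarith⟩
  have hg12 : 0 < g₀ (1/2) := mul_pos (by norm_num) (pow_pos (h₀pos _ (by linarith)) 2)
  have hμpos : 0 < μ := lt_of_lt_of_le hg12 (hmax' _ hh12)
  have hm₀1 : m₀ ≤ 1 := by
    by_contra hcon
    push_neg at hcon
    have h2 : m₀/2 ∈ Set.Icc (0:ℝ) L := ⟨by linarith [hm₀Icc.1], by linarith [hm₀Icc.2]⟩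
    have hd := hdec m₀ hcon hm₀Icc.2
    have hb := hmax' _ h2
    have : μ ≤ g₀ (m₀ / 2) / 2 := hd
    linarith
  have hsμ : Real.sqrt μ ^ 2 = μ := Real.sq_sqrt hμpos.le
  have hsμpos : 0 < Real.sqrt μ := Real.sqrt_pos.mpr hμpos
  have hval : ∀ m : ℝ, m * (h₀ m * (1 / Real.sqrt μ)) ^ 2 = g₀ m / μ := by
    intro m
    rw [mul_pow, div_pow, one_pow, hsμ, hg₀]
    simp only
    ring
  refine ⟨fun m => h₀ m * (1 / Real.sqrt μ), ?_, hcont₀.mul continuous_const, ?_, ?_, m₀,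
    hm₀Icc.1, hm₀1, ?_⟩
  · have hp : Poly1 (fun m : ℝ => (1 - m * (2*L)⁻¹) ^ N) :=
      ((Poly1.const 1).sub (Poly1.id'.mul (Poly1.const (2*L)⁻¹))).pow N
    have hp₀ : Poly1 h₀ := by
      rw [hh₀]
      simpa [div_eq_mul_inv] using hp
    exact hp₀.mul (Poly1.const (1 / Real.sqrt μ))
  · intro m h1 h2
    exact mul_pos (h₀pos m h2) (div_pos one_pos hsμpos)
  · intro m h1 h2
    rw [hval, div_le_one hμpos]
    exact hmax' m ⟨h1, h2⟩
  · rw [hval, ← hμ, div_self (ne_of_gt hμpos)]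

end PLANAR

section PLANARH

set_option maxHeartbeats 1000000 in
lemma planarH (τ c : ℝ) (hτ0 : 0 < τ) (hτ1 : τ < 1) (hc0 : 0 < c)
    (hc : c ^ 2 * (1 - τ ^ 2) = 1) :
    ∃ p q : ℝ → ℝ → ℝ, P2 p ∧ P2 q ∧
      (∀ x y : ℝ, x ^ 2 + y ^ 2 ≤ 1 →
        |y * q x (y ^ 2)| ≤ p x (y ^ 2) * τ ∧ (p x (y ^ 2)) ^ 2 - (y * q x (y ^ 2)) ^ 2 ≤ 1) ∧
      (∀ a b : ℝ, 0 ≤ b → b ≤ a * τ → a ^ 2 - b ^ 2 ≤ 1 →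
        ∃ x y : ℝ, x ^ 2 + y ^ 2 ≤ 1 ∧ p x (y ^ 2) = a ∧ y * q x (y ^ 2) = b) := by
  have h1τ : 0 < 1 - τ ^ 2 := by nlinarith
  have hL1 : 1 ≤ c ^ 2 := by nlinarith [sq_nonneg (c * τ)]
  obtain ⟨h, hPoly, hcont, hpos, hbound, m₀, hm₀0, hm₀1, htouch⟩ := exists_h (c ^ 2) hL1
  set P : ℝ → ℝ → ℝ := fun u m => 4 * c * u ^ 2 * (1 - u ^ 2) *
      h ((4 * c * u ^ 2 * (1 - u ^ 2)) ^ 2 * (1 - τ ^ 2 * m * (3 - 4 * m) ^ 2)) with hP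
  set Q : ℝ → ℝ → ℝ := fun u m => τ * (4 * c * u ^ 2 * (1 - u ^ 2)) * (3 - 4 * m) *
      h ((4 * c * u ^ 2 * (1 - u ^ 2)) ^ 2 * (1 - τ ^ 2 * m * (3 - 4 * m) ^ 2)) with hQ
  have hA : P2 (fun u m : ℝ => 4 * c * u ^ 2 * (1 - u ^ 2)) :=
    ((P2.const (4 * c)).mul (P2.fst.pow 2)).mul ((P2.const 1).sub (P2.fst.pow 2))
  have harg : P2 (fun u m : ℝ =>
      (4 * c * u ^ 2 * (1 - u ^ 2)) ^ 2 * (1 - τ ^ 2 * m * (3 - 4 * m) ^ 2)) :=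
    (hA.pow 2).mul ((P2.const 1).sub (((P2.const (τ ^ 2)).mul P2.snd).mul
      (((P2.const 3).sub ((P2.const 4).mul P2.snd)).pow 2)))
  refine ⟨P, Q, ?_, ?_, ?_, ?_⟩
  · rw [hP]
    exact hA.mul (P2.comp1 hPoly harg)
  · rw [hQ]
    exact (((P2.const τ).mul hA).mul
      ((P2.const 3).sub ((P2.const 4).mul P2.snd))).mul (P2.comp1 hPoly harg)
  · -- containment
    intro x y hxy
    simp only [hP, hQ]
    have hx2 : x ^ 2 ≤ 1 := by nlinarith [sq_nonneg y]
    have hy2 : y ^ 2 ≤ 1 := by nlinarith [sq_nonneg x]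
    set a1 : ℝ := 4 * c * x ^ 2 * (1 - x ^ 2) with ha1
    have ha1l : 0 ≤ a1 := by
      rw [ha1]
      nlinarith [mul_nonneg (sq_nonneg x) (by linarith : (0:ℝ) ≤ 1 - x ^ 2), hc0.le]
    have ha1u : a1 ≤ c := by
      rw [ha1]
      nlinarith [mul_nonneg hc0.le (sq_nonneg (2 * x ^ 2 - 1))]
    set b1 : ℝ := y * (3 - 4 * y ^ 2) with hb1
    have hb1sq : b1 ^ 2 ≤ 1 := by rw [hb1]; exact cubic_bound hy2
    set m : ℝ := a1 ^ 2 * (1 - τ ^ 2 * y ^ 2 * (3 - 4 * y ^ 2) ^ 2) with hm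
    have hiden : m = a1 ^ 2 - (τ * a1 * b1) ^ 2 := by rw [hm, hb1]; ring
    have hτb : τ ^ 2 * b1 ^ 2 ≤ 1 := by
      nlinarith [mul_nonneg (sq_nonneg τ) (sub_nonneg.mpr hb1sq)]
    have hmid : m = a1 ^ 2 * (1 - τ ^ 2 * b1 ^ 2) := by rw [hm, hb1]; ring
    have hm0 : 0 ≤ m := by
      rw [hmid]
      exact mul_nonneg (sq_nonneg a1) (by linarith)
    have hmL : m ≤ c ^ 2 := by
      have h1 : m ≤ a1 ^ 2 := by rw [hiden]; nlinarith [sq_nonneg (τ * a1 * b1)]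
      nlinarith
    have hhm : 0 < h m := hpos m hm0 hmL
    have hbd : m * h m ^ 2 ≤ 1 := hbound m hm0 hmL
    have hyq : y * (τ * a1 * (3 - 4 * y ^ 2) * h m) = τ * a1 * h m * b1 := by
      rw [hb1]; ring
    constructor
    · rw [hyq]
      have hf0 : 0 ≤ τ * a1 * h m := by positivity
      rw [abs_mul, abs_of_nonneg hf0]
      have hb1a : |b1| ≤ 1 := abs_le_one_of_sq hb1sq
      calc τ * a1 * h m * |b1| ≤ τ * a1 * h m * 1 :=
            mul_le_mul_of_nonneg_left hb1a hf0
        _ = a1 * h m * τ := by ring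
    · have he : (a1 * h m) ^ 2 - (τ * a1 * h m * b1) ^ 2 = m * h m ^ 2 := by
        rw [hiden]; ring
      rw [hyq, he]
      exact hbd
  · -- surjectivity
    intro a b hb0 hbτ hd1
    by_cases haz : a = 0
    · have hbz : b = 0 := by nlinarith
      refine ⟨0, 0, by norm_num, ?_, ?_⟩ <;> simp [hP, hQ, haz, hbz]
    · have ha0 : 0 ≤ a := by
        by_contra hneg
        push_neg at hneg
        nlinarith
      have hapos : 0 < a := lt_of_le_of_ne ha0 (Ne.symm haz)
      have hb2a : b ^ 2 ≤ a ^ 2 * τ ^ 2 := by nlinarith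
      have hdpos : 0 < a ^ 2 - b ^ 2 := by
        nlinarith [mul_pos (mul_pos hapos hapos) h1τ]
      have hgc : ContinuousOn (fun m => m * h m ^ 2) (Set.Icc 0 m₀) :=
        (continuous_id'.mul (hcont.pow 2)).continuousOn
      have hdmem : (a ^ 2 - b ^ 2) ∈ Set.Icc ((fun m => m * h m ^ 2) 0)
          ((fun m => m * h m ^ 2) m₀) := by
        constructor
        · simp only
          rw [zero_mul]
          exact hdpos.le
        · simp only
          rw [htouch]
          exact hd1
      obtain ⟨m, hmIcc, hgm⟩ := intermediate_value_Icc hm₀0 hgc hdmem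
      have hgm' : m * h m ^ 2 = a ^ 2 - b ^ 2 := hgm
      have hmm0 : 0 ≤ m := hmIcc.1
      have hm1 : m ≤ 1 := le_trans hmIcc.2 hm₀1
      have hmL : m ≤ c ^ 2 := le_trans hm1 hL1
      have hhm : 0 < h m := hpos m hmm0 hmL
      set x' := a / h m with hx'
      set y' := b / h m with hy'
      have hx'0 : 0 ≤ x' := div_nonneg ha0 hhm.le
      have hx'pos : 0 < x' := div_pos hapos hhm
      have hy'0 : 0 ≤ y' := div_nonneg hb0 hhm.le
      have hsq' : x' ^ 2 - y' ^ 2 = m := by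
        rw [hx', hy', div_pow, div_pow, div_sub_div_same, ← hgm']
        field_simp
      have hx'c : x' ≤ c := by
        have h1 : a ^ 2 * (1 - τ ^ 2) ≤ a ^ 2 - b ^ 2 := by nlinarith
        have h2 : a ^ 2 ≤ (a ^ 2 - b ^ 2) * c ^ 2 := by
          nlinarith [mul_le_mul_of_nonneg_right h1 (sq_nonneg c)]
        have h3 : a ^ 2 ≤ (c * h m) ^ 2 := by
          nlinarith [sq_nonneg (h m), sq_nonneg c, mul_nonneg (sq_nonneg c) (sq_nonneg (h m))]
        have h4 : a ≤ c * h m :=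
          (pow_le_pow_iff_left₀ ha0 (mul_nonneg hc0.le hhm.le) two_ne_zero).mp h3
        rw [hx', div_le_iff₀ hhm]
        linarith
      set w' := y' / (τ * x') with hw'
      have hy'le : y' ≤ τ * x' := by
        rw [hx', hy', ← mul_div_assoc]
        exact (div_le_div_iff_of_pos_right hhm).mpr (by linarith)
      have hw'le : |w'| ≤ 1 := by
        rw [hw', abs_div, abs_of_nonneg hy'0, abs_of_nonneg (mul_pos hτ0 hx'pos).le,
          div_le_one (mul_pos hτ0 hx'pos)]
        exact hy'le
      obtain ⟨x, y, hdisk, hAx, hyy⟩ := rect_surj hc0 hx'0 hx'c hw'le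
      have hy'e : τ * x' * w' = y' := by
        rw [hw']
        field_simp
      have hY : (y * (3 - 4 * y ^ 2)) ^ 2 = w' ^ 2 := by rw [hyy]
      have hm2 : (4 * c * x ^ 2 * (1 - x ^ 2)) ^ 2 * (1 - τ ^ 2 * y ^ 2 * (3 - 4 * y ^ 2) ^ 2)
          = m := by
        calc (4 * c * x ^ 2 * (1 - x ^ 2)) ^ 2 * (1 - τ ^ 2 * y ^ 2 * (3 - 4 * y ^ 2) ^ 2)
            = x' ^ 2 - τ ^ 2 * x' ^ 2 * (y * (3 - 4 * y ^ 2)) ^ 2 := by rw [hAx]; ring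
          _ = x' ^ 2 - τ ^ 2 * x' ^ 2 * w' ^ 2 := by rw [hY]
          _ = x' ^ 2 - (τ * x' * w') ^ 2 := by ring
          _ = x' ^ 2 - y' ^ 2 := by rw [hy'e]
          _ = m := hsq'
      refine ⟨x, y, hdisk, ?_, ?_⟩
      · simp only [hP]
        rw [hm2, hAx, hx']
        exact div_mul_cancel₀ a hhm.ne'
      · simp only [hQ]
        rw [hm2, hAx]
        have hre : y * (τ * x' * (3 - 4 * y ^ 2) * h m) = τ * x' * (y * (3 - 4 * y ^ 2)) * h m :=
          by ring
        rw [hre, hyy, hy'e, hy']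
        exact div_mul_cancel₀ b hhm.ne'

end PLANARH

section PLANARG

lemma my_abs_le_of_sq {b B : ℝ} (hB : 0 ≤ B) (h : b ^ 2 ≤ B ^ 2) : |b| ≤ B := by
  have := Real.sqrt_le_sqrt h
  rwa [Real.sqrt_sq_eq_abs, Real.sqrt_sq hB] at this

namespace Poly1
lemma div_const {f} (hf : Poly1 f) (c : ℝ) : Poly1 (fun t => f t / c) := by
  obtain ⟨p, hp⟩ := hf
  exact ⟨p * Polynomial.C c⁻¹, by simp [hp, div_eq_mul_inv]⟩
end Poly1

namespace P2
lemma div_const {f} (hf : P2 f) (c : ℝ) : P2 (fun a b => f a b / c) := by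
  obtain ⟨p, hp⟩ := hf
  exact ⟨p * MvPolynomial.C c⁻¹, by simp [hp, div_eq_mul_inv]⟩
end P2

/-- Newton-type iteration approximating `1/√(v²+2)` -/
def zG (M : ℝ) : ℕ → ℝ → ℝ
  | 0 => fun _ => 1 / M
  | (j+1) => fun v => zG M j v * (3 - (v ^ 2 + 2) * zG M j v ^ 2) / 2

lemma zG_poly (M : ℝ) (j : ℕ) : Poly1 (zG M j) := by
  induction j with
  | zero => exact Poly1.const (1 / M)
  | succ j ih =>
    show Poly1 (fun v => zG M j v * (3 - (v ^ 2 + 2) * zG M j v ^ 2) / 2)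
    exact (ih.mul ((Poly1.const 3).sub
      (((Poly1.id'.pow 2).add (Poly1.const 2)).mul (ih.pow 2)))).div_const 2

lemma zG_inv (M : ℝ) (hM : 2 ≤ M) (j : ℕ) : ∀ v : ℝ, v ^ 2 + 2 ≤ M →
    0 < zG M j v ∧ (v ^ 2 + 2) * zG M j v ^ 2 ≤ 1 ∧
      min (1/4 : ℝ) ((121/64) ^ j * (2 / M ^ 2)) ≤ (v ^ 2 + 2) * zG M j v ^ 2 := by
  have hM0 : (0:ℝ) < M := by linarith
  induction j with
  | zero =>
    intro v hv
    have hP2 : (2:ℝ) ≤ v ^ 2 + 2 := by nlinarith [sq_nonneg v]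
    have e : zG M 0 v = 1 / M := rfl
    have e2 : (v ^ 2 + 2) * (1 / M) ^ 2 = (v ^ 2 + 2) / M ^ 2 := by ring
    refine ⟨by rw [e]; positivity, ?_, ?_⟩
    · rw [e, e2, div_le_one (by positivity)]
      nlinarith [mul_pos hM0 (by linarith : (0:ℝ) < M - 1)]
    · rw [e, e2]
      calc min (1/4 : ℝ) ((121/64) ^ 0 * (2 / M ^ 2)) ≤ (121/64) ^ 0 * (2 / M ^ 2) :=
            min_le_right _ _
        _ = 2 / M ^ 2 := by norm_num
        _ ≤ (v ^ 2 + 2) / M ^ 2 := (div_le_div_iff_of_pos_right (by positivity)).mpr hP2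
  | succ j ih =>
    intro v hv
    obtain ⟨hz, hw1, hwlo⟩ := ih v hv
    have hP2 : (2:ℝ) ≤ v ^ 2 + 2 := by nlinarith [sq_nonneg v]
    have hw0 : 0 ≤ (v ^ 2 + 2) * zG M j v ^ 2 := by positivity
    set z := zG M j v with hzdef
    set w := (v ^ 2 + 2) * z ^ 2 with hwdef
    have hznew : zG M (j+1) v = z * (3 - (v ^ 2 + 2) * z ^ 2) / 2 := rfl
    have hwnew : (v ^ 2 + 2) * zG M (j+1) v ^ 2 = w * (3 - w) ^ 2 / 4 := by
      rw [hznew, hwdef]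
      ring
    have hz'pos : 0 < zG M (j+1) v := by
      rw [hznew]
      apply div_pos (mul_pos hz (by rw [← hwdef]; linarith)) two_pos
    refine ⟨hz'pos, ?_, ?_⟩
    · rw [hwnew]
      have key : 4 - w * (3 - w) ^ 2 = (w - 1) ^ 2 * (4 - w) := by ring
      have h4w : 0 ≤ (w - 1) ^ 2 * (4 - w) :=
        mul_nonneg (sq_nonneg _) (by linarith)
      linarith
    · rw [hwnew]
      by_cases hq : (1/4 : ℝ) ≤ w
      · have hgrow : w ≤ w * (3 - w) ^ 2 / 4 := by nlinarith [mul_nonneg hw0 (by nlinarith : (0:ℝ) ≤ (3 - w) ^ 2 - 4)]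
        calc min (1/4 : ℝ) ((121/64) ^ (j+1) * (2 / M ^ 2)) ≤ 1/4 := min_le_left _ _
          _ ≤ w := hq
          _ ≤ w * (3 - w) ^ 2 / 4 := hgrow
      · push_neg at hq
        have hBj : (121/64 : ℝ) ^ j * (2 / M ^ 2) ≤ w := by
          rcases min_cases (1/4 : ℝ) ((121/64 : ℝ) ^ j * (2 / M ^ 2)) with ⟨heq, hle⟩ | ⟨heq, hle⟩
          · rw [heq] at hwlo; linarith
          · rw [heq] at hwlo; exact hwlo
        have hgrow : (121/64 : ℝ) * w ≤ w * (3 - w) ^ 2 / 4 := by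
          nlinarith [mul_nonneg hw0 (by nlinarith : (0:ℝ) ≤ (3 - w) ^ 2 * 16 - 121)]
        calc min (1/4 : ℝ) ((121/64) ^ (j+1) * (2 / M ^ 2))
            ≤ (121/64) ^ (j+1) * (2 / M ^ 2) := min_le_right _ _
          _ = (121/64 : ℝ) * ((121/64) ^ j * (2 / M ^ 2)) := by rw [pow_succ]; ring
          _ ≤ (121/64 : ℝ) * w := by
              apply mul_le_mul_of_nonneg_left hBj (by norm_num)
          _ ≤ w * (3 - w) ^ 2 / 4 := hgrow

lemma exists_k (M : ℝ) (hM : 2 ≤ M) :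
    ∃ k : ℝ → ℝ, Poly1 k ∧ ∀ v : ℝ, v ^ 2 + 2 ≤ M →
      (0 < k v ∧ 1 ≤ (v ^ 2 + 2) * k v ^ 2 ∧ (v ^ 2 + 2) * k v ^ 2 ≤ 4) := by
  have hM0 : (0:ℝ) < M := by linarith
  obtain ⟨J, hJ⟩ := pow_unbounded_of_one_lt (M ^ 2 / 8) (by norm_num : (1:ℝ) < 121/64)
  refine ⟨fun v => 2 * zG M J v, (Poly1.const 2).mul (zG_poly M J), ?_⟩
  intro v hv
  obtain ⟨hz, hw1, hwlo⟩ := zG_inv M hM J v hv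
  have hBJ : (1:ℝ)/4 ≤ (121/64) ^ J * (2 / M ^ 2) := by
    calc (1:ℝ)/4 = (M ^ 2 / 8) * (2 / M ^ 2) := by field_simp; ring
      _ ≤ (121/64) ^ J * (2 / M ^ 2) :=
          mul_le_mul_of_nonneg_right hJ.le (by positivity)
  rw [min_eq_left hBJ] at hwlo
  have he : (v ^ 2 + 2) * (2 * zG M J v) ^ 2 = 4 * ((v ^ 2 + 2) * zG M J v ^ 2) := by ring
  refine ⟨by positivity, ?_, ?_⟩
  · rw [he]; linarith
  · rw [he]; linarith

lemma Zbound (K P t : ℝ) (hP2 : 2 ≤ P) (hk1 : 1 ≤ P * K ^ 2) (hk4 : P * K ^ 2 ≤ 4)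
    (hkpos : 0 < K) (ht : t ^ 2 ≤ 1) :
    (t * (3 * P * K / 2 - P ^ 2 * K ^ 3 / 2 * t ^ 2)) ^ 2 ≤ P := by
  set W := P * K ^ 2 * t ^ 2 with hW
  have hW0 : 0 ≤ W := by positivity
  have hW4 : W ≤ 4 := by
    have h1 : P * K ^ 2 * t ^ 2 ≤ 4 * t ^ 2 := mul_le_mul_of_nonneg_right hk4 (sq_nonneg t)
    have h2 : 4 * t ^ 2 ≤ 4 := by linarith
    linarith [hW ▸ h1]
  have hiden : (t * (3 * P * K / 2 - P ^ 2 * K ^ 3 / 2 * t ^ 2)) ^ 2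
      = P * (W * (3 - W) ^ 2 / 4) := by rw [hW]; ring
  have hkey : W * (3 - W) ^ 2 ≤ 4 := by
    nlinarith [mul_nonneg (sq_nonneg (W - 1)) (by linarith : (0:ℝ) ≤ 4 - W)]
  rw [hiden]
  nlinarith [mul_le_mul_of_nonneg_left (by linarith : W * (3 - W) ^ 2 / 4 ≤ 1)
    (by linarith : (0:ℝ) ≤ P)]

lemma Zsurj (K P r : ℝ) (hP2 : 2 ≤ P) (hk1 : 1 ≤ P * K ^ 2)
    (hkpos : 0 < K) (hr : r ^ 2 ≤ P) :
    ∃ t : ℝ, t ^ 2 ≤ 1 ∧ t * (3 * P * K / 2 - P ^ 2 * K ^ 3 / 2 * t ^ 2) = r := by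
  have hPpos : 0 < P := by linarith
  set s := Real.sqrt P with hs
  have hs2 : s ^ 2 = P := Real.sq_sqrt hPpos.le
  have hspos : 0 < s := Real.sqrt_pos.mpr hPpos
  have hsK : 1 ≤ s * K := by
    have h1 : (1:ℝ) ≤ |s * K| := by
      rw [← Real.sqrt_one, ← Real.sqrt_sq_eq_abs]
      apply Real.sqrt_le_sqrt
      nlinarith
    rwa [abs_of_pos (mul_pos hspos hkpos)] at h1
  set t₁ : ℝ := 1 / (s * K) with ht₁
  have ht₁pos : 0 < t₁ := by positivity
  have ht₁le : t₁ ≤ 1 := by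
    rw [ht₁, div_le_one (by positivity)]
    exact hsK
  have hKne : K ≠ 0 := ne_of_gt hkpos
  have hsne : s ≠ 0 := ne_of_gt hspos
  have hPs : P = s ^ 2 := hs2.symm
  have hZpos : t₁ * (3 * P * K / 2 - P ^ 2 * K ^ 3 / 2 * t₁ ^ 2) = s := by
    rw [ht₁, hPs]
    field_simp
    ring
  have hZneg : (-t₁) * (3 * P * K / 2 - P ^ 2 * K ^ 3 / 2 * (-t₁) ^ 2) = -s := by
    have : ((-t₁) : ℝ) ^ 2 = t₁ ^ 2 := by ring
    rw [this]
    linear_combination -hZpos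
  have hcont : ContinuousOn (fun t : ℝ => t * (3 * P * K / 2 - P ^ 2 * K ^ 3 / 2 * t ^ 2))
      (Set.Icc (-t₁) t₁) := by fun_prop
  have habs : |r| ≤ s := by
    rw [← Real.sqrt_sq_eq_abs, hs]
    exact Real.sqrt_le_sqrt hr
  have hmem : r ∈ Set.Icc ((fun t : ℝ => t * (3 * P * K / 2 - P ^ 2 * K ^ 3 / 2 * t ^ 2)) (-t₁))
      ((fun t : ℝ => t * (3 * P * K / 2 - P ^ 2 * K ^ 3 / 2 * t ^ 2)) t₁) := by
    have e1 : (fun t : ℝ => t * (3 * P * K / 2 - P ^ 2 * K ^ 3 / 2 * t ^ 2)) (-t₁) = -s := hZneg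
    have e2 : (fun t : ℝ => t * (3 * P * K / 2 - P ^ 2 * K ^ 3 / 2 * t ^ 2)) t₁ = s := hZpos
    rw [e1, e2]
    exact abs_le.mp habs
  obtain ⟨t, htmem, htval⟩ := intermediate_value_Icc (by linarith : -t₁ ≤ t₁) hcont hmem
  refine ⟨t, ?_, htval⟩
  obtain ⟨hta, htb⟩ := htmem
  nlinarith


set_option maxHeartbeats 1000000 in
lemma G_arith1 (τ c v t K : ℝ) (hτ0 : 0 < τ) (h1τ : 0 < 1 - τ ^ 2) (hc : c ^ 2 * (1 - τ ^ 2) = 1)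
    (hc0 : 0 < c) (hv0 : 0 ≤ v) (hvc : v ^ 2 ≤ c - 1)
    (hk1 : 1 ≤ (v ^ 2 + 2) * K ^ 2) (hk4 : (v ^ 2 + 2) * K ^ 2 ≤ 4) (hkpos : 0 < K)
    (ht2 : t ^ 2 ≤ 1) :
    |v * (t * (3 * (v ^ 2 + 2) * K / 2 - (v ^ 2 + 2) ^ 2 * K ^ 3 / 2 * t ^ 2))| ≤ (1 + v ^ 2) * τ ∧
    1 ≤ (1 + v ^ 2) ^ 2 - (v * (t * (3 * (v ^ 2 + 2) * K / 2 - (v ^ 2 + 2) ^ 2 * K ^ 3 / 2 * t ^ 2))) ^ 2 ∧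
    1 + v ^ 2 ≤ c := by
  have hP2 : (2:ℝ) ≤ v ^ 2 + 2 := by nlinarith [sq_nonneg v]
  have hτ0' : 0 ≤ τ ^ 2 := sq_nonneg τ
  have hZb := Zbound K (v ^ 2 + 2) t hP2 hk1 hk4 hkpos ht2
  have hb2 : (v * (t * (3 * (v ^ 2 + 2) * K / 2 - (v ^ 2 + 2) ^ 2 * K ^ 3 / 2 * t ^ 2))) ^ 2
      ≤ (1 + v ^ 2) ^ 2 - 1 := by
    have hZ1 := mul_le_mul_of_nonneg_left hZb (sq_nonneg v)
    have hZ2 : (v * (t * (3 * (v ^ 2 + 2) * K / 2 - (v ^ 2 + 2) ^ 2 * K ^ 3 / 2 * t ^ 2))) ^ 2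
        = v ^ 2 * (t * (3 * (v ^ 2 + 2) * K / 2 - (v ^ 2 + 2) ^ 2 * K ^ 3 / 2 * t ^ 2)) ^ 2 := by
      ring
    have hZ3 : v ^ 2 * (v ^ 2 + 2) = (1 + v ^ 2) ^ 2 - 1 := by ring
    rw [hZ2, ← hZ3]
    exact hZ1
  have hac : 1 + v ^ 2 ≤ c := by linarith
  have haa : (1 + v ^ 2) ^ 2 ≤ c ^ 2 := by
    nlinarith [mul_le_mul hac hac (by positivity : (0:ℝ) ≤ 1 + v ^ 2) hc0.le]
  have hkey : (1 + v ^ 2) ^ 2 - 1 ≤ ((1 + v ^ 2) * τ) ^ 2 := by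
    nlinarith [mul_le_mul_of_nonneg_right haa h1τ.le]
  have hτpos : 0 ≤ (1 + v ^ 2) * τ := by nlinarith [sq_nonneg v]
  refine ⟨?_, by linarith, hac⟩
  apply my_abs_le_of_sq hτpos
  linarith

set_option maxHeartbeats 1600000 in
lemma planarG (τ c : ℝ) (hτ0 : 0 < τ) (hτ1 : τ < 1) (hc0 : 0 < c)
    (hc : c ^ 2 * (1 - τ ^ 2) = 1) :
    ∃ p q : ℝ → ℝ → ℝ, P2 p ∧ P2 q ∧
      (∀ x y : ℝ, x ^ 2 + y ^ 2 ≤ 1 →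
        |y * q x (y ^ 2)| ≤ p x (y ^ 2) * τ ∧ 1 ≤ (p x (y ^ 2)) ^ 2 - (y * q x (y ^ 2)) ^ 2 ∧
          p x (y ^ 2) ≤ c) ∧
      (∀ a b : ℝ, 0 ≤ b → b ≤ a * τ → 1 ≤ a ^ 2 - b ^ 2 → a ≤ c →
        ∃ x y : ℝ, x ^ 2 + y ^ 2 ≤ 1 ∧ p x (y ^ 2) = a ∧ y * q x (y ^ 2) = b) := by
  have h1τ : 0 < 1 - τ ^ 2 := by nlinarith
  have hc2 : 1 < c ^ 2 := by nlinarith [mul_pos (mul_pos hc0 hc0) (mul_pos hτ0 hτ0)]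
  have hc1 : 1 < c := by
    by_contra hcon
    push_neg at hcon
    nlinarith [mul_le_mul hcon hcon hc0.le zero_le_one]
  set v₀ := Real.sqrt (c - 1) with hv₀
  have hv₀pos : 0 < v₀ := Real.sqrt_pos.mpr (by linarith)
  have hv₀sq : v₀ ^ 2 = c - 1 := Real.sq_sqrt (by linarith)
  obtain ⟨k, hkPoly, hk⟩ := exists_k (c + 1) (by linarith)
  set P : ℝ → ℝ → ℝ := fun u m => 1 + (4 * v₀ * u ^ 2 * (1 - u ^ 2)) ^ 2 with hP
  set Q : ℝ → ℝ → ℝ := fun u m => (3 - 4 * m) * (4 * v₀ * u ^ 2 * (1 - u ^ 2)) *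
      (3 * ((4 * v₀ * u ^ 2 * (1 - u ^ 2)) ^ 2 + 2) * k (4 * v₀ * u ^ 2 * (1 - u ^ 2)) / 2 -
        ((4 * v₀ * u ^ 2 * (1 - u ^ 2)) ^ 2 + 2) ^ 2 * k (4 * v₀ * u ^ 2 * (1 - u ^ 2)) ^ 3 / 2 *
          (m * (3 - 4 * m) ^ 2)) with hQ
  have hAcert : P2 (fun u m : ℝ => 4 * v₀ * u ^ 2 * (1 - u ^ 2)) :=
    ((P2.const (4 * v₀)).mul (P2.fst.pow 2)).mul ((P2.const 1).sub (P2.fst.pow 2))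
  have hkA : P2 (fun u m : ℝ => k (4 * v₀ * u ^ 2 * (1 - u ^ 2))) := P2.comp1 hkPoly hAcert
  have hPA2 : P2 (fun u m : ℝ => (4 * v₀ * u ^ 2 * (1 - u ^ 2)) ^ 2 + 2) :=
    (hAcert.pow 2).add (P2.const 2)
  have hcub : P2 (fun u m : ℝ => 3 - 4 * m) :=
    (P2.const 3).sub ((P2.const 4).mul P2.snd)
  refine ⟨P, Q, ?_, ?_, ?_, ?_⟩
  · rw [hP]
    exact (P2.const 1).add (hAcert.pow 2)
  · rw [hQ]
    exact (hcub.mul hAcert).mul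
      ((((((P2.const 3).mul hPA2).mul hkA)).div_const 2).sub
        ((((hPA2.pow 2).mul (hkA.pow 3)).div_const 2).mul (P2.snd.mul (hcub.pow 2))))
  · -- containment
    intro x y hxy
    simp only [hP, hQ]
    have hx2 : x ^ 2 ≤ 1 := by nlinarith [sq_nonneg y]
    have hy2 : y ^ 2 ≤ 1 := by nlinarith [sq_nonneg x]
    set v : ℝ := 4 * v₀ * x ^ 2 * (1 - x ^ 2) with hv
    have hv0 : 0 ≤ v := by
      rw [hv]
      nlinarith [mul_nonneg (sq_nonneg x) (by linarith : (0:ℝ) ≤ 1 - x ^ 2), hv₀pos.le]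
    have hvu : v ≤ v₀ := by
      rw [hv]
      nlinarith [mul_nonneg hv₀pos.le (sq_nonneg (2 * x ^ 2 - 1))]
    have hvM : v ^ 2 + 2 ≤ c + 1 := by nlinarith [hv₀sq]
    obtain ⟨hkpos, hk1, hk4⟩ := hk v hvM
    have hP2 : (2:ℝ) ≤ v ^ 2 + 2 := by nlinarith [sq_nonneg v]
    set t : ℝ := y * (3 - 4 * y ^ 2) with ht
    have ht2 : t ^ 2 ≤ 1 := by rw [ht]; exact cubic_bound hy2
    have hbe : y * ((3 - 4 * y ^ 2) * v *
        (3 * (v ^ 2 + 2) * k v / 2 - (v ^ 2 + 2) ^ 2 * k v ^ 3 / 2 *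
          (y ^ 2 * (3 - 4 * y ^ 2) ^ 2)))
        = v * (t * (3 * (v ^ 2 + 2) * k v / 2 - (v ^ 2 + 2) ^ 2 * k v ^ 3 / 2 * t ^ 2)) := by
      rw [ht]; ring
    have hvc : v ^ 2 ≤ c - 1 := by nlinarith [hv₀sq]
    rw [hbe]
    exact G_arith1 τ c v t (k v) hτ0 h1τ hc hc0 hv0 hvc hk1 hk4 hkpos ht2
  · -- surjectivity
    intro a b hb0 hbτ h1ab hac
    have ha0 : 0 ≤ a := by
      by_contra hneg
      push_neg at hneg
      nlinarith
    have ha1 : 1 ≤ a := by nlinarith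
    set v : ℝ := Real.sqrt (a - 1) with hv
    have hv2 : v ^ 2 = a - 1 := Real.sq_sqrt (by linarith)
    have hv0 : 0 ≤ v := Real.sqrt_nonneg _
    have hvv₀ : v ≤ v₀ := by
      rw [hv, hv₀]
      exact Real.sqrt_le_sqrt (by linarith)
    have hvM : v ^ 2 + 2 ≤ c + 1 := by rw [hv2]; linarith
    obtain ⟨hkpos, hk1, hk4⟩ := hk v hvM
    have hP2 : (2:ℝ) ≤ v ^ 2 + 2 := by nlinarith [sq_nonneg v]
    by_cases hvz : v = 0
    · have ha1' : a = 1 := by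
        have := hv2
        rw [hvz] at this
        nlinarith
      have hb' : b = 0 := by nlinarith
      refine ⟨0, 0, by norm_num, ?_, ?_⟩ <;> simp [hP, hQ, ha1', hb']
    · have hvpos : 0 < v := lt_of_le_of_ne hv0 (Ne.symm hvz)
      have hr : (b / v) ^ 2 ≤ v ^ 2 + 2 := by
        rw [div_pow, div_le_iff₀ (by positivity)]
        nlinarith [hv2]
      obtain ⟨t, ht1, htval⟩ := Zsurj (k v) (v ^ 2 + 2) (b / v) hP2 hk1 hkpos hr
      have htabs : |t| ≤ 1 := abs_le_one_of_sq ht1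
      obtain ⟨x, y, hdisk, hAx, hyy⟩ := rect_surj hv₀pos hv0 hvv₀ htabs
      refine ⟨x, y, hdisk, ?_, ?_⟩
      · simp only [hP]
        rw [hAx, hv2]
        ring
      · simp only [hQ]
        rw [hAx]
        have hbe : y * ((3 - 4 * y ^ 2) * v *
            (3 * (v ^ 2 + 2) * k v / 2 - (v ^ 2 + 2) ^ 2 * k v ^ 3 / 2 *
              (y ^ 2 * (3 - 4 * y ^ 2) ^ 2)))
            = v * ((y * (3 - 4 * y ^ 2)) *
              (3 * (v ^ 2 + 2) * k v / 2 - (v ^ 2 + 2) ^ 2 * k v ^ 3 / 2 *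
                (y * (3 - 4 * y ^ 2)) ^ 2)) := by ring
        rw [hbe, hyy, htval, mul_comm]
        exact div_mul_cancel₀ b (ne_of_gt hvpos)

end PLANARG

/-- The `n`-dimensional hyperbolic sector
`H(α,n) = {x : ‖x̄‖ ≤ x₁·tan α, x₁² − ‖x̄‖² ≤ 1}` and hyperbolic segment
`G(α,n) = {x : ‖x̄‖ ≤ x₁·tan α, x₁² − ‖x̄‖² ≥ 1, x₁ ≤ cos α/√(cos 2α)}`
(where `x = (x₁, x̄)` and `0 < α < π/4`) are images of the closed unit ball `B̄ₙ`
under polynomial maps `ℝⁿ → ℝⁿ`. -/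
theorem hyperbolic_sector_and_segment_poly_images (n : ℕ) (hn : 2 ≤ n)
    (α : ℝ) (h0 : 0 < α) (h1 : α < Real.pi / 4) :
    ∃ f g : EuclideanSpace ℝ (Fin n) → EuclideanSpace ℝ (Fin n),
      IsPolynomialMap f ∧ IsPolynomialMap g ∧
      f '' Metric.closedBall 0 1 =
        {x : EuclideanSpace ℝ (Fin n) |
          Real.sqrt (∑ i ∈ Finset.univ.erase (⟨0, by omega⟩ : Fin n), (x i) ^ 2) ≤
            x ⟨0, by omega⟩ * Real.tan α ∧
          (x ⟨0, by omega⟩) ^ 2 -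
              (∑ i ∈ Finset.univ.erase (⟨0, by omega⟩ : Fin n), (x i) ^ 2) ≤ 1} ∧
      g '' Metric.closedBall 0 1 =
        {x : EuclideanSpace ℝ (Fin n) |
          Real.sqrt (∑ i ∈ Finset.univ.erase (⟨0, by omega⟩ : Fin n), (x i) ^ 2) ≤
            x ⟨0, by omega⟩ * Real.tan α ∧
          1 ≤ (x ⟨0, by omega⟩) ^ 2 -
              (∑ i ∈ Finset.univ.erase (⟨0, by omega⟩ : Fin n), (x i) ^ 2) ∧
          x ⟨0, by omega⟩ ≤ Real.cos α / Real.sqrt (Real.cos (2 * α))} := by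
  have hπ := Real.pi_pos
  have hi0lt : 0 < n := by omega
  have hi1lt : 1 < n := by omega
  have hne : (⟨1, hi1lt⟩ : Fin n) ≠ (⟨0, hi0lt⟩ : Fin n) := by
    simp [Fin.ext_iff]
  have hα2 : α < Real.pi / 2 := by linarith
  have hτ0 : 0 < Real.tan α := Real.tan_pos_of_pos_of_lt_pi_div_two h0 hα2
  have hτ1 : Real.tan α < 1 := by
    have := Real.tan_lt_tan_of_nonneg_of_lt_pi_div_two h0.le (by linarith) h1
    rwa [Real.tan_pi_div_four] at this
  have hcosα : 0 < Real.cos α := Real.cos_pos_of_mem_Ioo ⟨by linarith, hα2⟩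
  have hcos2α : 0 < Real.cos (2 * α) := Real.cos_pos_of_mem_Ioo ⟨by linarith, by linarith⟩
  have hcosne : Real.cos α ≠ 0 := ne_of_gt hcosα
  have hsq2 : Real.sqrt (Real.cos (2 * α)) ^ 2 = Real.cos (2 * α) := Real.sq_sqrt hcos2α.le
  have hsqpos : 0 < Real.sqrt (Real.cos (2 * α)) := Real.sqrt_pos.mpr hcos2α
  have hc0 : 0 < Real.cos α / Real.sqrt (Real.cos (2 * α)) := div_pos hcosα hsqpos
  have h1tan : 1 - Real.tan α ^ 2 = Real.cos (2 * α) / Real.cos α ^ 2 := by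
    rw [Real.tan_eq_sin_div_cos, div_pow, Real.cos_two_mul']
    field_simp
  have hc : (Real.cos α / Real.sqrt (Real.cos (2 * α))) ^ 2 * (1 - Real.tan α ^ 2) = 1 := by
    rw [div_pow, hsq2, h1tan]
    field_simp
  obtain ⟨pH, qH, hpH, hqH, hH1, hH2⟩ :=
    planarH (Real.tan α) (Real.cos α / Real.sqrt (Real.cos (2 * α))) hτ0 hτ1 hc0 hc
  obtain ⟨pG, qG, hpG, hqG, hG1, hG2⟩ :=
    planarG (Real.tan α) (Real.cos α / Real.sqrt (Real.cos (2 * α))) hτ0 hτ1 hc0 hc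
  refine ⟨liftMap ⟨0, hi0lt⟩ pH qH, liftMap ⟨0, hi0lt⟩ pG qG,
    liftMap_poly _ _ _ hpH hqH, liftMap_poly _ _ _ hpG hqG, ?_, ?_⟩
  · rw [lift_image (⟨0, hi0lt⟩ : Fin n) ⟨1, hi1lt⟩ hne pH qH
      (fun a b => b ≤ a * Real.tan α ∧ a ^ 2 - b ^ 2 ≤ 1)
      (fun x y hxy => ⟨(hH1 x y hxy).1, by rw [sq_abs]; exact (hH1 x y hxy).2⟩)
      (fun a b hb0 hC => hH2 a b hb0 hC.1 hC.2)]
    apply Set.ext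
    intro z
    simp only [Set.mem_setOf_eq]
    have hs := Real.sq_sqrt (Srad_nonneg (⟨0, hi0lt⟩ : Fin n) z)
    constructor
    · rintro ⟨ha, hb⟩
      refine ⟨ha, ?_⟩
      show (z (⟨0, hi0lt⟩ : Fin n)) ^ 2 - Srad (⟨0, hi0lt⟩ : Fin n) z ≤ 1
      rw [← hs]
      exact hb
    · rintro ⟨ha, hb⟩
      refine ⟨ha, ?_⟩
      rw [hs]
      exact hb
  · rw [lift_image (⟨0, hi0lt⟩ : Fin n) ⟨1, hi1lt⟩ hne pG qG
      (fun a b => b ≤ a * Real.tan α ∧ 1 ≤ a ^ 2 - b ^ 2 ∧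
        a ≤ Real.cos α / Real.sqrt (Real.cos (2 * α)))
      (fun x y hxy => ⟨(hG1 x y hxy).1, by rw [sq_abs]; exact (hG1 x y hxy).2.1,
        (hG1 x y hxy).2.2⟩)
      (fun a b hb0 hC => hG2 a b hb0 hC.1 hC.2.1 hC.2.2)]
    apply Set.ext
    intro z
    simp only [Set.mem_setOf_eq]
    have hs := Real.sq_sqrt (Srad_nonneg (⟨0, hi0lt⟩ : Fin n) z)
    constructor
    · rintro ⟨ha, hb, hcc⟩
      refine ⟨ha, ?_, hcc⟩
      show 1 ≤ (z (⟨0, hi0lt⟩ : Fin n)) ^ 2 - Srad (⟨0, hi0lt⟩ : Fin n) z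
      rw [← hs]
      exact hb
    · rintro ⟨ha, hb, hcc⟩
      refine ⟨ha, ?_, hcc⟩
      rw [hs]
      exact hb

end
end

section
/- Let α be a real number with 0 < α < π/4. Define H(α) := {(x,y) ∈ ℝ² : |y| ≤ x·tan α and x² − y² ≤ 1} and H'(α) := {(x,y) ∈ ℝ² : |y| ≤ x·sin(2α) and x² − y² ≤ 1}. Then the polynomial map ψ₁ : ℝ² → ℝ², (x,y) ↦ (x² + y², 2xy), satisfies ψ₁(H(α)) = H'(α). -/
/-!
In the light-cone coordinates `(p, q) = (x + y, x - y)` the map `ψ₁` becomes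
coordinatewise squaring `(p, q) ↦ (p², q²)`, since `x² + y² ± 2xy = (x ± y)²`.
For `0 < k ≤ 1` the sector `|y| ≤ k x, x² - y² ≤ 1` is the region
`r ≤ q / p ≤ 1 / r, pq ≤ 1` with `r = (1 - k) / (1 + k)`, and squaring turns it into the
same region with ratio `r²`. Finally, for `k = tan α` one has
`r = (cos α - sin α) / (cos α + sin α)`, whose square is `(1 - sin 2α) / (1 + sin 2α)`.
-/

open Real Set

def psi₁ (p : ℝ × ℝ) : ℝ × ℝ := (p.1 ^ 2 + p.2 ^ 2, 2 * p.1 * p.2)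

def hyperbolicSector (k : ℝ) : Set (ℝ × ℝ) :=
  {p | |p.2| ≤ p.1 * k ∧ p.1 ^ 2 - p.2 ^ 2 ≤ 1}

def lightConeSector (r : ℝ) : Set (ℝ × ℝ) :=
  {p | 0 ≤ p.1 ∧ 0 ≤ p.2 ∧ r * p.1 ≤ p.2 ∧ r * p.2 ≤ p.1 ∧ p.1 * p.2 ≤ 1}

noncomputable def lightCone : ℝ × ℝ ≃ ℝ × ℝ where
  toFun p := (p.1 + p.2, p.1 - p.2)
  invFun p := ((p.1 + p.2) / 2, (p.1 - p.2) / 2)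
  left_inv p := by ext <;> simp only <;> ring
  right_inv p := by ext <;> simp only <;> ring

theorem lightCone_psi₁ (p : ℝ × ℝ) :
    lightCone (psi₁ p) = Prod.map (· ^ 2) (· ^ 2) (lightCone p) := by
  ext <;> simp only [lightCone, psi₁, Equiv.coe_fn_mk, Prod.map_fst, Prod.map_snd] <;> ring

theorem image_psi₁_preimage_lightCone (s : Set (ℝ × ℝ)) :
    psi₁ '' (lightCone ⁻¹' s) = lightCone ⁻¹' (Prod.map (· ^ 2) (· ^ 2) '' s) := by
  have hpsi : psi₁ = lightCone.symm ∘ Prod.map (· ^ 2) (· ^ 2) ∘ lightCone := by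
    funext p
    rw [Function.comp_apply, Function.comp_apply, ← lightCone_psi₁, Equiv.symm_apply_apply]
  rw [hpsi, image_comp, image_comp, Equiv.image_preimage, Equiv.image_eq_preimage_symm,
    Equiv.symm_symm]

theorem hyperbolicSector_eq_preimage_lightConeSector {k : ℝ} (hk0 : 0 < k) (hk1 : k ≤ 1) :
    hyperbolicSector k = lightCone ⁻¹' lightConeSector ((1 - k) / (1 + k)) := by
  ext ⟨x, y⟩
  have hk : 0 < 1 + k := by linarith
  simp only [hyperbolicSector, lightConeSector, lightCone, mem_ofPred_eq, mem_preimage,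
    Equiv.coe_fn_mk, abs_le, div_mul_eq_mul_div, div_le_iff₀ hk]
  have hprod : (x + y) * (x - y) = x ^ 2 - y ^ 2 := by ring
  rw [hprod]
  constructor
  · rintro ⟨⟨hy₁, hy₂⟩, hxy⟩
    have hx : 0 ≤ x := by nlinarith
    refine ⟨by nlinarith, by nlinarith, by linarith, by linarith, hxy⟩
  · rintro ⟨-, -, hp, hq, hxy⟩
    exact ⟨⟨by linarith, by linarith⟩, hxy⟩

theorem image_sq_lightConeSector {r : ℝ} (hr : 0 ≤ r) :
    Prod.map (· ^ 2) (· ^ 2) '' lightConeSector r = lightConeSector (r ^ 2) := by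
  ext ⟨P, Q⟩
  simp only [lightConeSector, mem_image, mem_ofPred_eq, Prod.exists, Prod.map_apply,
    Prod.mk.injEq]
  constructor
  · rintro ⟨p, q, ⟨hp, hq, hpq, hqp, hprod⟩, rfl, rfl⟩
    refine ⟨by positivity, by positivity, ?_, ?_, ?_⟩
    · simpa only [mul_pow] using pow_le_pow_left₀ (by positivity) hpq 2
    · simpa only [mul_pow] using pow_le_pow_left₀ (by positivity) hqp 2
    · simpa only [mul_pow, one_pow] using pow_le_pow_left₀ (by positivity) hprod 2
  · rintro ⟨hP, hQ, hPQ, hQP, hprod⟩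
    refine ⟨√P, √Q, ⟨sqrt_nonneg P, sqrt_nonneg Q, ?_, ?_, ?_⟩, sq_sqrt hP, sq_sqrt hQ⟩
    · simpa only [sqrt_mul (sq_nonneg r), sqrt_sq hr] using sqrt_le_sqrt hPQ
    · simpa only [sqrt_mul (sq_nonneg r), sqrt_sq hr] using sqrt_le_sqrt hQP
    · rwa [← sqrt_mul hP, sqrt_le_one]

theorem one_sub_sin_two_mul_div_one_add {α : ℝ} (hc : cos α ≠ 0)
    (hcs : cos α + sin α ≠ 0) :
    (1 - sin (2 * α)) / (1 + sin (2 * α)) = ((1 - tan α) / (1 + tan α)) ^ 2 := by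
  have hsin : 1 + sin (2 * α) = (cos α + sin α) ^ 2 := by
    rw [sin_two_mul]; linear_combination -(sin_sq_add_cos_sq α)
  have htan : 1 + tan α = (cos α + sin α) / cos α := by
    rw [tan_eq_sin_div_cos]; field_simp
  rw [div_pow, htan, div_pow, hsin, tan_eq_sin_div_cos]
  field_simp
  rw [sin_two_mul]
  linear_combination -(sin_sq_add_cos_sq α)

/-- For `0 < α < π/4`, the polynomial map `ψ₁(x,y) = (x² + y², 2xy)` maps the
hyperbolic sector `H(α) = {|y| ≤ x·tan α, x² − y² ≤ 1}` onto the hyperbolic sector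
`H'(α) = {|y| ≤ x·sin 2α, x² − y² ≤ 1}` of angle `arctan (sin 2α)`. -/
theorem hyperbolic_sector_doubling (α : ℝ) (h0 : 0 < α) (h1 : α < Real.pi / 4) :
    (fun p : ℝ × ℝ => (p.1 ^ 2 + p.2 ^ 2, 2 * p.1 * p.2)) ''
        {p : ℝ × ℝ | |p.2| ≤ p.1 * Real.tan α ∧ p.1 ^ 2 - p.2 ^ 2 ≤ 1} =
      {p : ℝ × ℝ | |p.2| ≤ p.1 * Real.sin (2 * α) ∧ p.1 ^ 2 - p.2 ^ 2 ≤ 1} := by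
  have hπ := pi_pos
  have hcos : 0 < cos α := cos_pos_of_mem_Ioo ⟨by linarith, by linarith⟩
  have hsin : 0 < sin α := sin_pos_of_pos_of_lt_pi h0 (by linarith)
  have htan₀ : 0 < tan α := tan_pos_of_pos_of_lt_pi_div_two h0 (by linarith)
  have htan₁ : tan α ≤ 1 :=
    tan_pi_div_four ▸ (tan_lt_tan_of_lt_of_lt_pi_div_two (by linarith) (by linarith) h1).le
  have hsin₂ : 0 < sin (2 * α) := sin_pos_of_pos_of_lt_pi (by linarith) (by linarith)
  change psi₁ '' hyperbolicSector (tan α) = hyperbolicSector (sin (2 * α))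
  rw [hyperbolicSector_eq_preimage_lightConeSector htan₀ htan₁,
    hyperbolicSector_eq_preimage_lightConeSector hsin₂ (sin_le_one _),
    image_psi₁_preimage_lightCone,
    image_sq_lightConeSector (div_nonneg (by linarith) (by linarith)),
    one_sub_sin_two_mul_div_one_add hcos.ne' (by linarith)]
end

section
/- Let a < b be real numbers, let ν ∈ ℕ, and let f : ℝ → ℝ be of class C^ν on the interval [a,b]. Let a < t₁ < ⋯ < t_r < b and let ε > 0. Then there exists a real polynomial g in one variable such that: (i) for every k with 0 ≤ k ≤ ν, |f^{(k)}(x) − g^{(k)}(x)| < ε for all x ∈ [a,b], where f^{(k)} denotes the k-th derivative of f taken within [a,b]; and (ii) g^{(k)}(tᵢ) = f^{(k)}(tᵢ) for every i = 1,…,r and every 0 ≤ k ≤ ν. -/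
/-!
Approximating `derivWithin f` by induction and integrating once more, with the constant fixed
at `a`, gives a polynomial `p` whose derivatives up to order `ν` are uniformly close to those
of `f` on `[a,b]`. Its mismatches at the nodes `tᵢ` are then small, and they are removed by
adding a Hermite interpolant `h` of them. Hermite evaluation is onto because a nonzero
polynomial of degree `< r(ν+1)` cannot vanish to order `ν+1` at `r` distinct points; a linear
right inverse of it is defined on a finite-dimensional space, hence continuous, so small data
give an `h` whose derivatives are uniformly small on `[a,b]`.
-/

open Polynomial Set Function

namespace Polynomial

section Semiring

variable {R ι : Type*} [Semiring R]

noncomputable def hermiteEval (ν : ℕ) (t : ι → R) : R[X] →ₗ[R] (ι × Fin (ν + 1) → R) :=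
  LinearMap.pi fun ik => leval (t ik.1) ∘ₗ (derivative ^ (ik.2 : ℕ))

@[simp]
theorem hermiteEval_apply (ν : ℕ) (t : ι → R) (p : R[X]) (ik : ι × Fin (ν + 1)) :
    hermiteEval ν t p ik = (derivative^[ik.2] p).eval (t ik.1) := by
  simp [hermiteEval, Module.End.pow_apply]

end Semiring

variable {R : Type*} [Field R] [CharZero R]

theorem exists_derivative_eq (q : R[X]) : ∃ p : R[X], derivative p = q := by
  refine ⟨q.sum fun n c => C (c / (n + 1)) * X ^ (n + 1), ?_⟩
  conv_rhs => rw [← q.sum_C_mul_X_pow_eq]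
  simp only [Polynomial.sum, map_sum, derivative_C_mul_X_pow]
  refine Finset.sum_congr rfl fun n _ => ?_
  push_cast
  field_simp

variable {ι : Type*} [Fintype ι] {ν : ℕ} {t : ι → R}

theorem prod_pow_dvd_of_iterate_derivative_eval_eq_zero (ht : Injective t) {p : R[X]}
    (hp : ∀ i, ∀ k ≤ ν, (derivative^[k] p).eval (t i) = 0) :
    ∏ i, (X - C (t i)) ^ (ν + 1) ∣ p := by
  rcases eq_or_ne p 0 with rfl | hp0
  · exact dvd_zero _
  refine Finset.prod_dvd_of_coprime (fun i _ j _ hij => (pairwise_coprime_X_sub_C ht hij).pow)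
    fun i _ => ?_
  have hmult : ν < p.rootMultiplicity (t i) :=
    (lt_rootMultiplicity_iff_isRoot_iterate_derivative hp0).2 (hp i)
  exact (pow_dvd_pow _ hmult).trans (p.pow_rootMultiplicity_dvd (t i))

theorem eq_zero_of_iterate_derivative_eval_eq_zero (ht : Injective t) {p : R[X]}
    (hdeg : p.degree < ↑(Fintype.card ι * (ν + 1)))
    (hp : ∀ i, ∀ k ≤ ν, (derivative^[k] p).eval (t i) = 0) : p = 0 := by
  refine eq_zero_of_dvd_of_degree_lt (prod_pow_dvd_of_iterate_derivative_eval_eq_zero ht hp) ?_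
  simp only [degree_prod, degree_pow, degree_X_sub_C, Finset.sum_const, Finset.card_univ,
    nsmul_eq_mul]
  simpa [mul_comm] using hdeg

theorem hermiteEval_surjective (ht : Injective t) : Surjective (hermiteEval ν t) := by
  set n := Fintype.card ι * (ν + 1)
  let e := (hermiteEval ν t).domRestrict (degreeLT R n)
  have he : Injective e := by
    rw [← LinearMap.ker_eq_bot, LinearMap.ker_eq_bot']
    rintro ⟨p, hp⟩ h0
    ext1
    refine eq_zero_of_iterate_derivative_eval_eq_zero ht (mem_degreeLT.1 hp) fun i k hk => ?_
    simpa [e] using congrFun h0 (i, ⟨k, Nat.lt_succ_of_le hk⟩)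
  have : FiniteDimensional R (degreeLT R n) := .equiv (degreeLTEquiv R n).symm
  have hrank : Module.finrank R (degreeLT R n) = Module.finrank R (ι × Fin (ν + 1) → R) := by
    simp [(degreeLTEquiv R n).finrank_eq, n]
  exact Surjective.of_comp (g := (degreeLT R n).subtype)
    ((LinearMap.injective_iff_surjective_of_finrank_eq_finrank hrank).1 he)

end Polynomial

theorem exists_small_preimage_hermiteEval {ι : Type*} [Fintype ι] {ν : ℕ} {t : ι → ℝ}
    (ht : Injective t) {K : Set ℝ} (hK : IsCompact K) {ε : ℝ} (hε : 0 < ε) :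
    ∃ δ > 0, ∀ d : ι × Fin (ν + 1) → ℝ, ‖d‖ < δ → ∃ h : ℝ[X], hermiteEval ν t h = d ∧
      ∀ k ≤ ν, ∀ x ∈ K, |(derivative^[k] h).eval x| < ε := by
  -- A linear right inverse of `hermiteEval` has finite-dimensional domain, hence is continuous.
  have : CompactSpace K := isCompact_iff_compactSpace.1 hK
  obtain ⟨H, hH⟩ := (hermiteEval ν t).exists_rightInverse_of_surjective
    (LinearMap.range_eq_top.2 (hermiteEval_surjective ht))
  let T : (ι × Fin (ν + 1) → ℝ) →ₗ[ℝ] Fin (ν + 1) → C(K, ℝ) :=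
    LinearMap.pi fun k =>
      (toContinuousMapOnAlgHom K).toLinearMap ∘ₗ (derivative ^ (k : ℕ)) ∘ₗ H
  obtain ⟨δ, hδ, hT⟩ := Metric.continuousAt_iff.1
    ((LinearMap.continuous_of_finiteDimensional T).continuousAt (x := 0)) ε hε
  refine ⟨δ, hδ, fun d hd => ⟨H d, LinearMap.congr_fun hH d, fun k hk x hx => ?_⟩⟩
  have hTd : ‖T d‖ < ε := by simpa using hT (by simpa using hd)
  calc |(derivative^[k] (H d)).eval x| = ‖T d ⟨k, Nat.lt_succ_of_le hk⟩ ⟨x, hx⟩‖ := by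
        simp [T, Module.End.pow_apply]
    _ ≤ ‖T d ⟨k, Nat.lt_succ_of_le hk⟩‖ := ContinuousMap.norm_coe_le_norm _ _
    _ ≤ ‖T d‖ := norm_le_pi_norm (T d) _
    _ < ε := hTd

theorem abs_sub_eval_le_of_abs_derivWithin_sub_le {f : ℝ → ℝ} {p : ℝ[X]} {a b C : ℝ}
    (hf : DifferentiableOn ℝ f (Icc a b)) (ha : p.eval a = f a)
    (hC : ∀ x ∈ Icc a b, |derivWithin f (Icc a b) x - (derivative p).eval x| ≤ C) :
    ∀ x ∈ Icc a b, |f x - p.eval x| ≤ C * (x - a) := by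
  have hderiv : ∀ x ∈ Icc a b, HasDerivWithinAt (fun y => f y - p.eval y)
      (derivWithin f (Icc a b) x - (derivative p).eval x) (Icc a b) x := fun x hx =>
    (hf x hx).hasDerivWithinAt.sub (p.hasDerivAt x).hasDerivWithinAt
  simpa [ha] using norm_image_sub_le_of_norm_deriv_le_segment' hderiv
    fun x hx => hC x (Ico_subset_Icc_self hx)

theorem exists_polynomial_near_iteratedDerivWithin {a b : ℝ} (hab : a < b) {ν : ℕ} {f : ℝ → ℝ}
    (hf : ContDiffOn ℝ ν f (Icc a b)) {ε : ℝ} (hε : 0 < ε) :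
    ∃ p : ℝ[X], ∀ k ≤ ν, ∀ x ∈ Icc a b,
      |iteratedDerivWithin k f (Icc a b) x - (derivative^[k] p).eval x| < ε := by
  induction ν generalizing f ε with
  | zero =>
    obtain ⟨p, hp⟩ :=
      exists_polynomial_near_of_continuousOn a b f (by simpa using hf.continuousOn) ε hε
    refine ⟨p, fun k hk x hx => ?_⟩
    obtain rfl : k = 0 := Nat.le_zero.1 hk
    simpa [abs_sub_comm] using hp x hx
  | succ ν ih =>
    set ε' := ε / (1 + (b - a))
    have hba : 0 < 1 + (b - a) := by linarith
    have hε' : 0 < ε' := div_pos hε hba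
    have hf' : ContDiffOn ℝ ν (derivWithin f (Icc a b)) (Icc a b) :=
      hf.derivWithin (uniqueDiffOn_Icc hab) (by norm_cast)
    obtain ⟨q, hq⟩ := ih hf' hε'
    obtain ⟨P, hP⟩ := exists_derivative_eq q
    set p := P + C (f a - P.eval a)
    have hp : derivative p = q := by simp [p, hP]
    refine ⟨p, fun k hk x hx => ?_⟩
    cases k with
    | zero =>
      have hpf : |f x - p.eval x| ≤ ε' * (x - a) :=
        abs_sub_eval_le_of_abs_derivWithin_sub_le (hf.differentiableOn (by simp)) (by simp [p])
          (fun y hy => by simpa [hp] using (hq 0 ν.zero_le y hy).le) x hx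
      calc |iteratedDerivWithin 0 f (Icc a b) x - (derivative^[0] p).eval x|
          = |f x - p.eval x| := by simp
        _ ≤ ε' * (b - a) := hpf.trans (by gcongr; exact hx.2)
        _ < ε' * (1 + (b - a)) := by gcongr; linarith
        _ = ε := div_mul_cancel₀ ε hba.ne'
    | succ k =>
      rw [iteratedDerivWithin_succ', iterate_succ_apply, hp]
      exact (hq k (by omega) x hx).trans_le (div_le_self hε.le (by linarith))

/-- Simultaneous polynomial approximation and Hermite interpolation: if `f` is `Cᵛ` on
`[a,b]`, `a < t₁ < ⋯ < t_r < b` and `ε > 0`, there is a real polynomial `g` whose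
derivatives up to order `ν` are uniformly `ε`-close to those of `f` on `[a,b]` and agree
with those of `f` at each `tᵢ`. -/
theorem poly_approx_with_interpolation (a b : ℝ) (hab : a < b) (ν : ℕ)
    (f : ℝ → ℝ) (hf : ContDiffOn ℝ ν f (Set.Icc a b))
    (r : ℕ) (t : Fin r → ℝ) (ht : StrictMono t) (htmem : ∀ i, t i ∈ Set.Ioo a b)
    (ε : ℝ) (hε : 0 < ε) :
    ∃ g : Polynomial ℝ,
      (∀ k ≤ ν, ∀ x ∈ Set.Icc a b,
        |iteratedDerivWithin k f (Set.Icc a b) x - (Polynomial.derivative^[k] g).eval x| < ε) ∧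
      (∀ i : Fin r, ∀ k ≤ ν,
        (Polynomial.derivative^[k] g).eval (t i) =
          iteratedDerivWithin k f (Set.Icc a b) (t i)) := by
  obtain ⟨δ, hδ, hcorr⟩ :=
    exists_small_preimage_hermiteEval (ν := ν) ht.injective isCompact_Icc (half_pos hε)
  obtain ⟨p, hp⟩ :=
    exists_polynomial_near_iteratedDerivWithin hab hf (lt_min hδ (half_pos hε))
  let d : Fin r × Fin (ν + 1) → ℝ := fun ik =>
    iteratedDerivWithin ik.2 f (Icc a b) (t ik.1) - (derivative^[ik.2] p).eval (t ik.1)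
  have hd : ‖d‖ < δ := (pi_norm_lt_iff hδ).2 fun ik =>
    ((hp ik.2 (Nat.le_of_lt_succ ik.2.2) _ (Ioo_subset_Icc_self (htmem ik.1))).trans_le
      (min_le_left _ _))
  obtain ⟨h, hh, hsmall⟩ := hcorr d hd
  refine ⟨p + h, fun k hk x hx => ?_, fun i k hk => ?_⟩
  · rw [iterate_map_add, eval_add, ← sub_sub]
    calc _ ≤ |iteratedDerivWithin k f (Icc a b) x - (derivative^[k] p).eval x|
          + |(derivative^[k] h).eval x| := abs_sub _ _
      _ < ε / 2 + ε / 2 :=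
        add_lt_add ((hp k hk x hx).trans_le (min_le_right _ _)) (hsmall k hk x hx)
      _ = ε := add_halves ε
  · have := congrFun hh (i, ⟨k, Nat.lt_succ_of_le hk⟩)
    simp only [hermiteEval_apply, d] at this
    rw [iterate_map_add, eval_add, this]
    ring
end

section
/- Let U ⊆ ℝ^n be a connected open set and let x, y ∈ U. Then there exists a polynomial map α : ℝ → ℝ^n (each component a univariate real polynomial) such that α(0) = x, α(1) = y and α([0,1]) ⊆ U. -/
/-!
An open connected subset of `ℝⁿ` is path connected, so `x` and `y` are joined by a continuous
path `γ` in `U`. Correcting a path `g` by the affine function `t ↦ (1 - t) (x - g 0) + t (y - g 1)`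
pins its endpoints to `x` and `y`, leaves `γ` unchanged and depends continuously on `g`; since
`[0, 1]` is compact, the coordinate tuples whose corrected path stays in `U` form an open set
containing `γ`. By the Weierstrass approximation theorem it contains a tuple of polynomials,
and correcting a polynomial path yields a polynomial path.
-/

open Polynomial Set Function
open scoped unitInterval

theorem isOpen_setOf_forall_mem_of_continuous_uncurry {Y K Z : Type*} [TopologicalSpace Y]
    [TopologicalSpace K] [CompactSpace K] [TopologicalSpace Z] {F : Y → K → Z}
    (hF : Continuous (uncurry F)) {U : Set Z} (hU : IsOpen U) :
    IsOpen {y | ∀ k, F y k ∈ U} := by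
  let Φ : Y → C(K, Z) := fun y => ⟨F y, hF.comp (Continuous.prodMk_right y)⟩
  have h := (ContinuousMap.isOpen_setOfPred_range_subset hU).preimage
    (ContinuousMap.continuous_of_continuous_uncurry Φ hF)
  simp only [preimage_ofPred_eq, range_subset_iff] at h
  exact h

theorem denseRange_toContinuousMapOn_Icc (a b : ℝ) :
    DenseRange fun p : ℝ[X] => p.toContinuousMapOn (Icc a b) := by
  have h := congrArg SetLike.coe (polynomialFunctions_closure_eq_top a b)
  rwa [Subalgebra.topologicalClosure_coe, polynomialFunctions_coe, Algebra.coe_top,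
    ← dense_iff_closure_eq] at h

noncomputable def correctEndpoints (a b : ℝ) (p : ℝ[X]) : ℝ[X] :=
  p + C (a - p.eval 0) * (1 - X) + C (b - p.eval 1) * X

theorem eval_correctEndpoints (a b t : ℝ) (p : ℝ[X]) :
    (correctEndpoints a b p).eval t = p.eval t + (1 - t) * (a - p.eval 0) + t * (b - p.eval 1) := by
  simp only [correctEndpoints, eval_add, eval_mul, eval_sub, eval_C, eval_one, eval_X]
  ring

theorem JoinedIn.exists_polynomial_path {ι : Type*} {U : Set (ι → ℝ)} (hU : IsOpen U)
    {x y : ι → ℝ} (h : JoinedIn U x y) :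
    ∃ p : ι → ℝ[X], (∀ i, (p i).eval 0 = x i) ∧ (∀ i, (p i).eval 1 = y i) ∧
      ∀ t ∈ Icc (0 : ℝ) 1, (fun i => (p i).eval t) ∈ U := by
  obtain ⟨γ, hγU⟩ := h
  let corrected (g : ι → C(I, ℝ)) (t : I) : ι → ℝ := fun i =>
    g i t + (1 - t) * (x i - g i 0) + t * (y i - g i 1)
  have hopen : IsOpen {g | ∀ t, corrected g t ∈ U} :=
    isOpen_setOf_forall_mem_of_continuous_uncurry (by fun_prop) hU
  let γi : ι → C(I, ℝ) := fun i => ⟨fun t => γ t i, by fun_prop⟩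
  have hγ : γi ∈ {g | ∀ t, corrected g t ∈ U} := fun t => by
    simpa [corrected, γi] using hγU t
  obtain ⟨p, hp⟩ := (DenseRange.piMap fun _ => denseRange_toContinuousMapOn_Icc 0 1).exists_mem_open
    hopen ⟨γi, hγ⟩
  refine ⟨fun i => correctEndpoints (x i) (y i) (p i), fun i => by simp [eval_correctEndpoints],
    fun i => by simp [eval_correctEndpoints], fun t ht => ?_⟩
  simpa [corrected, eval_correctEndpoints] using hp ⟨t, ht⟩

/-- Connexion by polynomial paths: any two points of a connected open subset `U ⊆ ℝⁿ`
can be joined by a polynomial path `α : ℝ → ℝⁿ` with `α([0,1]) ⊆ U`. -/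
theorem connected_open_polynomial_path (n : ℕ)
    (U : Set (EuclideanSpace ℝ (Fin n))) (hopen : IsOpen U) (hconn : IsConnected U)
    (x y : EuclideanSpace ℝ (Fin n)) (hx : x ∈ U) (hy : y ∈ U) :
    ∃ α : ℝ → EuclideanSpace ℝ (Fin n),
      (∃ p : Fin n → Polynomial ℝ, ∀ t i, α t i = (p i).eval t) ∧
      α 0 = x ∧ α 1 = y ∧ α '' Set.Icc (0 : ℝ) 1 ⊆ U := by
  let e := (EuclideanSpace.equiv (Fin n) ℝ).toHomeomorph
  have hxy : JoinedIn (e '' U) (e x) (e y) :=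
    ((hopen.isConnected_iff_isPathConnected.mp hconn).joinedIn x hx y hy).map e.continuous
  obtain ⟨p, hp0, hp1, hpU⟩ := hxy.exists_polynomial_path (e.isOpenMap U hopen)
  refine ⟨fun t => e.symm fun i => (p i).eval t, ⟨p, fun t i => rfl⟩, ?_, ?_, ?_⟩
  · ext i
    exact hp0 i
  · ext i
    exact hp1 i
  · rintro _ ⟨t, ht, rfl⟩
    simpa only [e.image_eq_preimage_symm, mem_preimage] using hpU t ht
end
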